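/- arXiv:2302.06334 — 8 statements merged into one kernel-verified Lean document; each statement's English description precedes it below -/
import Mathlib

section
/- Let x : ]α,0] → ℝ²\{0} be a solution of ẍ + D(x)ẋ = -x/|x|³, with D continuous, 0 ≤ D ≤ D*. Then for every t ∈ ]α,0], |p(t)ẋ(t) - ẋ(0)| ≤ |t| / (min_{t ≤ s ≤ 0} |x(s)|)², where p(t) = exp(-∫_t^0 D(x(s)) ds). -/
open Set

/-- Solutions of the damped planar Kepler equation `ẍ + D(x)ẋ = -x/|x|³` on the
set `S` of times, identifying `ℝ²` with `ℂ`. -/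
def KeplerSolOn (D : ℂ → ℝ) (S : Set ℝ) (x x' : ℝ → ℂ) : Prop :=
  (∀ t ∈ S, x t ≠ 0) ∧
  (∀ t ∈ S, HasDerivWithinAt x (x' t) S t) ∧
  (∀ t ∈ S, HasDerivWithinAt x' (-(D (x t)) • x' t - (‖x t‖ ^ 3)⁻¹ • x t) S t)

/-- `|p(t)ẋ(t) - ẋ(0)| ≤ |t| / (min_{t ≤ s ≤ 0} |x(s)|)²`. -/
theorem stmt2 (α : ℝ) (hα : α < 0) (Dstar : ℝ)
    (D : ℂ → ℝ) (hDc : ContinuousOn D {z : ℂ | z ≠ 0})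
    (hD0 : ∀ z : ℂ, z ≠ 0 → 0 ≤ D z) (hDb : ∀ z : ℂ, z ≠ 0 → D z ≤ Dstar)
    (x x' : ℝ → ℂ) (hsol : KeplerSolOn D (Ioc α 0) x x') :
    ∀ t ∈ Ioc α 0,
      ‖Real.exp (-∫ s in t..(0 : ℝ), D (x s)) • x' t - x' 0‖ ≤
        |t| / (sInf ((fun s => ‖x s‖) '' Icc t 0)) ^ 2 := by
  obtain ⟨hxne, hx, hx'⟩ := hsol
  intro t ht
  obtain ⟨htα, ht0⟩ := ht
  have h0 : (0 : ℝ) ∈ Ioc α 0 := ⟨hα, le_refl 0⟩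
  have hI : Icc t 0 ⊆ Ioc α 0 := fun s hs => ⟨lt_of_lt_of_le htα hs.1, hs.2⟩
  -- continuity facts
  have hxc : ContinuousOn x (Ioc α 0) := fun s hs => (hx s hs).continuousWithinAt
  have hx'c : ContinuousOn x' (Ioc α 0) := fun s hs => (hx' s hs).continuousWithinAt
  have hfc : ContinuousOn (fun s => D (x s)) (Ioc α 0) :=
    hDc.comp hxc fun s hs => hxne s hs
  -- interior points have genuine derivatives
  have hmem : ∀ s ∈ Ioo t 0, Ioc α 0 ∈ nhds s := by
    intro s hs
    exact Filter.mem_of_superset (isOpen_Ioo.mem_nhds ⟨lt_trans htα hs.1, hs.2⟩)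
      (fun u hu => ⟨hu.1, le_of_lt hu.2⟩)
  have hcontAt : ∀ s ∈ Ioo t 0, ContinuousAt (fun s => D (x s)) s := by
    intro s hs
    exact (hfc.mono (fun u (hu : u ∈ Ioo α 0) => ⟨hu.1, le_of_lt hu.2⟩)).continuousAt
      (isOpen_Ioo.mem_nhds ⟨lt_trans htα hs.1, hs.2⟩)
  -- the primitive F
  set f : ℝ → ℝ := fun s => D (x s) with hf
  have hfInt : IntervalIntegrable f MeasureTheory.volume t 0 :=
    (hfc.mono hI).intervalIntegrable_of_Icc ht0
  set F : ℝ → ℝ := fun u => ∫ s in (0:ℝ)..u, f s with hF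
  have hFc : ContinuousOn F (Icc t 0) := by
    have := intervalIntegral.continuousOn_primitive_interval' hfInt
      (by rw [Set.uIcc_of_le ht0]; exact ⟨ht0, le_refl 0⟩)
    rwa [Set.uIcc_of_le ht0] at this
  have hFderiv : ∀ s ∈ Ioo t 0, HasDerivAt F (f s) s := by
    intro s hs
    have hsI : s ∈ Ioc α 0 := hI ⟨le_of_lt hs.1, le_of_lt hs.2⟩
    have hint : IntervalIntegrable f MeasureTheory.volume 0 s := by
      apply (hfc.mono ?_).intervalIntegrable
      rw [Set.uIcc_of_ge (le_of_lt hs.2)]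
      exact fun u hu => ⟨lt_of_lt_of_le (lt_trans htα hs.1) hu.1, hu.2⟩
    exact intervalIntegral.integral_hasDerivAt_right hint
      (ContinuousOn.stronglyMeasurableAtFilter isOpen_Ioo
        (hfc.mono (fun u (hu : u ∈ Ioo α 0) => ⟨hu.1, le_of_lt hu.2⟩)) s
        ⟨lt_trans htα hs.1, hs.2⟩) (hcontAt s hs)
  -- the function g
  set g : ℝ → ℂ := fun s => Real.exp (F s) • x' s with hg
  have hgc : ContinuousOn g (Icc t 0) :=
    ((Real.continuous_exp.comp_continuousOn hFc).smul (hx'c.mono hI))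
  set g' : ℝ → ℂ := fun s => -(Real.exp (F s) * (‖x s‖ ^ 3)⁻¹) • x s with hg'
  have hgderiv : ∀ s ∈ Ioo t 0, HasDerivAt g (g' s) s := by
    intro s hs
    have hsI : s ∈ Ioc α 0 := hI ⟨le_of_lt hs.1, le_of_lt hs.2⟩
    have hxd : HasDerivAt x' (-(D (x s)) • x' s - (‖x s‖ ^ 3)⁻¹ • x s) s :=
      (hx' s hsI).hasDerivAt (hmem s hs)
    have hed : HasDerivAt (fun u => Real.exp (F u)) (Real.exp (F s) * f s) s :=
      (hFderiv s hs).exp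
    have := hed.smul hxd
    convert this using 1
    · rfl
    · rfl
    simp only [hg', hf, smul_sub, smul_smul, neg_smul, smul_neg]
    module
  have hg'c : ContinuousOn g' (Icc t 0) := by
    rw [hg']
    apply ContinuousOn.fun_smul _ (hxc.mono hI)
    apply ContinuousOn.neg
    apply (Real.continuous_exp.comp_continuousOn hFc).mul
    apply ContinuousOn.inv₀
    · exact ((hxc.mono hI).norm.pow 3)
    · intro s hs
      exact pow_ne_zero 3 (norm_ne_zero_iff.mpr (hxne s (hI hs)))
  have hg'int : IntervalIntegrable g' MeasureTheory.volume t 0 :=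
    hg'c.intervalIntegrable_of_Icc ht0
  have hFTC : ∫ s in t..0, g' s = g 0 - g t :=
    intervalIntegral.integral_eq_sub_of_hasDeriv_right_of_le ht0 hgc
      (fun s hs => (hgderiv s hs).hasDerivWithinAt) hg'int
  -- identify g t and g 0
  have hg0 : g 0 = x' 0 := by
    simp [hg, hF, intervalIntegral.integral_same]
  have hgt : g t = Real.exp (-∫ s in t..(0:ℝ), D (x s)) • x' t := by
    simp only [hg, hF, hf]
    rw [intervalIntegral.integral_symm]
  -- the minimum m
  set m : ℝ := sInf ((fun s => ‖x s‖) '' Icc t 0) with hm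
  have hne : (Icc t 0).Nonempty := ⟨0, ⟨ht0, le_refl 0⟩⟩
  have hcompact : IsCompact ((fun s => ‖x s‖) '' Icc t 0) :=
    isCompact_Icc.image_of_continuousOn (hxc.mono hI).norm
  have hmmem : m ∈ (fun s => ‖x s‖) '' Icc t 0 :=
    hcompact.sInf_mem (hne.image _)
  have hmpos : 0 < m := by
    obtain ⟨s, hs, hseq⟩ := hmmem
    rw [← hseq]
    exact norm_pos_iff.mpr (hxne s (hI hs))
  have hmle : ∀ s ∈ Icc t 0, m ≤ ‖x s‖ := by
    intro s hs
    exact csInf_le hcompact.bddBelow ⟨s, hs, rfl⟩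
  -- the pointwise bound on g'
  have hbound : ∀ s ∈ Set.uIoc t 0, ‖g' s‖ ≤ (m ^ 2)⁻¹ := by
    intro s hs
    rw [Set.uIoc_of_le ht0] at hs
    have hsI : s ∈ Icc t 0 := ⟨le_of_lt hs.1, hs.2⟩
    have hxs : 0 < ‖x s‖ := norm_pos_iff.mpr (hxne s (hI hsI))
    have hFle : F s ≤ 0 := by
      have : (0:ℝ) ≤ ∫ u in s..0, f u := by
        apply intervalIntegral.integral_nonneg hs.2
        intro u hu
        exact hD0 _ (hxne u (hI ⟨le_trans hsI.1 hu.1, hu.2⟩))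
      rw [hF]
      simp only [intervalIntegral.integral_symm s 0]
      linarith
    have hexp : Real.exp (F s) ≤ 1 := Real.exp_le_one_iff.mpr hFle
    have h1 : ‖g' s‖ = Real.exp (F s) * (‖x s‖ ^ 2)⁻¹ := by
      rw [hg', norm_smul]
      rw [Real.norm_eq_abs, abs_neg, abs_of_nonneg (by positivity)]
      rw [mul_assoc, mul_comm ((‖x s‖ ^ 3)⁻¹)]
      congr 1
      have hne' : ‖x s‖ ≠ 0 := ne_of_gt hxs
      rw [show (‖x s‖ : ℝ) ^ 3 = ‖x s‖ * ‖x s‖ ^ 2 by ring, mul_inv, ← mul_assoc,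
        mul_inv_cancel₀ hne', one_mul]
    rw [h1]
    have h2 : (‖x s‖ ^ 2)⁻¹ ≤ (m ^ 2)⁻¹ := by
      apply inv_anti₀ (by positivity)
      exact pow_le_pow_left₀ (le_of_lt hmpos) (hmle s hsI) 2
    calc Real.exp (F s) * (‖x s‖ ^ 2)⁻¹ ≤ 1 * (‖x s‖ ^ 2)⁻¹ := by
          apply mul_le_mul_of_nonneg_right hexp (by positivity)
      _ = (‖x s‖ ^ 2)⁻¹ := one_mul _
      _ ≤ (m ^ 2)⁻¹ := h2
  -- put everything together
  have key : ‖Real.exp (-∫ s in t..(0:ℝ), D (x s)) • x' t - x' 0‖ = ‖∫ s in t..0, g' s‖ := by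
    rw [hFTC, hg0, ← hgt, ← norm_neg]
    congr 1
    abel
  rw [key]
  calc ‖∫ s in t..0, g' s‖ ≤ (m ^ 2)⁻¹ * |0 - t| :=
        intervalIntegral.norm_integral_le_of_norm_le_const hbound
    _ = |t| / m ^ 2 := by rw [zero_sub, abs_neg, div_eq_mul_inv, mul_comm]
end

section
/- Let D : ℝ²\{0} → ℝ be continuously differentiable, nonnegative and bounded, and let x : ]α,0] → ℝ²\{0} be a solution of ẍ + D(x)ẋ = -x/|x|³ that is maximal in the past. If α > -∞ then liminf_{t→α⁺} |x(t)| = 0. -/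
open Set Filter

lemma gronwallBound_nonneg' {δ K ε x : ℝ} (hδ : 0 ≤ δ) (hK : 0 ≤ K) (hε : 0 ≤ ε)
    (hx : 0 ≤ x) : 0 ≤ gronwallBound δ K ε x := by
  rcases eq_or_ne K 0 with h | h
  · rw [h, gronwallBound_K0]; positivity
  · rw [gronwallBound_of_K_ne_0 h]
    have hK' : 0 < K := hK.lt_of_ne (Ne.symm h)
    have h1 : 1 ≤ Real.exp (K * x) := Real.one_le_exp (by positivity)
    have h2 : 0 ≤ ε / K * (Real.exp (K * x) - 1) :=
      mul_nonneg (div_nonneg hε hK) (by linarith)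
    have h3 : 0 ≤ δ * Real.exp (K * x) := mul_nonneg hδ (Real.exp_pos _).le
    linarith

lemma gronwallBound_mono' {δ K ε : ℝ} (hδ : 0 ≤ δ) (hK : 0 ≤ K) (hε : 0 ≤ ε) :
    MonotoneOn (gronwallBound δ K ε) (Ici 0) := by
  apply monotoneOn_of_deriv_nonneg (convex_Ici 0)
  · exact fun x _ => (hasDerivAt_gronwallBound δ K ε x).continuousAt.continuousWithinAt
  · exact fun x _ => (hasDerivAt_gronwallBound δ K ε x).differentiableAt.differentiableWithinAt
  · intro x hx
    rw [interior_Ici] at hx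
    rw [(hasDerivAt_gronwallBound δ K ε x).deriv]
    exact add_nonneg (mul_nonneg hK (gronwallBound_nonneg' hδ hK hε hx.le)) hε

lemma norm_sub_le_of_deriv_bound' {E : Type*} [NormedAddCommGroup E] [NormedSpace ℝ E]
    {g g' : ℝ → E} {a b C : ℝ}
    (hg : ∀ t ∈ Ioc a b, HasDerivAt g (g' t) t) (hC : ∀ t ∈ Ioc a b, ‖g' t‖ ≤ C) :
    ∀ s ∈ Ioc a b, ∀ t ∈ Ioc a b, ‖g s - g t‖ ≤ C * |s - t| := by
  have key : ∀ s ∈ Ioc a b, ∀ t ∈ Ioc a b, t ≤ s → ‖g s - g t‖ ≤ C * (s - t) := by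
    intro s hs t ht hts
    exact norm_image_sub_le_of_norm_deriv_le_segment'
      (fun u hu => (hg u ⟨lt_of_lt_of_le ht.1 hu.1, hu.2.trans hs.2⟩).hasDerivWithinAt)
      (fun u hu => hC u ⟨lt_of_lt_of_le ht.1 hu.1, hu.2.le.trans hs.2⟩)
      s (right_mem_Icc.2 hts)
  intro s hs t ht
  rcases le_total t s with h | h
  · rw [abs_of_nonneg (by linarith)]; exact key s hs t ht h
  · rw [abs_of_nonpos (by linarith), norm_sub_rev]
    have := key t ht s hs h
    linarith [this]

lemma exists_tendsto_right' {E : Type*} [NormedAddCommGroup E] [NormedSpace ℝ E]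
    [CompleteSpace E] {g : ℝ → E} {a b C : ℝ} (hab : a < b) (hC : 0 ≤ C)
    (h : ∀ s ∈ Ioc a b, ∀ t ∈ Ioc a b, ‖g s - g t‖ ≤ C * |s - t|) :
    ∃ p, Tendsto g (nhdsWithin a (Ioi a)) (nhds p) := by
  have hne : (nhdsWithin a (Ioi a)).NeBot := nhdsGT_neBot a
  have hcauchy : Cauchy (map g (nhdsWithin a (Ioi a))) := by
    rw [Metric.cauchy_iff]
    refine ⟨map_neBot, fun ε hε => ?_⟩
    have hC1 : (0:ℝ) < C + 1 := by linarith
    set c := min b (a + ε / (C + 1)) with hc_def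
    have hc : a < c := lt_min hab (by have := div_pos hε hC1; linarith)
    refine ⟨g '' Ioc a c, image_mem_map (Ioc_mem_nhdsGT_of_mem ⟨le_refl a, hc⟩), ?_⟩
    rintro _ ⟨s, hs, rfl⟩ _ ⟨t, ht, rfl⟩
    have hs' : s ∈ Ioc a b := ⟨hs.1, hs.2.trans (min_le_left _ _)⟩
    have ht' : t ∈ Ioc a b := ⟨ht.1, ht.2.trans (min_le_left _ _)⟩
    have h1 := h s hs' t ht'
    have h2 : |s - t| ≤ ε / (C + 1) := by
      have hsc : s ≤ c := hs.2
      have htc : t ≤ c := ht.2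
      have hcu : c ≤ a + ε / (C + 1) := min_le_right _ _
      rw [abs_sub_le_iff]
      constructor <;> nlinarith [hs.1, ht.1]
    rw [dist_eq_norm]
    calc ‖g s - g t‖ ≤ C * |s - t| := h1
      _ ≤ C * (ε / (C + 1)) := by
          exact mul_le_mul_of_nonneg_left h2 hC
      _ < ε := by
          rw [mul_div_assoc']
          rw [div_lt_iff₀ hC1]
          nlinarith
  obtain ⟨p, hp⟩ := CompleteSpace.complete hcauchy
  exact ⟨p, hp⟩

lemma hasDerivWithinAt_Ici_of_tendsto' {E : Type*} [NormedAddCommGroup E] [NormedSpace ℝ E]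
    {g g' : ℝ → E} {a b : ℝ} {L : E} (hab : a < b)
    (hg : ∀ t ∈ Ioc a b, HasDerivAt g (g' t) t)
    (hcont : ContinuousWithinAt g (Ioi a) a)
    (hL : Tendsto g' (nhdsWithin a (Ioi a)) (nhds L)) :
    HasDerivWithinAt g L (Ici a) a := by
  rw [hasDerivWithinAt_iff_tendsto_slope, Ici_sdiff_left]
  rw [Metric.tendsto_nhdsWithin_nhds]
  intro ε hε
  have hε2 : 0 < ε / 2 := by linarith
  rw [Metric.tendsto_nhdsWithin_nhds] at hL
  obtain ⟨δ₁, hδ₁, hδ₁'⟩ := hL (ε/2) hε2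
  refine ⟨min δ₁ (b - a), lt_min hδ₁ (by linarith), fun t ht htd => ?_⟩
  have hta : a < t := ht
  have htb : t ≤ b := by
    have : dist t a < b - a := lt_of_lt_of_le htd (min_le_right _ _)
    rw [Real.dist_eq, abs_of_pos (by linarith)] at this
    linarith
  have htd1 : t - a < δ₁ := by
    have : dist t a < δ₁ := lt_of_lt_of_le htd (min_le_left _ _)
    rwa [Real.dist_eq, abs_of_pos (by linarith)] at this
  -- key estimate
  have key : ‖g t - g a - (t - a) • L‖ ≤ ε/2 * (t - a) := by
    have h1 : Tendsto (fun s => ‖g t - g s - (t - s) • L‖) (nhdsWithin a (Ioi a))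
        (nhds ‖g t - g a - (t - a) • L‖) := by
      apply Tendsto.norm
      apply Tendsto.sub
      · exact tendsto_const_nhds.sub hcont
      · exact (((continuous_const.sub continuous_id).smul
          continuous_const).tendsto a).mono_left nhdsWithin_le_nhds
    have h2 : Tendsto (fun s => ε/2 * (t - s)) (nhdsWithin a (Ioi a))
        (nhds (ε/2 * (t - a))) :=
      ((continuous_const.mul (continuous_const.sub continuous_id)).tendsto a).mono_left
        nhdsWithin_le_nhds
    have : (nhdsWithin a (Ioi a)).NeBot := nhdsGT_neBot a
    refine le_of_tendsto_of_tendsto h1 h2 ?_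
    filter_upwards [Ioo_mem_nhdsGT_of_mem (Set.mem_Ico.2 ⟨le_refl a, hta⟩)] with s hs
    -- s ∈ Ioo a t
    have hder : ∀ u ∈ Icc s t, HasDerivWithinAt (fun u => g u - u • L) (g' u - L) (Icc s t) u := by
      intro u hu
      have hu' : u ∈ Ioc a b := ⟨lt_of_lt_of_le hs.1 hu.1, hu.2.trans htb⟩
      have h3 : HasDerivAt (fun y : ℝ => y • L) ((1:ℝ) • L) u := (hasDerivAt_id u).smul_const L
      rw [one_smul] at h3
      exact ((hg u hu').sub h3).hasDerivWithinAt
    have hbnd : ∀ u ∈ Ico s t, ‖g' u - L‖ ≤ ε/2 := by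
      intro u hu
      have hua : u ∈ Ioi a := lt_of_lt_of_le hs.1 hu.1
      have : dist u a < δ₁ := by
        rw [Real.dist_eq, abs_of_pos (by simp at hua ⊢; linarith [hs.1, hu.1])]
        have : u < t := hu.2
        linarith
      have := hδ₁' hua this
      rw [dist_eq_norm] at this
      linarith
    have := norm_image_sub_le_of_norm_deriv_le_segment' hder hbnd t (right_mem_Icc.2 hs.2.le)
    have heq : g t - t • L - (g s - s • L) = g t - g s - (t - s) • L := by
      rw [sub_smul]; abel
    rw [heq] at this
    linarith [this]
  -- conclude
  rw [slope_def_module, dist_eq_norm]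
  have hta' : t - a ≠ 0 := by linarith
  have h4 : (t - a)⁻¹ • ((t - a) • L) = L := by
    rw [smul_smul, inv_mul_cancel₀ hta', one_smul]
  have : (t - a)⁻¹ • (g t - g a) - L = (t - a)⁻¹ • (g t - g a - (t - a) • L) := by
    rw [smul_sub, smul_sub, h4, smul_sub]
  rw [this, norm_smul, norm_inv, Real.norm_eq_abs, abs_of_pos (by linarith)]
  calc (t - a)⁻¹ * ‖g t - g a - (t - a) • L‖ ≤ (t - a)⁻¹ * (ε/2 * (t - a)) := by
        exact mul_le_mul_of_nonneg_left key (inv_nonneg.2 (by linarith))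
    _ = ε / 2 := by field_simp
    _ < ε := by linarith

/-- If a solution, maximal in the past, is only defined on `]α,0]` with `α > -∞`,
then `liminf_{t→α⁺} |x(t)| = 0`. -/
theorem stmt3 (α : ℝ) (hα : α < 0) (Dstar : ℝ)
    (D : ℂ → ℝ) (hD1 : ContDiffOn ℝ 1 D {z : ℂ | z ≠ 0})
    (hD0 : ∀ z : ℂ, z ≠ 0 → 0 ≤ D z) (hDb : ∀ z : ℂ, z ≠ 0 → D z ≤ Dstar)
    (x x' : ℝ → ℂ) (hsol : KeplerSolOn D (Ioc α 0) x x')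
    (hmax : ¬∃ (β : ℝ) (y y' : ℝ → ℂ), β < α ∧ KeplerSolOn D (Ioc β 0) y y' ∧
      ∀ t ∈ Ioc α 0, y t = x t) :
    liminf (fun t => ‖x t‖) (nhdsWithin α (Ioi α)) = 0 := by
  by_contra hne
  set l := nhdsWithin α (Ioi α) with hl
  have hlne : l.NeBot := nhdsGT_neBot α
  obtain ⟨hx0, hxd', hx'd'⟩ := hsol
  -- Step A: eventual lower bound r > 0 on ‖x t‖
  have h0mem : (0:ℝ) ∈ {a | ∀ᶠ t in l, a ≤ ‖x t‖} := by
    simp only [mem_setOf_eq]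
    exact Eventually.of_forall fun t => norm_nonneg _
  have hbdd : BddAbove {a | ∀ᶠ t in l, a ≤ ‖x t‖} := by
    by_contra hb
    exact hne (by rw [liminf_eq, Real.sSup_of_not_bddAbove hb])
  have hliminf_nonneg : 0 ≤ liminf (fun t => ‖x t‖) l := by
    rw [liminf_eq]; exact le_csSup hbdd h0mem
  have hpos : 0 < liminf (fun t => ‖x t‖) l := hliminf_nonneg.lt_of_ne (Ne.symm hne)
  rw [liminf_eq] at hpos
  obtain ⟨r, hrmem, hr0⟩ := exists_lt_of_lt_csSup ⟨0, h0mem⟩ hpos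
  obtain ⟨u, hu, hu2⟩ := mem_nhdsGT_iff_exists_Ioc_subset.1 hrmem
  set t₁ := min u (α/2) with ht₁def
  have ht₁α : α < t₁ := lt_min hu (by linarith)
  have ht₁0 : t₁ < 0 := lt_of_le_of_lt (min_le_right _ _) (by linarith)
  have hrx : ∀ t ∈ Ioc α t₁, r ≤ ‖x t‖ := fun t ht =>
    hu2 ⟨ht.1, ht.2.trans (min_le_left _ _)⟩
  have hsub : Ioc α t₁ ⊆ Ioo α 0 := fun t ht => ⟨ht.1, lt_of_le_of_lt ht.2 ht₁0⟩
  -- interior derivatives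
  have hxd : ∀ t ∈ Ioo α 0, HasDerivAt x (x' t) t := fun t ht =>
    (hxd' t ⟨ht.1, ht.2.le⟩).hasDerivAt (Ioc_mem_nhds ht.1 ht.2)
  set A : ℝ → ℂ := fun t => -(D (x t)) • x' t - (‖x t‖ ^ 3)⁻¹ • x t with hA
  have hx'd : ∀ t ∈ Ioo α 0, HasDerivAt x' (A t) t := fun t ht =>
    (hx'd' t ⟨ht.1, ht.2.le⟩).hasDerivAt (Ioc_mem_nhds ht.1 ht.2)
  have hDstar : 0 ≤ Dstar := le_trans (hD0 1 one_ne_zero) (hDb 1 one_ne_zero)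
  -- bound on A
  have hAbound : ∀ t ∈ Ioc α t₁, ‖A t‖ ≤ Dstar * ‖x' t‖ + (r^2)⁻¹ := by
    intro t ht
    have hxt0 : x t ≠ 0 := hx0 t ⟨ht.1, ht.2.trans ht₁0.le⟩
    have hxtr : r ≤ ‖x t‖ := hrx t ht
    have hxtpos : 0 < ‖x t‖ := lt_of_lt_of_le hr0 hxtr
    have h1 : ‖A t‖ ≤ ‖(-(D (x t)) • x' t)‖ + ‖((‖x t‖ ^ 3)⁻¹ • x t)‖ := norm_sub_le _ _
    have h2 : ‖(-(D (x t)) • x' t)‖ = D (x t) * ‖x' t‖ := by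
      rw [norm_smul, Real.norm_eq_abs, abs_neg, abs_of_nonneg (hD0 _ hxt0)]
    have h3 : ‖((‖x t‖ ^ 3)⁻¹ • x t)‖ = (‖x t‖^2)⁻¹ := by
      have hne' : ‖x t‖ ≠ 0 := ne_of_gt hxtpos
      rw [norm_smul, Real.norm_eq_abs, abs_of_nonneg (by positivity), pow_succ, mul_inv,
        mul_assoc, inv_mul_cancel₀ hne', mul_one]
    have h4 : D (x t) * ‖x' t‖ ≤ Dstar * ‖x' t‖ :=
      mul_le_mul_of_nonneg_right (hDb _ hxt0) (norm_nonneg _)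
    have h5 : (‖x t‖^2)⁻¹ ≤ (r^2)⁻¹ := by
      apply inv_anti₀ (by positivity)
      nlinarith
    linarith [h1, h2 ▸ h4, h3 ▸ h5]
  -- Step B: Gronwall bound on ‖x'‖
  set CC := gronwallBound ‖x' t₁‖ Dstar ((r^2)⁻¹) (t₁ - α) with hCCdef
  have hgbmono := gronwallBound_mono' (norm_nonneg (x' t₁)) hDstar
    (show (0:ℝ) ≤ (r^2)⁻¹ by positivity)
  have hCC0 : 0 ≤ CC := gronwallBound_nonneg' (norm_nonneg _) hDstar (by positivity)
    (by linarith)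
  have hx'bound : ∀ t ∈ Ioc α t₁, ‖x' t‖ ≤ CC := by
    intro t ht
    set g : ℝ → ℂ := fun s => x' (t₁ - s) with hgdef
    have hgd : ∀ s ∈ Icc 0 (t₁ - t), HasDerivAt g (-(A (t₁ - s))) s := by
      intro s hs
      have hmem : t₁ - s ∈ Ioo α 0 := by
        refine hsub ⟨?_, ?_⟩
        · have := hs.2; have := ht.1; simp only [] at *; linarith
        · linarith [hs.1]
      have hinner : HasDerivAt (fun s : ℝ => t₁ - s) (-1) s := by
        simpa using (hasDerivAt_id s).const_sub t₁
      have := HasDerivAt.scomp s (hx'd (t₁ - s) hmem) hinner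
      rw [neg_one_smul] at this; exact this
    have key := norm_le_gronwallBound_of_norm_deriv_right_le
      (f := g) (f' := fun s => -(A (t₁ - s))) (δ := ‖x' t₁‖) (K := Dstar) (ε := (r^2)⁻¹)
      (a := 0) (b := t₁ - t)
      (fun s hs => (hgd s hs).continuousAt.continuousWithinAt)
      (fun s hs => (hgd s (Ico_subset_Icc_self hs)).hasDerivWithinAt)
      (by simp [hgdef])
      (by
        intro s hs
        have hmem : t₁ - s ∈ Ioc α t₁ := by
          constructor
          · have := hs.2; have := ht.1; linarith
          · linarith [hs.1]
        have := hAbound (t₁ - s) hmem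
        simpa using this)
      (t₁ - t) (right_mem_Icc.2 (by linarith [ht.2]))
    have hgt : g (t₁ - t) = x' t := by simp [hgdef]
    rw [hgt, sub_zero] at key
    refine key.trans (hgbmono ?_ ?_ ?_)
    · exact mem_Ici.2 (by linarith [ht.2])
    · exact mem_Ici.2 (by linarith [ht.1])
    · linarith [ht.1]
  -- Step C: limits of x and x' at α from the right
  set CC2 := Dstar * CC + (r^2)⁻¹ with hCC2def
  have hCC20 : 0 ≤ CC2 := by positivity
  have hAbound2 : ∀ t ∈ Ioc α t₁, ‖A t‖ ≤ CC2 := by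
    intro t ht
    have h1 := hAbound t ht
    have h2 := hx'bound t ht
    have := mul_le_mul_of_nonneg_left h2 hDstar
    simp only [hCC2def]; linarith
  have hxpair := norm_sub_le_of_deriv_bound' (fun t ht => hxd t (hsub ht))
    (fun t ht => hx'bound t ht)
  have hx'pair := norm_sub_le_of_deriv_bound' (fun t ht => hx'd t (hsub ht))
    (fun t ht => hAbound2 t ht)
  obtain ⟨p, hp⟩ := exists_tendsto_right' ht₁α hCC0 hxpair
  obtain ⟨q, hq⟩ := exists_tendsto_right' ht₁α hCC20 hx'pair
  have hev : ∀ᶠ t in l, t ∈ Ioc α t₁ := Ioc_mem_nhdsGT_of_mem ⟨le_refl α, ht₁α⟩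
  have hpr : r ≤ ‖p‖ := ge_of_tendsto hp.norm (hev.mono fun t ht => hrx t ht)
  have hp0 : p ≠ 0 := by
    intro h
    rw [h, norm_zero] at hpr
    linarith
  -- Step D: local solution of the first-order system near α
  set F : ℂ × ℂ → ℂ × ℂ := fun w => (w.2, -(D w.1) • w.2 - (‖w.1‖ ^ 3)⁻¹ • w.1) with hFdef
  have hFc : ContDiffAt ℝ 1 F (p, q) := by
    apply ContDiffAt.prodMk
    · exact contDiff_snd.contDiffAt
    · have hDat : ContDiffAt ℝ 1 D p := hD1.contDiffAt (isOpen_ne.mem_nhds hp0)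
      have h1 : ContDiffAt ℝ 1 (fun w : ℂ × ℂ => D w.1) (p, q) :=
        ContDiffAt.comp (p, q) hDat contDiff_fst.contDiffAt
      have h2 : ContDiffAt ℝ 1 (fun w : ℂ × ℂ => ‖w.1‖) (p, q) :=
        ContDiffAt.norm ℝ contDiff_fst.contDiffAt hp0
      have h3 : ContDiffAt ℝ 1 (fun w : ℂ × ℂ => ((‖w.1‖ ^ 3)⁻¹ : ℝ)) (p, q) :=
        (h2.pow 3).inv (pow_ne_zero 3 (norm_ne_zero_iff.2 hp0))
      exact (h1.neg.smul contDiff_snd.contDiffAt).sub (h3.smul contDiff_fst.contDiffAt)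
  obtain ⟨f, hf0, ε, hε, hfd⟩ := hFc.exists_forall_mem_closedBall_exists_eq_forall_mem_Ioo_hasDerivAt₀ α
  obtain ⟨K, sK, hsK, hKlip⟩ := hFc.exists_lipschitzOnWith
  obtain ⟨ρ, hρ, hball⟩ := Metric.mem_nhds_iff.1 hsK
  have hαmem : α ∈ Ioo (α - ε) (α + ε) := ⟨by linarith, by linarith⟩
  have hfc : ContinuousAt f α := (hfd α hαmem).continuousAt
  set r2 := min ρ (r/2) with hr2def
  have hr2pos : 0 < r2 := lt_min hρ (by linarith)
  obtain ⟨δ₂, hδ₂, hδ₂'⟩ := Metric.continuousAt_iff.1 hfc r2 hr2pos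
  have hXtend : Tendsto (fun t => (x t, x' t)) l (nhds (p, q)) := hp.prodMk_nhds hq
  have hballmem : {t | (x t, x' t) ∈ Metric.ball ((p, q) : ℂ × ℂ) r2} ∈ l :=
    hXtend (Metric.ball_mem_nhds _ hr2pos)
  obtain ⟨u₂, hu₂, hu₂'⟩ := mem_nhdsGT_iff_exists_Ioc_subset.1 hballmem
  set m := min δ₂ ε with hmdef
  have hm : 0 < m := lt_min hδ₂ hε
  set b := min (min t₁ u₂) (α + m / 2) with hbdef
  have hαb : α < b := lt_min (lt_min ht₁α hu₂) (by linarith)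
  have hbt₁ : b ≤ t₁ := (min_le_left _ _).trans (min_le_left _ _)
  have hbu₂ : b ≤ u₂ := (min_le_left _ _).trans (min_le_right _ _)
  have hbδ : b - α < δ₂ := by
    have h1 : b ≤ α + m / 2 := min_le_right _ _
    have h2 : m ≤ δ₂ := min_le_left _ _
    linarith
  have hbε : b - α < ε := by
    have h1 : b ≤ α + m / 2 := min_le_right _ _
    have h2 : m ≤ ε := min_le_right _ _
    linarith
  -- the combined trajectory X, extended by (p,q) at α
  set X : ℝ → ℂ × ℂ := fun t => if t ≤ α then (p, q) else (x t, x' t) with hXdef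
  have hXeq : ∀ t, α < t → X t = (x t, x' t) := fun t ht => if_neg (not_le.2 ht)
  have hXα : X α = (p, q) := if_pos le_rfl
  have hXtend' : Tendsto X l (nhds (p, q)) := by
    apply hXtend.congr'
    filter_upwards [self_mem_nhdsWithin] with s hs
    exact (hXeq s hs).symm
  have hXd : ∀ t ∈ Ioc α b, HasDerivAt X (F (X t)) t := by
    intro t ht
    have ht' : t ∈ Ioo α 0 := hsub ⟨ht.1, ht.2.trans hbt₁⟩
    have hpair : HasDerivAt (fun s => (x s, x' s)) ((x' t, A t)) t :=
      (hxd t ht').prodMk (hx'd t ht')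
    have hFX : F (X t) = (x' t, A t) := by
      rw [hXeq t ht.1]
    rw [hFX]
    apply hpair.congr_of_eventuallyEq
    filter_upwards [Ioi_mem_nhds ht.1] with s hs
    exact hXeq s hs
  have hXcα : ContinuousWithinAt X (Ioi α) α := by
    show Tendsto X (nhdsWithin α (Ioi α)) (nhds (X α))
    rw [hXα]
    exact hXtend'
  have hXc : ContinuousOn X (Icc α b) := by
    intro t ht
    rcases eq_or_lt_of_le ht.1 with heq | hlt
    · subst heq
      have h2 : Tendsto X (nhdsWithin α (Ici α)) (nhds (X α)) := by
        rw [← Set.Ioi_insert, nhdsWithin_insert]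
        rw [tendsto_sup]
        exact ⟨tendsto_pure_nhds X α, by rw [hXα]; exact hXtend'⟩
      exact (h2.mono_left (nhdsWithin_mono α Icc_subset_Ici_self))
    · exact ((hXd t ⟨hlt, ht.2⟩).continuousAt).continuousWithinAt
  have hXdα : HasDerivWithinAt X (F (p, q)) (Ici α) α := by
    apply hasDerivWithinAt_Ici_of_tendsto' hαb hXd hXcα
    have : Tendsto (fun t => F (X t)) l (nhds (F (p, q))) :=
      (hFc.continuousAt.tendsto).comp hXtend'
    exact this
  -- uniqueness : X = f on [α, b]
  have huniq : EqOn X f (Icc α b) := by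
    apply ODE_solution_unique_of_mem_Icc_right
      (v := fun _ w => F w) (s := fun _ => Metric.ball ((p, q) : ℂ × ℂ) ρ) (K := K)
      (fun _ _ => hKlip.mono hball) hXc
    · intro t ht
      rcases eq_or_lt_of_le ht.1 with heq | hlt
      · subst heq
        rw [hXα]
        exact hXdα
      · exact (hXd t ⟨hlt, ht.2.le⟩).hasDerivWithinAt
    · intro t ht
      rcases eq_or_lt_of_le ht.1 with heq | hlt
      · subst heq
        rw [hXα]
        exact Metric.mem_ball_self hρ
      · rw [hXeq t hlt]
        exact Metric.ball_subset_ball (min_le_left _ _)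
          (hu₂' ⟨hlt, ht.2.le.trans hbu₂⟩)
    · intro t ht
      have htm : t ∈ Ioo (α - ε) (α + ε) := ⟨by linarith [ht.1], by linarith [ht.2, hbε]⟩
      exact (hfd t htm).continuousAt.continuousWithinAt
    · intro t ht
      have htm : t ∈ Ioo (α - ε) (α + ε) := ⟨by linarith [ht.1], by linarith [ht.2, hbε]⟩
      exact (hfd t htm).hasDerivWithinAt
    · intro t ht
      have : dist (f t) (f α) < r2 := hδ₂' (by
        rw [Real.dist_eq, abs_of_nonneg (by linarith [ht.1])]
        linarith [ht.2, hbδ])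
      rw [hf0] at this
      exact Metric.mem_ball.2 (lt_of_lt_of_le this (min_le_left _ _))
    · rw [hXα, hf0]
  -- Step E: glue the local solution with x to contradict maximality
  set β := α - m / 2 with hβdef
  have hβα : β < α := by simp only [hβdef]; linarith
  have hβε : α - ε < β := by
    have h2 : m ≤ ε := min_le_right _ _
    simp only [hβdef]; linarith
  have hfnear : ∀ t ∈ Icc β α, dist (f t) ((p, q) : ℂ × ℂ) < r2 := by
    intro t ht
    rw [← hf0]
    apply hδ₂'
    rw [Real.dist_eq, abs_of_nonpos (by linarith [ht.2])]
    have h2 : m ≤ δ₂ := min_le_left _ _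
    have h3 := ht.1
    simp only [hβdef] at h3
    linarith
  have hf1d : ∀ t ∈ Ioo (α - ε) (α + ε), HasDerivAt (fun s => (f s).1) ((f t).2) t := by
    intro t htm
    exact (ContinuousLinearMap.fst ℝ ℂ ℂ).hasFDerivAt.comp_hasDerivAt t (hfd t htm)
  have hf2d : ∀ t ∈ Ioo (α - ε) (α + ε),
      HasDerivAt (fun s => (f s).2)
        (-(D ((f t).1)) • (f t).2 - (‖(f t).1‖ ^ 3)⁻¹ • (f t).1) t := by
    intro t htm
    exact (ContinuousLinearMap.snd ℝ ℂ ℂ).hasFDerivAt.comp_hasDerivAt t (hfd t htm)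
  set y : ℝ → ℂ := fun t => if t ≤ α then (f t).1 else x t with hydef
  set y' : ℝ → ℂ := fun t => if t ≤ α then (f t).2 else x' t with hy'def
  have hyeq1 : ∀ t, t ≤ α → y t = (f t).1 := fun t ht => if_pos ht
  have hyeq2 : ∀ t, α < t → y t = x t := fun t ht => if_neg (not_le.2 ht)
  have hy'eq1 : ∀ t, t ≤ α → y' t = (f t).2 := fun t ht => if_pos ht
  have hy'eq2 : ∀ t, α < t → y' t = x' t := fun t ht => if_neg (not_le.2 ht)
  have hyf : y =ᶠ[nhds α] fun s => (f s).1 := by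
    filter_upwards [Ioo_mem_nhds hβα hαb] with s hs
    rcases le_or_gt s α with h | h
    · exact hyeq1 s h
    · rw [hyeq2 s h]
      have h2 := huniq ⟨h.le, hs.2.le⟩
      rw [hXeq s h] at h2
      exact congrArg Prod.fst h2
  have hy'f : y' =ᶠ[nhds α] fun s => (f s).2 := by
    filter_upwards [Ioo_mem_nhds hβα hαb] with s hs
    rcases le_or_gt s α with h | h
    · exact hy'eq1 s h
    · rw [hy'eq2 s h]
      have h2 := huniq ⟨h.le, hs.2.le⟩
      rw [hXeq s h] at h2
      exact congrArg Prod.snd h2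
  have hset : Ioc α (0:ℝ) =ᶠ[nhds (0:ℝ)] Ioc β 0 := by
    rw [Filter.eventuallyEq_set]
    filter_upwards [Ioi_mem_nhds hα] with s hs
    constructor
    · exact fun h2 => ⟨hβα.trans h2.1, h2.2⟩
    · exact fun h2 => ⟨hs, h2.2⟩
  apply hmax
  refine ⟨β, y, y', hβα, ⟨?_, ?_, ?_⟩, fun t ht => hyeq2 t ht.1⟩
  · -- nonvanishing
    intro t ht
    rcases le_or_gt t α with h | h
    · rw [hyeq1 t h]
      have hdist := hfnear t ⟨ht.1.le, h⟩
      have h1 : dist ((f t).1) p ≤ dist (f t) ((p, q) : ℂ × ℂ) := by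
        rw [Prod.dist_eq]; exact le_max_left _ _
      have h2 : dist ((f t).1) p < r / 2 :=
        lt_of_le_of_lt h1 (lt_of_lt_of_le hdist (min_le_right _ _))
      intro hzero
      rw [hzero, dist_eq_norm, zero_sub, norm_neg] at h2
      linarith
    · rw [hyeq2 t h]
      exact hx0 t ⟨h, ht.2⟩
  · -- first derivative
    intro t ht
    rcases lt_trichotomy t α with hlt | heq | hgt
    · have htm : t ∈ Ioo (α - ε) (α + ε) := ⟨by linarith [ht.1], by linarith⟩
      rw [hy'eq1 t hlt.le]
      apply HasDerivAt.hasDerivWithinAt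
      apply (hf1d t htm).congr_of_eventuallyEq
      filter_upwards [Iio_mem_nhds hlt] with s hs
      exact hyeq1 s hs.le
    · subst heq
      rw [hy'eq1 t le_rfl]
      exact ((hf1d t hαmem).congr_of_eventuallyEq hyf).hasDerivWithinAt
    · rcases eq_or_lt_of_le ht.2 with h0 | h0
      · subst h0
        rw [hy'eq2 0 hgt]
        have hd := (hxd' 0 ⟨hα, le_rfl⟩).congr_set hset
        apply hd.congr_of_eventuallyEq
        · filter_upwards [mem_nhdsWithin_of_mem_nhds (Ioi_mem_nhds hα)] with s hs
          exact hyeq2 s hs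
        · exact hyeq2 0 hα
      · rw [hy'eq2 t hgt]
        apply HasDerivAt.hasDerivWithinAt
        apply (hxd t ⟨hgt, h0⟩).congr_of_eventuallyEq
        filter_upwards [Ioi_mem_nhds hgt] with s hs
        exact hyeq2 s hs
  · -- second derivative
    intro t ht
    rcases lt_trichotomy t α with hlt | heq | hgt
    · have htm : t ∈ Ioo (α - ε) (α + ε) := ⟨by linarith [ht.1], by linarith⟩
      rw [hyeq1 t hlt.le, hy'eq1 t hlt.le]
      apply HasDerivAt.hasDerivWithinAt
      apply (hf2d t htm).congr_of_eventuallyEq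
      filter_upwards [Iio_mem_nhds hlt] with s hs
      exact hy'eq1 s hs.le
    · subst heq
      rw [hyeq1 t le_rfl, hy'eq1 t le_rfl]
      exact ((hf2d t hαmem).congr_of_eventuallyEq hy'f).hasDerivWithinAt
    · rcases eq_or_lt_of_le ht.2 with h0 | h0
      · subst h0
        rw [hyeq2 0 hgt, hy'eq2 0 hgt]
        have hd := (hx'd' 0 ⟨hα, le_rfl⟩).congr_set hset
        apply hd.congr_of_eventuallyEq
        · filter_upwards [mem_nhdsWithin_of_mem_nhds (Ioi_mem_nhds hα)] with s hs
          exact hy'eq2 s hs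
        · exact hy'eq2 0 hα
      · rw [hyeq2 t hgt, hy'eq2 t hgt]
        apply HasDerivAt.hasDerivWithinAt
        have hd : HasDerivAt x' (-(D (x t)) • x' t - (‖x t‖ ^ 3)⁻¹ • x t) t :=
          hx'd t ⟨hgt, h0⟩
        apply hd.congr_of_eventuallyEq
        filter_upwards [Ioi_mem_nhds hgt] with s hs
        exact hy'eq2 s hs
end

section
/- Let δ : ]0,∞[ → ℝ be continuous and nonnegative, and let r₁, r₂ be two distinct solutions of r̈ + δ(r)ṙ = -1/r² (r > 0) on a common interval. If r₁(t*) = r₂(t*) for some t*, then r₁(t) ≠ r₂(t) for every t ≠ t* in the common interval. Equivalently, two distinct solutions of the damped one-dimensional Kepler equation intersect at most once. -/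
open Set MeasureTheory intervalIntegral

/-- Positive solutions of the damped one-dimensional Kepler equation
`r̈ + δ(r)ṙ = -1/r²` on a set `S` of times. -/
def Kepler1DOn (δ : ℝ → ℝ) (S : Set ℝ) (r r' : ℝ → ℝ) : Prop :=
  (∀ t ∈ S, 0 < r t) ∧
  (∀ t ∈ S, HasDerivWithinAt r (r' t) S t) ∧
  (∀ t ∈ S, HasDerivWithinAt r' (-(δ (r t)) * r' t - 1 / (r t) ^ 2) S t)

namespace KeplerAux

variable {δ : ℝ → ℝ}

noncomputable def Δ (δ : ℝ → ℝ) (x : ℝ) : ℝ := ∫ u in (1:ℝ)..x, δ u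

lemma integrable_δ (hδc : ContinuousOn δ (Ioi 0)) {x y : ℝ} (hx : 0 < x) (hy : 0 < y) :
    IntervalIntegrable δ volume x y := by
  apply ContinuousOn.intervalIntegrable
  exact hδc.mono (fun u hu => lt_of_lt_of_le (lt_min hx hy) hu.1)

lemma hasDerivAt_Δ (hδc : ContinuousOn δ (Ioi 0)) {x : ℝ} (hx : 0 < x) :
    HasDerivAt (Δ δ) (δ x) x := by
  apply intervalIntegral.integral_hasDerivAt_right (integrable_δ hδc one_pos hx)
  · exact hδc.stronglyMeasurableAtFilter isOpen_Ioi x hx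
  · exact hδc.continuousAt (Ioi_mem_nhds hx)

lemma Δ_mono (hδc : ContinuousOn δ (Ioi 0)) (hδ0 : ∀ r > (0 : ℝ), 0 ≤ δ r)
    {x y : ℝ} (hx : 0 < x) (hxy : x ≤ y) : Δ δ x ≤ Δ δ y := by
  have hy : 0 < y := lt_of_lt_of_le hx hxy
  have hsub : Δ δ y - Δ δ x = ∫ u in x..y, δ u :=
    integral_interval_sub_left (integrable_δ hδc one_pos hy) (integrable_δ hδc one_pos hx)
  have hnn : 0 ≤ ∫ u in x..y, δ u :=
    intervalIntegral.integral_nonneg hxy (fun u hu => hδ0 u (lt_of_lt_of_le hx hu.1))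
  linarith

variable {a b : ℝ} {r r' : ℝ → ℝ}

lemma g_deriv (hδc : ContinuousOn δ (Ioi 0)) (h : Kepler1DOn δ (Icc a b) r r')
    {t : ℝ} (ht : t ∈ Icc a b) :
    HasDerivWithinAt (fun s => r' s + Δ δ (r s)) (-(1 / (r t) ^ 2)) (Icc a b) t := by
  have h2 : HasDerivWithinAt (fun s => Δ δ (r s)) (δ (r t) * r' t) (Icc a b) t :=
    (hasDerivAt_Δ hδc (h.1 t ht)).comp_hasDerivWithinAt t (h.2.1 t ht)
  have h3 := (h.2.2 t ht).add h2
  refine h3.congr_deriv ?_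
  ring

lemma deriv_nonneg_right {w : ℝ → ℝ} {v c d : ℝ} (hcd : c < d)
    (hw : HasDerivWithinAt w v (Icc c d) c) (h0 : w c = 0)
    (hnn : ∀ t ∈ Icc c d, 0 ≤ w t) : 0 ≤ v := by
  rw [hasDerivWithinAt_iff_tendsto_slope, Set.Icc_diff_left,
    nhdsWithin_Ioc_eq_nhdsGT hcd] at hw
  refine ge_of_tendsto hw ?_
  filter_upwards [Ioc_mem_nhdsGT_of_mem ⟨le_rfl, hcd⟩] with x hx
  rw [slope_def_field, h0, sub_zero]
  exact div_nonneg (hnn x ⟨hx.1.le, hx.2⟩) (sub_nonneg.2 hx.1.le)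

lemma deriv_nonpos_left {w : ℝ → ℝ} {v c d : ℝ} (hcd : c < d)
    (hw : HasDerivWithinAt w v (Icc c d) d) (h0 : w d = 0)
    (hnn : ∀ t ∈ Icc c d, 0 ≤ w t) : v ≤ 0 := by
  rw [hasDerivWithinAt_iff_tendsto_slope, Set.Icc_sdiff_right,
    nhdsWithin_Ico_eq_nhdsLT hcd] at hw
  refine le_of_tendsto hw ?_
  filter_upwards [Ico_mem_nhdsLT_of_mem ⟨hcd, le_rfl⟩] with x hx
  rw [slope_def_field, h0, sub_zero]
  exact div_nonpos_of_nonneg_of_nonpos (hnn x ⟨hx.1, hx.2.le⟩) (by linarith [hx.2])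

lemma keyA (hδc : ContinuousOn δ (Ioi 0))
    {r₁ r₁' r₂ r₂' : ℝ → ℝ}
    (h1 : Kepler1DOn δ (Icc a b) r₁ r₁') (h2 : Kepler1DOn δ (Icc a b) r₂ r₂')
    {c d : ℝ} (hc : c ∈ Icc a b) (hd : d ∈ Icc a b) (hcd : c < d)
    (hec : r₁ c = r₂ c) (hed : r₁ d = r₂ d)
    (hgt : ∀ t ∈ Ioo c d, r₂ t < r₁ t) : False := by
  set G : ℝ → ℝ := fun s => (r₁' s + Δ δ (r₁ s)) - (r₂' s + Δ δ (r₂ s)) with hGdef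
  have hsub : Icc c d ⊆ Icc a b := Icc_subset_Icc hc.1 hd.2
  have hGd : ∀ t ∈ Icc a b,
      HasDerivWithinAt G (1 / (r₂ t) ^ 2 - 1 / (r₁ t) ^ 2) (Icc a b) t := by
    intro t ht
    have := (g_deriv hδc h1 ht).sub (g_deriv hδc h2 ht)
    refine this.congr_deriv ?_
    ring
  have hGc : ContinuousOn G (Icc c d) :=
    fun t ht => ((hGd t (hsub ht)).continuousWithinAt).mono hsub
  have hmono : StrictMonoOn G (Icc c d) := by
    apply strictMonoOn_of_deriv_pos (convex_Icc c d) hGc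
    intro x hx
    rw [interior_Icc] at hx
    have hxab : x ∈ Ioo a b := ⟨lt_of_le_of_lt hc.1 hx.1, lt_of_lt_of_le hx.2 hd.2⟩
    have hG' : HasDerivAt G (1 / (r₂ x) ^ 2 - 1 / (r₁ x) ^ 2) x :=
      (hGd x (Ioo_subset_Icc_self hxab)).hasDerivAt (Icc_mem_nhds hxab.1 hxab.2)
    rw [hG'.deriv]
    have h2x : 0 < r₂ x := h2.1 x (Ioo_subset_Icc_self hxab)
    have h12 : r₂ x < r₁ x := hgt x hx
    have : (r₂ x) ^ 2 < (r₁ x) ^ 2 := by nlinarith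
    have := one_div_lt_one_div_of_lt (by positivity) this
    linarith
  have hlt : G c < G d := hmono (left_mem_Icc.2 hcd.le) (right_mem_Icc.2 hcd.le) hcd
  have hGc' : G c = r₁' c - r₂' c := by simp [hGdef, hec]
  have hGd' : G d = r₁' d - r₂' d := by simp [hGdef, hed]
  have hnn : ∀ t ∈ Icc c d, 0 ≤ r₁ t - r₂ t := by
    intro t ht
    rcases eq_or_lt_of_le ht.1 with h | h
    · simp [← h, hec]
    rcases eq_or_lt_of_le ht.2 with h' | h'
    · simp [h', hed]
    · exact le_of_lt (sub_pos.2 (hgt t ⟨h, h'⟩))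
  have hwc : HasDerivWithinAt (fun s => r₁ s - r₂ s) (r₁' c - r₂' c) (Icc c d) c :=
    (((h1.2.1 c hc).sub (h2.2.1 c hc)).mono hsub)
  have hwd : HasDerivWithinAt (fun s => r₁ s - r₂ s) (r₁' d - r₂' d) (Icc c d) d :=
    (((h1.2.1 d hd).sub (h2.2.1 d hd)).mono hsub)
  have h₁ := deriv_nonneg_right hcd hwc (by simp [hec]) hnn
  have h₂ := deriv_nonpos_left hcd hwd (by simp [hed]) hnn
  rw [hGc', hGd'] at hlt
  linarith

lemma lipschitzOnWith_sub {α : Type*} [PseudoMetricSpace α] {f g : α → ℝ} {Kf Kg : NNReal}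
    {s : Set α} (hf : LipschitzOnWith Kf f s) (hg : LipschitzOnWith Kg g s) :
    LipschitzOnWith (Kf + Kg) (fun x => f x - g x) s := by
  rw [lipschitzOnWith_iff_dist_le_mul] at *
  intro x hx y hy
  have h1 := hf x hx y hy
  have h2 := hg x hx y hy
  have h3 : dist (f x - g x) (f y - g y) ≤ dist (f x) (f y) + dist (g x) (g y) := by
    simp only [Real.dist_eq]
    calc |f x - g x - (f y - g y)| = |(f x - f y) - (g x - g y)| := by ring_nf
      _ ≤ |f x - f y| + |g x - g y| := abs_sub _ _
  push_cast
  linarith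

lemma keyB (hδc : ContinuousOn δ (Ioi 0)) (hab : a < b)
    {r₁ r₁' r₂ r₂' : ℝ → ℝ}
    (h1 : Kepler1DOn δ (Icc a b) r₁ r₁') (h2 : Kepler1DOn δ (Icc a b) r₂ r₂')
    {t₀ : ℝ} (ht₀ : t₀ ∈ Icc a b)
    (he : r₁ t₀ = r₂ t₀) (he' : r₁' t₀ = r₂' t₀) :
    ∀ t ∈ Icc a b, r₁ t = r₂ t := by
  have hr₁c : ContinuousOn r₁ (Icc a b) := fun t ht => (h1.2.1 t ht).continuousWithinAt
  have hr₂c : ContinuousOn r₂ (Icc a b) := fun t ht => (h2.2.1 t ht).continuousWithinAt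
  have hr₁'c : ContinuousOn r₁' (Icc a b) := fun t ht => (h1.2.2 t ht).continuousWithinAt
  have hr₂'c : ContinuousOn r₂' (Icc a b) := fun t ht => (h2.2.2 t ht).continuousWithinAt
  have hne : (Icc a b).Nonempty := nonempty_Icc.2 hab.le
  obtain ⟨x₁, hx₁, hmin₁⟩ := isCompact_Icc.exists_isMinOn hne hr₁c
  obtain ⟨x₂, hx₂, hmin₂⟩ := isCompact_Icc.exists_isMinOn hne hr₂c
  obtain ⟨y₁, hy₁, hmax₁⟩ := isCompact_Icc.exists_isMaxOn hne hr₁c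
  obtain ⟨y₂, hy₂, hmax₂⟩ := isCompact_Icc.exists_isMaxOn hne hr₂c
  set m : ℝ := min (r₁ x₁) (r₂ x₂) with hm
  set M : ℝ := max (r₁ y₁) (r₂ y₂) with hM
  have hm0 : 0 < m := lt_min (h1.1 _ hx₁) (h2.1 _ hx₂)
  have hr₁mem : ∀ t ∈ Icc a b, r₁ t ∈ Icc m M := fun t ht =>
    ⟨le_trans (min_le_left _ _) (hmin₁ ht), le_trans (hmax₁ ht) (le_max_left _ _)⟩
  have hr₂mem : ∀ t ∈ Icc a b, r₂ t ∈ Icc m M := fun t ht =>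
    ⟨le_trans (min_le_right _ _) (hmin₂ ht), le_trans (hmax₂ ht) (le_max_right _ _)⟩
  have hIccsub : Icc m M ⊆ Ioi 0 := fun x hx => lt_of_lt_of_le hm0 hx.1
  obtain ⟨C, hC⟩ := isCompact_Icc.exists_bound_of_continuousOn (hδc.mono hIccsub)
  have LΔ : LipschitzOnWith C.toNNReal (Δ δ) (Icc m M) := by
    apply (convex_Icc m M).lipschitzOnWith_of_nnnorm_hasDerivWithin_le (f' := fun x => δ x)
      (fun x hx => (hasDerivAt_Δ hδc (hIccsub hx)).hasDerivWithinAt)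
    intro x hx
    rw [← NNReal.coe_le_coe, coe_nnnorm, Real.coe_toNNReal']
    exact le_max_of_le_left (hC x hx)
  have Lq : LipschitzOnWith (2 / m ^ 3).toNNReal (fun x : ℝ => -(1 / x ^ 2)) (Icc m M) := by
    apply (convex_Icc m M).lipschitzOnWith_of_nnnorm_hasDerivWithin_le
      (f' := fun x => 2 / x ^ 3)
    · intro x hx
      have hx0 : 0 < x := hIccsub hx
      have hd : HasDerivAt (fun x : ℝ => -(1 / x ^ 2)) (2 / x ^ 3) x := by
        have h := ((hasDerivAt_const x (1:ℝ)).div (hasDerivAt_pow 2 x)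
          (ne_of_gt (pow_pos hx0 2))).neg
        refine h.congr_deriv ?_
        field_simp
        ring
      exact hd.hasDerivWithinAt
    · intro x hx
      have hx0 : 0 < x := hIccsub hx
      rw [← NNReal.coe_le_coe, coe_nnnorm, Real.coe_toNNReal']
      refine le_max_of_le_left ?_
      rw [Real.norm_eq_abs, abs_of_nonneg (by positivity)]
      gcongr
      exact hx.1
  set sset : Set (ℝ × ℝ) := Icc m M ×ˢ (univ : Set ℝ) with hsset
  set v : ℝ → ℝ × ℝ → ℝ × ℝ := fun _ p => (p.2 - Δ δ p.1, -(1 / p.1 ^ 2)) with hv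
  have hmapsfst : MapsTo Prod.fst sset (Icc m M) := fun p hp => hp.1
  have L1 : LipschitzOnWith (1 + C.toNNReal * 1) (fun p : ℝ × ℝ => p.2 - Δ δ p.1) sset :=
    lipschitzOnWith_sub LipschitzWith.prod_snd.lipschitzOnWith
      (LΔ.comp LipschitzWith.prod_fst.lipschitzOnWith hmapsfst)
  have L2 : LipschitzOnWith ((2 / m ^ 3).toNNReal * 1)
      (fun p : ℝ × ℝ => -(1 / p.1 ^ 2)) sset :=
    Lq.comp LipschitzWith.prod_fst.lipschitzOnWith hmapsfst
  have Lv : ∀ t : ℝ, LipschitzOnWith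
      (max (1 + C.toNNReal * 1) ((2 / m ^ 3).toNNReal * 1)) (v t) sset :=
    fun _ => L1.prodMk L2
  set f₁ : ℝ → ℝ × ℝ := fun t => (r₁ t, r₁' t + Δ δ (r₁ t)) with hf₁
  set f₂ : ℝ → ℝ × ℝ := fun t => (r₂ t, r₂' t + Δ δ (r₂ t)) with hf₂
  have hΔc₁ : ContinuousOn (fun s => Δ δ (r₁ s)) (Icc a b) := fun t ht =>
    ((hasDerivAt_Δ hδc (h1.1 t ht)).continuousAt).comp_continuousWithinAt (hr₁c t ht)
  have hΔc₂ : ContinuousOn (fun s => Δ δ (r₂ s)) (Icc a b) := fun t ht =>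
    ((hasDerivAt_Δ hδc (h2.1 t ht)).continuousAt).comp_continuousWithinAt (hr₂c t ht)
  have hf₁c : ContinuousOn f₁ (Icc a b) := hr₁c.prodMk (hr₁'c.add hΔc₁)
  have hf₂c : ContinuousOn f₂ (Icc a b) := hr₂c.prodMk (hr₂'c.add hΔc₂)
  have hf₁d : ∀ t ∈ Icc a b, HasDerivWithinAt f₁ (v t (f₁ t)) (Icc a b) t := by
    intro t ht
    apply HasDerivWithinAt.prodMk
    · have := h1.2.1 t ht
      refine this.congr_deriv ?_
      show r₁' t = r₁' t + Δ δ (r₁ t) - Δ δ (r₁ t)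
      ring
    · exact g_deriv hδc h1 ht
  have hf₂d : ∀ t ∈ Icc a b, HasDerivWithinAt f₂ (v t (f₂ t)) (Icc a b) t := by
    intro t ht
    apply HasDerivWithinAt.prodMk
    · have := h2.2.1 t ht
      refine this.congr_deriv ?_
      show r₂' t = r₂' t + Δ δ (r₂ t) - Δ δ (r₂ t)
      ring
    · exact g_deriv hδc h2 ht
  have hf₁s : ∀ t ∈ Icc a b, f₁ t ∈ sset := fun t ht => ⟨hr₁mem t ht, trivial⟩
  have hf₂s : ∀ t ∈ Icc a b, f₂ t ∈ sset := fun t ht => ⟨hr₂mem t ht, trivial⟩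
  have hinit : f₁ t₀ = f₂ t₀ := by simp [hf₁, hf₂, he, he']
  intro t ht
  rcases le_total t₀ t with hle | hle
  · have hsub2 : Icc t₀ b ⊆ Icc a b := Icc_subset_Icc ht₀.1 le_rfl
    have hmem : ∀ τ ∈ Ico t₀ b, Icc a b ∈ nhdsWithin τ (Ici τ) := by
      intro τ hτ
      exact mem_nhdsWithin.2 ⟨Iio b, isOpen_Iio, hτ.2,
        fun x hx => ⟨le_trans ht₀.1 (le_trans hτ.1 hx.2), hx.1.le⟩⟩
    have key : EqOn f₁ f₂ (Icc t₀ b) :=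
      ODE_solution_unique_of_mem_Icc_right (v := v) (s := fun _ => sset) (fun τ _ => Lv τ)
        (hf₁c.mono hsub2)
        (fun τ hτ => (hf₁d τ ⟨le_trans ht₀.1 hτ.1, hτ.2.le⟩).mono_of_mem_nhdsWithin (hmem τ hτ))
        (fun τ hτ => hf₁s τ ⟨le_trans ht₀.1 hτ.1, hτ.2.le⟩)
        (hf₂c.mono hsub2)
        (fun τ hτ => (hf₂d τ ⟨le_trans ht₀.1 hτ.1, hτ.2.le⟩).mono_of_mem_nhdsWithin (hmem τ hτ))
        (fun τ hτ => hf₂s τ ⟨le_trans ht₀.1 hτ.1, hτ.2.le⟩)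
        hinit
    exact congrArg Prod.fst (key ⟨hle, ht.2⟩)
  · have hsub2 : Icc a t₀ ⊆ Icc a b := Icc_subset_Icc le_rfl ht₀.2
    have hmem : ∀ τ ∈ Ioc a t₀, Icc a b ∈ nhdsWithin τ (Iic τ) := by
      intro τ hτ
      exact mem_nhdsWithin.2 ⟨Ioi a, isOpen_Ioi, hτ.1,
        fun x hx => ⟨hx.1.le, le_trans hx.2 (le_trans hτ.2 ht₀.2)⟩⟩
    have key : EqOn f₁ f₂ (Icc a t₀) :=
      ODE_solution_unique_of_mem_Icc_left (v := v) (s := fun _ => sset) (fun τ _ => Lv τ)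
        (hf₁c.mono hsub2)
        (fun τ hτ => (hf₁d τ ⟨hτ.1.le, le_trans hτ.2 ht₀.2⟩).mono_of_mem_nhdsWithin (hmem τ hτ))
        (fun τ hτ => hf₁s τ ⟨hτ.1.le, le_trans hτ.2 ht₀.2⟩)
        (hf₂c.mono hsub2)
        (fun τ hτ => (hf₂d τ ⟨hτ.1.le, le_trans hτ.2 ht₀.2⟩).mono_of_mem_nhdsWithin (hmem τ hτ))
        (fun τ hτ => hf₂s τ ⟨hτ.1.le, le_trans hτ.2 ht₀.2⟩)
        hinit
    exact congrArg Prod.fst (key ⟨ht.1, hle⟩)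

end KeplerAux

open KeplerAux in
/-- Two distinct solutions of the damped one-dimensional Kepler equation intersect
at most once. -/
theorem stmt5 (δ : ℝ → ℝ) (hδc : ContinuousOn δ (Ioi 0)) (hδ0 : ∀ r > (0 : ℝ), 0 ≤ δ r)
    (a b : ℝ) (hab : a < b) (r₁ r₁' r₂ r₂' : ℝ → ℝ)
    (h1 : Kepler1DOn δ (Icc a b) r₁ r₁') (h2 : Kepler1DOn δ (Icc a b) r₂ r₂')
    (hne : ¬∀ t ∈ Icc a b, r₁ t = r₂ t)
    (tstar : ℝ) (htstar : tstar ∈ Icc a b) (heq : r₁ tstar = r₂ tstar) :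
    ∀ t ∈ Icc a b, t ≠ tstar → r₁ t ≠ r₂ t := by
  intro t ht htne heqt
  obtain ⟨t₁, t₂, h12, ht₁, ht₂, hz₁, hz₂⟩ :
      ∃ t₁ t₂, t₁ < t₂ ∧ t₁ ∈ Icc a b ∧ t₂ ∈ Icc a b ∧ r₁ t₁ = r₂ t₁ ∧ r₁ t₂ = r₂ t₂ := by
    rcases lt_or_gt_of_ne htne with h | h
    · exact ⟨t, tstar, h, ht, htstar, heqt, heq⟩
    · exact ⟨tstar, t, h, htstar, ht, heq, heqt⟩
  have hr₁c : ContinuousOn r₁ (Icc a b) := fun τ hτ => (h1.2.1 τ hτ).continuousWithinAt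
  have hr₂c : ContinuousOn r₂ (Icc a b) := fun τ hτ => (h2.2.1 τ hτ).continuousWithinAt
  by_cases hall : ∀ s ∈ Icc t₁ t₂, r₁ s = r₂ s
  · set τ := (t₁ + t₂) / 2 with hτdef
    have hτ12 : τ ∈ Ioo t₁ t₂ := ⟨by simp only [hτdef]; linarith, by simp only [hτdef]; linarith⟩
    have hτab : τ ∈ Ioo a b := ⟨lt_of_le_of_lt ht₁.1 hτ12.1, lt_of_lt_of_le hτ12.2 ht₂.2⟩
    have hτm : τ ∈ Icc a b := Ioo_subset_Icc_self hτab
    have hd1 : HasDerivAt r₁ (r₁' τ) τ := (h1.2.1 τ hτm).hasDerivAt (Icc_mem_nhds hτab.1 hτab.2)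
    have hd2 : HasDerivAt r₂ (r₂' τ) τ := (h2.2.1 τ hτm).hasDerivAt (Icc_mem_nhds hτab.1 hτab.2)
    have heqev : r₂ =ᶠ[nhds τ] r₁ := by
      filter_upwards [Ioo_mem_nhds hτ12.1 hτ12.2] with x hx
      exact (hall x ⟨hx.1.le, hx.2.le⟩).symm
    have hd2' : HasDerivAt r₂ (r₁' τ) τ := hd1.congr_of_eventuallyEq heqev
    exact hne (keyB hδc hab h1 h2 hτm (hall τ ⟨hτ12.1.le, hτ12.2.le⟩) (hd2'.unique hd2))
  · push_neg at hall
    obtain ⟨s, hs, hsne⟩ := hall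
    have hst₁ : t₁ < s := lt_of_le_of_ne hs.1 (fun h => hsne (by rw [← h]; exact hz₁))
    have hst₂ : s < t₂ := lt_of_le_of_ne hs.2 (fun h => hsne (by rw [h]; exact hz₂))
    have hwc : ContinuousOn (fun x => r₁ x - r₂ x) (Icc a b) := hr₁c.sub hr₂c
    set S₁ : Set ℝ := Icc t₁ s ∩ (fun x => r₁ x - r₂ x) ⁻¹' {0} with hS₁def
    set S₂ : Set ℝ := Icc s t₂ ∩ (fun x => r₁ x - r₂ x) ⁻¹' {0} with hS₂def
    have hsubs₁ : Icc t₁ s ⊆ Icc a b :=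
      Icc_subset_Icc ht₁.1 (le_trans hst₂.le ht₂.2)
    have hsubs₂ : Icc s t₂ ⊆ Icc a b :=
      Icc_subset_Icc (le_trans ht₁.1 hst₁.le) ht₂.2
    have hS₁closed : IsClosed S₁ :=
      (hwc.mono hsubs₁).preimage_isClosed_of_isClosed isClosed_Icc isClosed_singleton
    have hS₂closed : IsClosed S₂ :=
      (hwc.mono hsubs₂).preimage_isClosed_of_isClosed isClosed_Icc isClosed_singleton
    have hS₁cpt : IsCompact S₁ :=
      Metric.isCompact_of_isClosed_isBounded hS₁closed
        ((Metric.isBounded_Icc t₁ s).subset inter_subset_left)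
    have hS₂cpt : IsCompact S₂ :=
      Metric.isCompact_of_isClosed_isBounded hS₂closed
        ((Metric.isBounded_Icc s t₂).subset inter_subset_left)
    have hS₁ne : S₁.Nonempty := ⟨t₁, ⟨left_mem_Icc.2 hst₁.le, by simp [hz₁]⟩⟩
    have hS₂ne : S₂.Nonempty := ⟨t₂, ⟨right_mem_Icc.2 hst₂.le, by simp [hz₂]⟩⟩
    set c := sSup S₁ with hcdef
    set d := sInf S₂ with hddef
    have hcS : c ∈ S₁ := hS₁cpt.sSup_mem hS₁ne
    have hdS : d ∈ S₂ := hS₂cpt.sInf_mem hS₂ne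
    have hczero : r₁ c = r₂ c := by
      have := hcS.2; simpa [sub_eq_zero] using this
    have hdzero : r₁ d = r₂ d := by
      have := hdS.2; simpa [sub_eq_zero] using this
    have hcs : c < s := lt_of_le_of_ne hcS.1.2 (fun h => hsne (by rw [← h]; exact hczero))
    have hsd : s < d := lt_of_le_of_ne (le_of_not_gt (fun h => hsne (by
      exact absurd hdS.1.1 (not_le.2 h)))) (fun h => hsne (by rw [h]; exact hdzero))
    have hcmem : c ∈ Icc a b := hsubs₁ hcS.1
    have hdmem : d ∈ Icc a b := hsubs₂ hdS.1
    have hcd : c < d := lt_trans hcs hsd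
    have hnz : ∀ x ∈ Ioo c d, r₁ x ≠ r₂ x := by
      intro x hx hxeq
      rcases le_total x s with hxs | hxs
      · have hxS : x ∈ S₁ := ⟨⟨le_trans hcS.1.1 hx.1.le, hxs⟩, by simp [hxeq]⟩
        exact absurd (le_csSup hS₁cpt.bddAbove hxS) (not_le.2 hx.1)
      · have hxS : x ∈ S₂ := ⟨⟨hxs, le_trans hx.2.le hdS.1.2⟩, by simp [hxeq]⟩
        exact absurd (csInf_le hS₂cpt.bddBelow hxS) (not_le.2 hx.2)
    have hsIoo : s ∈ Ioo c d := ⟨hcs, hsd⟩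
    have hIoosub : Ioo c d ⊆ Icc a b :=
      fun y hy => ⟨le_trans hcmem.1 hy.1.le, le_trans hy.2.le hdmem.2⟩
    have hIVT : ∀ x ∈ Ioo c d, ∀ y ∈ Ioo c d,
        r₁ x < r₂ x → r₂ y < r₁ y → False := by
      intro x hx y hy hxlt hylt
      have huIccsub : uIcc x y ⊆ Ioo c d := fun z hz =>
        ⟨lt_of_lt_of_le (lt_min hx.1 hy.1) hz.1, lt_of_le_of_lt hz.2 (max_lt hx.2 hy.2)⟩
      have hcont : ContinuousOn (fun z => r₁ z - r₂ z) (uIcc x y) :=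
        hwc.mono (fun z hz => hIoosub (huIccsub hz))
      have h0mem : (0:ℝ) ∈ uIcc ((fun z => r₁ z - r₂ z) x) ((fun z => r₁ z - r₂ z) y) := by
        rw [Set.mem_uIcc]
        left
        constructor <;> simp only <;> linarith
      obtain ⟨z, hz, hz0⟩ := intermediate_value_uIcc hcont h0mem
      exact hnz z (huIccsub hz) (by linarith [sub_eq_zero.1 hz0])
    rcases lt_or_gt_of_ne hsne with hlt | hgt
    · have hsign : ∀ x ∈ Ioo c d, r₁ x < r₂ x := by
        intro x hx
        rcases lt_or_gt_of_ne (hnz x hx) with h | h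
        · exact h
        · exact absurd (hIVT s hsIoo x hx hlt h) (fun h => h)
      exact keyA hδc h2 h1 hcmem hdmem hcd hczero.symm hdzero.symm hsign
    · have hsign : ∀ x ∈ Ioo c d, r₂ x < r₁ x := by
        intro x hx
        rcases lt_or_gt_of_ne (hnz x hx) with h | h
        · exact absurd (hIVT x hx s hsIoo h hgt) (fun h => h)
        · exact h
      exact keyA hδc h1 h2 hcmem hdmem hcd hczero hdzero hsign
end

section
/- Let δ : ]0,∞[ → ℝ be continuously differentiable, nonnegative and bounded. Fix T > 0 and a positive solution r* : [-T,0] → ]0,∞[ of r̈ + δ(r)ṙ = -1/r². If u : [-T,0] → ℝ solves the variational equation ü + δ'(r*(t))ṙ*(t)u + δ(r*(t))u̇ = 2u/r*(t)³ with u(-T) = u(0) = 0, then u ≡ 0. -/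
open Set

open Filter Topology

lemma maxPrinciple (a b : ℝ) (hab : a < b) (g g' g'' : ℝ → ℝ)
    (hg : ∀ t ∈ Icc a b, HasDerivWithinAt g (g' t) (Icc a b) t)
    (hg' : ∀ t ∈ Icc a b, HasDerivWithinAt g' (g'' t) (Icc a b) t)
    (hkey : ∀ t ∈ Ioo a b, g' t = 0 → 0 < g t → 0 < g'' t)
    (ha : g a = 0) (hb : g b = 0) :
    ∀ t ∈ Icc a b, g t ≤ 0 := by
  have hgc : ContinuousOn g (Icc a b) := fun t ht => (hg t ht).continuousWithinAt
  obtain ⟨t₀, ht₀, hmax⟩ := isCompact_Icc.exists_isMaxOn ⟨a, left_mem_Icc.mpr hab.le⟩ hgc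
  suffices h : g t₀ ≤ 0 by intro t ht; exact (hmax ht).trans h
  by_contra h; push_neg at h
  have ht₀ab : t₀ ∈ Ioo a b := by
    refine ⟨lt_of_le_of_ne ht₀.1 ?_, lt_of_le_of_ne ht₀.2 ?_⟩
    · rintro rfl; rw [ha] at h; exact lt_irrefl 0 h
    · rintro rfl; rw [hb] at h; exact lt_irrefl 0 h
  have hnhds : Icc a b ∈ 𝓝 t₀ := Icc_mem_nhds ht₀ab.1 ht₀ab.2
  have hgd : HasDerivAt g (g' t₀) t₀ := (hg t₀ ht₀).hasDerivAt hnhds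
  have hg'd : HasDerivAt g' (g'' t₀) t₀ := (hg' t₀ ht₀).hasDerivAt hnhds
  have hz : g' t₀ = 0 := (hmax.isLocalMax hnhds).hasDerivAt_eq_zero hgd
  have hpos'' : 0 < g'' t₀ := hkey t₀ ht₀ab hz h
  have hev : ∀ᶠ t in 𝓝[≠] t₀, 0 < slope g' t₀ t :=
    (hasDerivAt_iff_tendsto_slope.mp hg'd).eventually (eventually_gt_nhds hpos'')
  have hev' : ∀ᶠ t in 𝓝[>] t₀, 0 < slope g' t₀ t :=
    hev.filter_mono (nhdsWithin_mono _ fun x hx => ne_of_gt hx)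
  obtain ⟨c, hc, hsub⟩ := mem_nhdsGT_iff_exists_Ioo_subset.mp hev'
  set t₁ := (t₀ + min c b) / 2 with ht₁def
  have hmcb : t₀ < min c b := lt_min hc ht₀ab.2
  have h1 : t₀ < t₁ := by rw [ht₁def]; linarith
  have h2 : t₁ < min c b := by rw [ht₁def]; linarith
  have ht₁b : t₁ < b := h2.trans_le (min_le_right _ _)
  have ht₁c : t₁ < c := h2.trans_le (min_le_left _ _)
  have ht₁S : t₁ ∈ Icc a b := ⟨(ht₀ab.1.trans h1).le, ht₁b.le⟩
  have hg'pos : ∀ x ∈ Ioo t₀ t₁, 0 < g' x := by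
    intro x hx
    have hs := hsub ⟨hx.1, hx.2.trans ht₁c⟩
    have hxt : 0 < x - t₀ := by linarith [hx.1]
    have : g' x = slope g' t₀ x * (x - t₀) := by
      rw [slope_def_field, hz, sub_zero, div_mul_cancel₀ _ (ne_of_gt hxt)]
    rw [this]; exact mul_pos hs hxt
  have hcont : ContinuousOn g (Icc t₀ t₁) :=
    hgc.mono (Icc_subset_Icc ht₀.1 ht₁b.le)
  have hderiv : ∀ x ∈ Ioo t₀ t₁, HasDerivAt g (g' x) x := by
    intro x hx
    have hxS : x ∈ Icc a b := ⟨(ht₀ab.1.trans hx.1).le, (hx.2.trans ht₁b).le⟩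
    exact (hg x hxS).hasDerivAt (Icc_mem_nhds (ht₀ab.1.trans hx.1) (hx.2.trans ht₁b))
  obtain ⟨ξ, hξ, hslope⟩ := exists_hasDerivAt_eq_slope g g' h1 hcont hderiv
  have hξpos : 0 < g' ξ := hg'pos ξ hξ
  have : g t₀ < g t₁ := by
    rw [hslope] at hξpos
    have := mul_pos hξpos (show (0:ℝ) < t₁ - t₀ by linarith)
    rw [div_mul_cancel₀ _ (ne_of_gt (by linarith : (0:ℝ) < t₁ - t₀))] at this
    linarith
  exact absurd (hmax ht₁S) (not_le.mpr this)

/-- Any solution of the variational equation along a solution `r*` of the 1D damped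
Kepler equation, with homogeneous Dirichlet conditions `u(-T) = u(0) = 0`, vanishes
identically. -/
theorem stmt6 (δ δ' : ℝ → ℝ)
    (hδd : ∀ r > (0 : ℝ), HasDerivAt δ (δ' r) r) (hδ'c : ContinuousOn δ' (Ioi 0))
    (hδ0 : ∀ r > (0 : ℝ), 0 ≤ δ r) (Dstar : ℝ) (hδb : ∀ r > (0 : ℝ), δ r ≤ Dstar)
    (T : ℝ) (hT : 0 < T)
    (rs rs' : ℝ → ℝ) (hrs : Kepler1DOn δ (Icc (-T) 0) rs rs')
    (u u' : ℝ → ℝ)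
    (hu : ∀ t ∈ Icc (-T) 0, HasDerivWithinAt u (u' t) (Icc (-T) 0) t)
    (hu' : ∀ t ∈ Icc (-T) 0, HasDerivWithinAt u'
      (-(δ' (rs t)) * rs' t * u t - δ (rs t) * u' t + 2 * u t / (rs t) ^ 3)
      (Icc (-T) 0) t)
    (hbcA : u (-T) = 0) (hbcB : u 0 = 0) :
    ∀ t ∈ Icc (-T) 0, u t = 0 := by
  obtain ⟨hpos, hr, hr'⟩ := hrs
  set S := Icc (-T) (0:ℝ) with hSdef
  have hab : -T < 0 := by linarith
  have hrc : ContinuousOn rs S := fun t ht => (hr t ht).continuousWithinAt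
  -- clamp
  set cl : ℝ → ℝ := fun t => max (-T) (min 0 t) with hcl
  have hclmem : ∀ t, cl t ∈ S := by
    intro t
    exact ⟨le_max_left _ _, max_le hab.le (min_le_left _ _)⟩
  have hclid : ∀ t ∈ S, cl t = t := by
    intro t ht
    simp only [hcl]
    rw [min_eq_right ht.2, max_eq_right ht.1]
  have hclcont : Continuous cl := continuous_const.max (continuous_const.min continuous_id)
  set ρ : ℝ → ℝ := fun t => rs (cl t) with hρ
  have hρcont : Continuous ρ := by
    rw [← continuousOn_univ]
    exact hrc.comp hclcont.continuousOn fun t _ => hclmem t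
  have hρpos : ∀ t, 0 < ρ t := fun t => hpos _ (hclmem t)
  have hδc : ContinuousOn δ (Ioi 0) :=
    fun r hr => (hδd r hr).continuousAt.continuousWithinAt
  set f : ℝ → ℝ := fun t => δ (ρ t) with hf
  have hfcont : Continuous f := by
    rw [← continuousOn_univ]
    exact hδc.comp hρcont.continuousOn fun t _ => hρpos t
  have hfeq : ∀ t ∈ S, f t = δ (rs t) := fun t ht => by
    simp only [hf, hρ, hclid t ht]
  set E : ℝ → ℝ := fun t => ∫ s in (-T)..t, f s with hE
  have hEd : ∀ t, HasDerivAt E (f t) t := fun t =>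
    (hfcont.integral_hasStrictDerivAt (-T) t).hasDerivAt
  -- g and its derivatives
  set g : ℝ → ℝ := fun t => Real.exp (E t) * u t with hg
  set G' : ℝ → ℝ := fun t => Real.exp (E t) * (u' t + f t * u t) with hG'
  set G'' : ℝ → ℝ := fun t => f t * G' t + (2 / (ρ t) ^ 3) * g t with hG''
  have hexp : ∀ t, HasDerivAt (fun s => Real.exp (E s)) (Real.exp (E t) * f t) t := by
    intro t
    exact (hEd t).exp
  have hgd : ∀ t ∈ S, HasDerivWithinAt g (G' t) S t := by
    intro t ht
    have := ((hexp t).hasDerivWithinAt (s := S)).fun_mul (hu t ht)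
    refine this.congr_deriv ?_
    simp only [hG']
    ring
  -- derivative of f within S
  have hfd : ∀ t ∈ S, HasDerivWithinAt f (δ' (rs t) * rs' t) S t := by
    intro t ht
    have h1 : HasDerivWithinAt (fun s => δ (rs s)) (δ' (rs t) * rs' t) S t :=
      (hδd (rs t) (hpos t ht)).comp_hasDerivWithinAt t (hr t ht)
    exact h1.congr (fun s hs => (hfeq s hs).symm ▸ rfl) ((hfeq t ht).symm ▸ rfl)
  have hgd' : ∀ t ∈ S, HasDerivWithinAt G' (G'' t) S t := by
    intro t ht
    have hw : HasDerivWithinAt (fun s => u' s + f s * u s)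
        ((-(δ' (rs t)) * rs' t * u t - δ (rs t) * u' t + 2 * u t / (rs t) ^ 3)
          + (δ' (rs t) * rs' t * u t + f t * u' t)) S t :=
      (hu' t ht).add ((hfd t ht).mul (hu t ht))
    have := ((hexp t).hasDerivWithinAt (s := S)).fun_mul hw
    refine this.congr_deriv ?_
    simp only [hG'', hG', hg]
    rw [hfeq t ht]
    have hρt : ρ t = rs t := by simp only [hρ, hclid t ht]
    rw [hρt]
    have hrs0 : rs t ≠ 0 := ne_of_gt (hpos t ht)
    field_simp
    ring
  -- boundary values of g
  have hga : g (-T) = 0 := by simp [hg, hbcA]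
  have hgb : g 0 = 0 := by simp [hg, hbcB]
  -- apply maximum principle to g and -g
  have hkey1 : ∀ t ∈ Ioo (-T) 0, G' t = 0 → 0 < g t → 0 < G'' t := by
    intro t ht h0 hgt
    simp only [hG'', h0, mul_zero, zero_add]
    have := hρpos t
    exact mul_pos (by positivity) hgt
  have hkey2 : ∀ t ∈ Ioo (-T) 0, -G' t = 0 → 0 < -g t → 0 < -G'' t := by
    intro t ht h0 hgt
    have h0' : G' t = 0 := by linarith
    simp only [hG'', h0', mul_zero, zero_add]
    have : g t < 0 := by linarith
    have hρ0 := hρpos t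
    have h2 : (0:ℝ) < 2 / (ρ t) ^ 3 := by positivity
    nlinarith
  have hle := maxPrinciple (-T) 0 hab g G' G'' hgd hgd' hkey1 hga hgb
  have hge := maxPrinciple (-T) 0 hab (fun t => -g t) (fun t => -G' t) (fun t => -G'' t)
    (fun t ht => (hgd t ht).neg) (fun t ht => (hgd' t ht).neg) hkey2
    (by simp [hga]) (by simp [hgb])
  intro t ht
  have h1 := hle t ht
  have h2 : -g t ≤ 0 := hge t ht
  have hg0 : g t = 0 := le_antisymm h1 (by linarith)
  have := Real.exp_pos (E t)
  simp only [hg] at hg0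
  rcases mul_eq_zero.mp hg0 with h | h
  · exact absurd h (ne_of_gt this)
  · exact h
end

section
/- Let D : ℝ²\{0} → ℝ be continuously differentiable, nonnegative and bounded, and let x* : [-T,0] → ℝ²\{0} be a rectilinear solution of ẍ + D(x)ẋ = -x/|x|³, i.e. x*(t) = r*(t)w₀ with |w₀| = 1 and r*(t) > 0. Then x* is nondegenerate: every solution w : [-T,0] → ℝ² of the variational equation ẅ + ⟨∇D(x*(t)),w⟩ẋ*(t) + D(x*(t))ẇ = -w/|x*(t)|³ + 3⟨x*(t),w⟩x*(t)/|x*(t)|⁵ with w(-T) = w(0) = 0 is identically zero. -/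
open Set

/-- The Euclidean inner product on `ℝ² ≡ ℂ`. -/
def rin (a b : ℂ) : ℝ := a.re * b.re + a.im * b.im

section Helpers
open Filter Topology

lemma rin_comm (a b : ℂ) : rin a b = rin b a := by simp [rin]; ring

lemma rin_add_left (a b c : ℂ) : rin (a + b) c = rin a c + rin b c := by simp [rin]; ring

lemma rin_sub_left (a b c : ℂ) : rin (a - b) c = rin a c - rin b c := by simp [rin]; ring

lemma rin_neg_left (a c : ℂ) : rin (-a) c = -(rin a c) := by simp [rin]; ring

lemma rin_smul_left (s : ℝ) (a c : ℂ) : rin (s • a) c = s * rin a c := by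
  simp [rin, Complex.smul_re, Complex.smul_im]; ring

lemma rin_zero_left (c : ℂ) : rin 0 c = 0 := by simp [rin]

lemma rin_self {w₀ : ℂ} (hw₀ : ‖w₀‖ = 1) : rin w₀ w₀ = 1 := by
  have := Complex.sq_norm w₀
  have h2 : ‖w₀‖ = 1 := hw₀
  rw [h2] at this
  simpa [rin, Complex.normSq_apply, sq] using this.symm

lemma rin_I_self (w₀ : ℂ) : rin w₀ (Complex.I * w₀) = 0 := by
  simp [rin]; ring

lemma rin_I_I {w₀ : ℂ} (hw₀ : ‖w₀‖ = 1) : rin (Complex.I * w₀) (Complex.I * w₀) = 1 := by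
  have := rin_self hw₀
  simp [rin] at this ⊢
  linarith

lemma rin_decomp {w₀ : ℂ} (hw₀ : ‖w₀‖ = 1) (z : ℂ) :
    z = rin z w₀ • w₀ + rin z (Complex.I * w₀) • (Complex.I * w₀) := by
  have h := rin_self hw₀
  simp only [rin] at h
  apply Complex.ext
  · simp only [rin, Complex.add_re, Complex.smul_re, Complex.mul_re, Complex.mul_im,
      Complex.I_re, Complex.I_im, smul_eq_mul]
    linear_combination (-z.re) * h
  · simp only [rin, Complex.add_im, Complex.smul_im, Complex.mul_im, Complex.mul_re,
      Complex.I_re, Complex.I_im, smul_eq_mul]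
    linear_combination (-z.im) * h

lemma HasDerivWithinAt.rin_const {f : ℝ → ℂ} {f' : ℂ} {s : Set ℝ} {t : ℝ} (c : ℂ)
    (hf : HasDerivWithinAt f f' s t) :
    HasDerivWithinAt (fun u => rin (f u) c) (rin f' c) s t := by
  have h1 : HasDerivWithinAt (fun u => (f u).re) f'.re s t :=
    Complex.reCLM.hasFDerivAt.comp_hasDerivWithinAt t hf
  have h2 : HasDerivWithinAt (fun u => (f u).im) f'.im s t :=
    Complex.imCLM.hasFDerivAt.comp_hasDerivWithinAt t hf
  exact (h1.mul_const c.re).add (h2.mul_const c.im)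
variable {f : ℝ → ℝ} {p q t₀ : ℝ}

lemma lemA (hcont : ContinuousOn f (Icc p q)) (ht₀ : t₀ ∈ Icc p q)
    (hfp : f p = 0) (hfq : f q = 0) (hpos : 0 < f t₀) :
    ∃ t₁ t₂, p ≤ t₁ ∧ t₁ < t₂ ∧ t₂ ≤ q ∧ f t₁ = 0 ∧ f t₂ = 0 ∧
      ∀ t ∈ Ioo t₁ t₂, 0 < f t := by
  have hpt₀ : p < t₀ := lt_of_le_of_ne ht₀.1 (by rintro rfl; rw [hfp] at hpos; exact lt_irrefl _ hpos)
  have ht₀q : t₀ < q := lt_of_le_of_ne ht₀.2 (by rintro rfl; rw [hfq] at hpos; exact lt_irrefl _ hpos)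
  -- left zero
  set S₁ : Set ℝ := Icc p t₀ ∩ f ⁻¹' Iic 0 with hS₁def
  have hS₁closed : IsClosed S₁ :=
    (hcont.mono (Icc_subset_Icc_right ht₀.2)).preimage_isClosed_of_isClosed isClosed_Icc isClosed_Iic
  have hS₁ne : S₁.Nonempty := ⟨p, ⟨le_refl _, hpt₀.le⟩, by simp [hfp]⟩
  have hS₁bdd : BddAbove S₁ := bddAbove_Icc.mono inter_subset_left
  set t₁ := sSup S₁ with ht₁def
  have ht₁mem : t₁ ∈ S₁ := hS₁closed.csSup_mem hS₁ne hS₁bdd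
  have ht₁Icc : t₁ ∈ Icc p t₀ := ht₁mem.1
  have ht₁le : f t₁ ≤ 0 := ht₁mem.2
  have ht₁lt : t₁ < t₀ := lt_of_le_of_ne ht₁Icc.2
    (fun h => absurd hpos (not_lt.2 (h ▸ ht₁le)))
  have hpos₁ : ∀ t ∈ Ioc t₁ t₀, 0 < f t := by
    intro t ht
    by_contra hle
    push_neg at hle
    have : t ∈ S₁ := ⟨⟨ht₁Icc.1.trans ht.1.le, ht.2⟩, hle⟩
    exact absurd (le_csSup hS₁bdd this) (not_le.2 ht.1)
  have ht₁zero : f t₁ = 0 := by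
    refine le_antisymm ht₁le ?_
    have hc : ContinuousWithinAt f (Ioc t₁ t₀) t₁ :=
      (hcont.continuousWithinAt ⟨ht₁Icc.1, ht₁Icc.2.trans ht₀.2⟩).mono
        fun x hx => ⟨ht₁Icc.1.trans hx.1.le, hx.2.trans ht₀.2⟩
    have hneb : (𝓝[Ioc t₁ t₀] t₁).NeBot := by
      rw [← mem_closure_iff_nhdsWithin_neBot, closure_Ioc ht₁lt.ne]
      exact ⟨le_refl _, ht₁lt.le⟩
    refine ge_of_tendsto hc ?_
    filter_upwards [self_mem_nhdsWithin] with t ht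
    exact (hpos₁ t ht).le
  -- right zero
  set S₂ : Set ℝ := Icc t₀ q ∩ f ⁻¹' Iic 0 with hS₂def
  have hS₂closed : IsClosed S₂ :=
    (hcont.mono (Icc_subset_Icc_left ht₀.1)).preimage_isClosed_of_isClosed isClosed_Icc isClosed_Iic
  have hS₂ne : S₂.Nonempty := ⟨q, ⟨ht₀q.le, le_refl _⟩, by simp [hfq]⟩
  have hS₂bdd : BddBelow S₂ := bddBelow_Icc.mono inter_subset_left
  set t₂ := sInf S₂ with ht₂def
  have ht₂mem : t₂ ∈ S₂ := hS₂closed.csInf_mem hS₂ne hS₂bdd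
  have ht₂Icc : t₂ ∈ Icc t₀ q := ht₂mem.1
  have ht₂le : f t₂ ≤ 0 := ht₂mem.2
  have ht₂gt : t₀ < t₂ := lt_of_le_of_ne ht₂Icc.1
    (fun h => absurd hpos (not_lt.2 (h.symm ▸ ht₂le)))
  have hpos₂ : ∀ t ∈ Ico t₀ t₂, 0 < f t := by
    intro t ht
    by_contra hle
    push_neg at hle
    have : t ∈ S₂ := ⟨⟨ht.1, ht.2.le.trans ht₂Icc.2⟩, hle⟩
    exact absurd (csInf_le hS₂bdd this) (not_le.2 ht.2)
  have ht₂zero : f t₂ = 0 := by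
    refine le_antisymm ht₂le ?_
    have hc : ContinuousWithinAt f (Ico t₀ t₂) t₂ :=
      (hcont.continuousWithinAt ⟨ht₀.1.trans ht₂Icc.1, ht₂Icc.2⟩).mono
        fun x hx => ⟨ht₀.1.trans hx.1, hx.2.le.trans ht₂Icc.2⟩
    have hneb : (𝓝[Ico t₀ t₂] t₂).NeBot := by
      rw [← mem_closure_iff_nhdsWithin_neBot, closure_Ico ht₂gt.ne]
      exact ⟨ht₂gt.le, le_refl _⟩
    refine ge_of_tendsto hc ?_
    filter_upwards [self_mem_nhdsWithin] with t ht
    exact (hpos₂ t ht).le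
  refine ⟨t₁, t₂, ht₁Icc.1, ht₁lt.trans ht₂gt, ht₂Icc.2, ht₁zero, ht₂zero, ?_⟩
  intro t ht
  rcases le_or_gt t t₀ with h | h
  · exact hpos₁ t ⟨ht.1, h⟩
  · exact hpos₂ t ⟨h.le, ht.2⟩

lemma lemT {p q : ℝ} {y v δ m : ℝ → ℝ}
    (hy : ∀ t ∈ Icc p q, HasDerivWithinAt y (v t) (Icc p q) t)
    (hvc : ContinuousOn v (Icc p q)) (hδc : ContinuousOn δ (Icc p q))
    (hu : ∀ t ∈ Ioo p q, HasDerivAt (fun s => v s + δ s * y s) (m t) t)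
    (hm : ∀ t ∈ Ioo p q, 0 < y t → 0 < m t)
    (hyp : y p = 0) (hyq : y q = 0) :
    ∀ t₀ ∈ Icc p q, y t₀ ≤ 0 := by
  intro t₀ ht₀
  by_contra hpos
  push_neg at hpos
  have hyc : ContinuousOn y (Icc p q) := fun t ht => (hy t ht).continuousWithinAt
  obtain ⟨t₁, t₂, hpt₁, h12, ht₂q, hy₁, hy₂, hIoo⟩ := lemA hyc ht₀ hyp hyq hpos
  have hIccsub : Icc t₁ t₂ ⊆ Icc p q := Icc_subset_Icc hpt₁ ht₂q
  have hsub : Ioo t₁ t₂ ⊆ Ioo p q := Ioo_subset_Ioo hpt₁ ht₂q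
  have hsub' : Ioo t₁ t₂ ⊆ Icc p q := fun x hx => Ioo_subset_Icc_self.trans hIccsub hx
  set u : ℝ → ℝ := fun s => v s + δ s * y s with hu_def
  have hucont : ContinuousOn u (Icc t₁ t₂) := (hvc.add (hδc.mul hyc)).mono hIccsub
  have hmono : StrictMonoOn u (Icc t₁ t₂) := by
    apply strictMonoOn_of_deriv_pos (convex_Icc _ _) hucont
    intro x hx
    rw [interior_Icc] at hx
    rw [(hu x (hsub hx)).deriv]
    exact hm x (hsub hx) (hIoo x hx)
  have ht₁Icc : t₁ ∈ Icc p q := ⟨hpt₁, h12.le.trans ht₂q⟩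
  have ht₂Icc : t₂ ∈ Icc p q := ⟨hpt₁.trans h12.le, ht₂q⟩
  have hv₁ : 0 ≤ v t₁ := by
    have hd2 : HasDerivWithinAt y (v t₁) (Ioo t₁ t₂) t₁ := (hy t₁ ht₁Icc).mono hsub'
    rw [hasDerivWithinAt_iff_tendsto_slope,
      diff_singleton_eq_self (fun h => lt_irrefl t₁ h.1)] at hd2
    have hneb : (𝓝[Ioo t₁ t₂] t₁).NeBot := by
      rw [← mem_closure_iff_nhdsWithin_neBot, closure_Ioo h12.ne]
      exact ⟨le_refl _, h12.le⟩
    refine ge_of_tendsto hd2 ?_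
    filter_upwards [self_mem_nhdsWithin] with t ht
    rw [slope_def_field, hy₁, sub_zero]
    exact div_nonneg (hIoo t ht).le (by linarith [ht.1])
  have hv₂ : v t₂ ≤ 0 := by
    have hd2 : HasDerivWithinAt y (v t₂) (Ioo t₁ t₂) t₂ := (hy t₂ ht₂Icc).mono hsub'
    rw [hasDerivWithinAt_iff_tendsto_slope,
      diff_singleton_eq_self (fun h => lt_irrefl t₂ h.2)] at hd2
    have hneb : (𝓝[Ioo t₁ t₂] t₂).NeBot := by
      rw [← mem_closure_iff_nhdsWithin_neBot, closure_Ioo h12.ne]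
      exact ⟨h12.le, le_refl _⟩
    refine le_of_tendsto hd2 ?_
    filter_upwards [self_mem_nhdsWithin] with t ht
    rw [slope_def_field, hy₂, sub_zero]
    exact div_nonpos_of_nonneg_of_nonpos (hIoo t ht).le (by linarith [ht.2])
  have h1 : u t₁ < u t₂ := hmono ⟨le_refl _, h12.le⟩ ⟨h12.le, le_refl _⟩ h12
  have e1 : u t₁ = v t₁ := by simp [hu_def, hy₁]
  have e2 : u t₂ = v t₂ := by simp [hu_def, hy₂]
  rw [e1, e2] at h1
  linarith

lemma lemN {p q : ℝ} {y v r r' δ : ℝ → ℝ}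
    (hy : ∀ t ∈ Icc p q, HasDerivWithinAt y (v t) (Icc p q) t)
    (hr : ∀ t ∈ Icc p q, HasDerivWithinAt r (r' t) (Icc p q) t)
    (hrpos : ∀ t ∈ Icc p q, 0 < r t)
    (hvc : ContinuousOn v (Icc p q)) (hr'c : ContinuousOn r' (Icc p q))
    (hW : ∀ t ∈ Ioo p q, HasDerivAt (fun s => r s * v s - r' s * y s)
      (-(δ t) * (r t * v t - r' t * y t)) t)
    (hδ : ∀ t ∈ Ioo p q, 0 ≤ δ t)
    (hyp : y p = 0) (hyq : y q = 0) :
    ∀ t₀ ∈ Icc p q, y t₀ ≤ 0 := by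
  intro t₀ ht₀
  by_contra hpos
  push_neg at hpos
  have hyc : ContinuousOn y (Icc p q) := fun t ht => (hy t ht).continuousWithinAt
  have hrc : ContinuousOn r (Icc p q) := fun t ht => (hr t ht).continuousWithinAt
  obtain ⟨t₁, t₂, hpt₁, h12, ht₂q, hy₁, hy₂, hIoo⟩ := lemA hyc ht₀ hyp hyq hpos
  have hIccsub : Icc t₁ t₂ ⊆ Icc p q := Icc_subset_Icc hpt₁ ht₂q
  have hsub : Ioo t₁ t₂ ⊆ Ioo p q := Ioo_subset_Ioo hpt₁ ht₂q
  have hyAt : ∀ x ∈ Ioo p q, HasDerivAt y (v x) x := fun x hx =>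
    (hy x (Ioo_subset_Icc_self hx)).hasDerivAt (Icc_mem_nhds hx.1 hx.2)
  have hrAt : ∀ x ∈ Ioo p q, HasDerivAt r (r' x) x := fun x hx =>
    (hr x (Ioo_subset_Icc_self hx)).hasDerivAt (Icc_mem_nhds hx.1 hx.2)
  set φ : ℝ → ℝ := fun s => y s / r s with hφ_def
  have hφc : ContinuousOn φ (Icc t₁ t₂) :=
    (hyc.mono hIccsub).div (hrc.mono hIccsub) fun x hx => (hrpos x (hIccsub hx)).ne'
  have hφd : ∀ x ∈ Ioo t₁ t₂,
      HasDerivAt φ ((v x * r x - y x * r' x) / r x ^ 2) x := fun x hx =>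
    (hyAt x (hsub hx)).div (hrAt x (hsub hx)) (hrpos x (hIccsub (Ioo_subset_Icc_self hx))).ne'
  have hI : φ t₁ = φ t₂ := by simp [hφ_def, hy₁, hy₂]
  obtain ⟨s, hs, hφ's⟩ := exists_hasDerivAt_eq_zero h12 hφc hI hφd
  set W : ℝ → ℝ := fun t => r t * v t - r' t * y t with hW_def
  have hWs : W s = 0 := by
    have hrs : r s ^ 2 ≠ 0 := pow_ne_zero _ (hrpos s (hIccsub (Ioo_subset_Icc_self hs))).ne'
    have := (div_eq_zero_iff.1 hφ's).resolve_right hrs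
    simp only [hW_def]
    linarith [this]
  have hWc : ContinuousOn W (Icc p q) := (hrc.mul hvc).sub (hr'c.mul hyc)
  set Z : ℝ → ℝ := fun t => W t ^ 2 with hZ_def
  have hssub : Ioo s t₂ ⊆ Ioo p q := Ioo_subset_Ioo (hpt₁.trans hs.1.le) ht₂q
  have hZd : ∀ x ∈ Ioo s t₂, HasDerivAt Z (2 * W x ^ 1 * (-(δ x) * W x)) x := fun x hx => by
    exact ((hW x (hssub hx)).fun_pow 2).congr_deriv (by rw [show (2:ℕ) - 1 = 1 from rfl, Nat.cast_ofNat])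
  have hZanti : AntitoneOn Z (Icc s t₂) := by
    apply antitoneOn_of_deriv_nonpos (convex_Icc _ _)
    · exact ((hWc.mono (Icc_subset_Icc (hpt₁.trans hs.1.le) ht₂q)).pow 2)
    · intro x hx
      rw [interior_Icc] at hx
      exact (hZd x hx).differentiableAt.differentiableWithinAt
    · intro x hx
      rw [interior_Icc] at hx
      rw [(hZd x hx).deriv]
      nlinarith [sq_nonneg (W x), hδ x (hssub hx)]
  have hWzero : ∀ x ∈ Icc s t₂, W x = 0 := by
    intro x hx
    have h1 : Z x ≤ Z s := hZanti ⟨le_refl _, hs.2.le⟩ hx hx.1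
    have h2 : Z s = 0 := by simp [hZ_def, hWs]
    have h3 : 0 ≤ Z x := sq_nonneg _
    have : Z x = 0 := le_antisymm (h2 ▸ h1) h3
    exact pow_eq_zero_iff (two_ne_zero) |>.1 this
  have hφ0 : ∀ x ∈ Ioo s t₂, HasDerivAt φ 0 x := by
    intro x hx
    have hx' : x ∈ Ioo t₁ t₂ := ⟨hs.1.trans hx.1, hx.2⟩
    have := hφd x hx'
    have hnum : v x * r x - y x * r' x = 0 := by
      have := hWzero x (Ioo_subset_Icc_self hx)
      simp only [hW_def] at this
      linarith
    rwa [hnum, zero_div] at this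
  have hφconst : φ s = φ t₂ := by
    have hc : ContinuousOn φ (Icc s t₂) := hφc.mono (Icc_subset_Icc hs.1.le (le_refl _))
    have hd : ∀ x ∈ interior (Icc s t₂), DifferentiableAt ℝ φ x := by
      intro x hx; rw [interior_Icc] at hx; exact (hφ0 x hx).differentiableAt
    have h1 : MonotoneOn φ (Icc s t₂) := by
      apply monotoneOn_of_deriv_nonneg (convex_Icc _ _) hc
        (fun x hx => (hd x hx).differentiableWithinAt)
      intro x hx
      rw [interior_Icc] at hx
      rw [(hφ0 x hx).deriv]
    have h2 : AntitoneOn φ (Icc s t₂) := by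
      apply antitoneOn_of_deriv_nonpos (convex_Icc _ _) hc
        (fun x hx => (hd x hx).differentiableWithinAt)
      intro x hx
      rw [interior_Icc] at hx
      rw [(hφ0 x hx).deriv]
    exact le_antisymm (h1 ⟨le_refl _, hs.2.le⟩ ⟨hs.2.le, le_refl _⟩ hs.2.le)
      (h2 ⟨le_refl _, hs.2.le⟩ ⟨hs.2.le, le_refl _⟩ hs.2.le)
  have hφt₂ : φ t₂ = 0 := by simp [hφ_def, hy₂]
  have hys : y s = 0 := by
    have hrs : r s ≠ 0 := (hrpos s (hIccsub (Ioo_subset_Icc_self hs))).ne'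
    have h0 : φ s = 0 := hφconst.trans hφt₂
    simp only [hφ_def] at h0
    exact (div_eq_zero_iff.1 h0).resolve_right hrs
  linarith [hIoo s hs]

end Helpers


/-- Every rectilinear solution `x*(t) = r*(t)w₀` of the damped Kepler equation is
nondegenerate: solutions of the variational equation along `x*` with homogeneous
Dirichlet boundary conditions vanish identically. Here `gD` is the gradient of `D`. -/
theorem stmt8 (D : ℂ → ℝ) (gD : ℂ → ℂ)
    (hgD : ∀ z : ℂ, z ≠ 0 → ∀ v : ℂ,
      HasDerivAt (fun h : ℝ => D (z + h • v)) (rin (gD z) v) 0)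
    (hgDc : ContinuousOn gD {z : ℂ | z ≠ 0})
    (hD0 : ∀ z : ℂ, z ≠ 0 → 0 ≤ D z) (Dstar : ℝ) (hDb : ∀ z : ℂ, z ≠ 0 → D z ≤ Dstar)
    (T : ℝ) (hT : 0 < T)
    (xs xs' : ℝ → ℂ) (hsol : KeplerSolOn D (Icc (-T) 0) xs xs')
    (w₀ : ℂ) (hw₀ : ‖w₀‖ = 1) (rs : ℝ → ℝ)
    (hrect : ∀ t ∈ Icc (-T) 0, xs t = rs t • w₀ ∧ 0 < rs t)
    (w w' : ℝ → ℂ)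
    (hw : ∀ t ∈ Icc (-T) 0, HasDerivWithinAt w (w' t) (Icc (-T) 0) t)
    (hw' : ∀ t ∈ Icc (-T) 0, HasDerivWithinAt w'
      (-(rin (gD (xs t)) (w t)) • xs' t - (D (xs t)) • w' t
        - (‖xs t‖ ^ 3)⁻¹ • w t + (3 * rin (xs t) (w t) / ‖xs t‖ ^ 5) • xs t)
      (Icc (-T) 0) t)
    (hbcA : w (-T) = 0) (hbcB : w 0 = 0) :
    ∀ t ∈ Icc (-T) 0, w t = 0 := by
  obtain ⟨hxs0, hxs, hxs'⟩ := hsol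
  have hTlt : (-T : ℝ) < 0 := by linarith
  have hUD : UniqueDiffOn ℝ (Icc (-T) (0:ℝ)) := uniqueDiffOn_Icc hTlt
  set a : ℝ → ℝ := fun t => rin (w t) w₀ with ha_def
  set a' : ℝ → ℝ := fun t => rin (w' t) w₀ with ha'_def
  set b : ℝ → ℝ := fun t => rin (w t) (Complex.I * w₀) with hb_def
  set b' : ℝ → ℝ := fun t => rin (w' t) (Complex.I * w₀) with hb'_def
  set ρ' : ℝ → ℝ := fun t => rin (xs' t) w₀ with hρ'_def
  set δ : ℝ → ℝ := fun t => D (xs t) with hδ_def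
  set g₁ : ℝ → ℝ := fun t => rin (gD (xs t)) w₀ with hg₁_def
  have hrs_pos : ∀ t ∈ Icc (-T) (0:ℝ), 0 < rs t := fun t ht => (hrect t ht).2
  have hnorm : ∀ t ∈ Icc (-T) (0:ℝ), ‖xs t‖ = rs t := by
    intro t ht
    rw [(hrect t ht).1, norm_smul, hw₀, mul_one, Real.norm_eq_abs,
      abs_of_pos (hrs_pos t ht)]
  have hrs_eq : ∀ t ∈ Icc (-T) (0:ℝ), rs t = rin (xs t) w₀ := by
    intro t ht
    rw [(hrect t ht).1, rin_smul_left, rin_self hw₀, mul_one]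
  have hxsI : ∀ t ∈ Icc (-T) (0:ℝ), rin (xs t) (Complex.I * w₀) = 0 := by
    intro t ht
    rw [(hrect t ht).1, rin_smul_left, rin_I_self, mul_zero]
  -- derivative of rs
  have hrsd : ∀ t ∈ Icc (-T) (0:ℝ), HasDerivWithinAt rs (ρ' t) (Icc (-T) 0) t := by
    intro t ht
    exact ((hxs t ht).rin_const w₀).congr (fun y hy => hrs_eq y hy) (hrs_eq t ht)
  -- xs' is tangential
  have hxs'_eq : ∀ t ∈ Icc (-T) (0:ℝ), xs' t = ρ' t • w₀ := by
    intro t ht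
    have h1 : HasDerivWithinAt (fun u => rs u • w₀) (ρ' t • w₀) (Icc (-T) 0) t :=
      (hrsd t ht).smul_const w₀
    have h2 : HasDerivWithinAt xs (ρ' t • w₀) (Icc (-T) 0) t :=
      h1.congr (fun y hy => (hrect y hy).1) (hrect t ht).1
    exact (hUD t ht).eq_deriv _ (hxs t ht) h2
  have hxs'I : ∀ t ∈ Icc (-T) (0:ℝ), rin (xs' t) (Complex.I * w₀) = 0 := by
    intro t ht
    rw [hxs'_eq t ht, rin_smul_left, rin_I_self, mul_zero]
  have hxs'w₀ : ∀ t ∈ Icc (-T) (0:ℝ), rin (xs' t) w₀ = ρ' t := fun t ht => rfl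
  -- second derivative of rs
  have hρ'd : ∀ t ∈ Icc (-T) (0:ℝ),
      HasDerivWithinAt ρ' (-(δ t) * ρ' t - (rs t ^ 2)⁻¹) (Icc (-T) 0) t := by
    intro t ht
    have h := (hxs' t ht).rin_const w₀
    have he : rin (-(D (xs t)) • xs' t - (‖xs t‖ ^ 3)⁻¹ • xs t) w₀
        = -(δ t) * ρ' t - (rs t ^ 2)⁻¹ := by
      rw [rin_sub_left, rin_smul_left, rin_smul_left, ← hrs_eq t ht, hnorm t ht]
      have h0 : rs t ≠ 0 := (hrs_pos t ht).ne'
      field_simp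
      ring
    rw [he] at h
    exact h.congr (fun y hy => rfl) rfl
  -- derivative of δ
  have hδd : ∀ t ∈ Icc (-T) (0:ℝ),
      HasDerivWithinAt δ (g₁ t * ρ' t) (Icc (-T) 0) t := by
    intro t ht
    have hne := hxs0 t ht
    have hφ : HasDerivAt (fun h : ℝ => D (xs t + h • w₀)) (g₁ t) 0 := hgD _ hne w₀
    have hφ' : HasDerivAt (fun h : ℝ => D (xs t + h • w₀)) (g₁ t) (rs t - rs t) := by
      simpa using hφ
    have hψ : HasDerivWithinAt (fun s => rs s - rs t) (ρ' t) (Icc (-T) 0) t :=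
      (hrsd t ht).sub_const _
    have hcomp := hφ'.comp_hasDerivWithinAt t hψ
    refine hcomp.congr (fun y hy => ?_) ?_
    · show D (xs y) = D (xs t + (rs y - rs t) • w₀)
      rw [(hrect t ht).1, (hrect y hy).1, sub_smul, add_sub_cancel]
    · show D (xs t) = D (xs t + (rs t - rs t) • w₀)
      simp
  -- first derivatives of a and b
  have had : ∀ t ∈ Icc (-T) (0:ℝ), HasDerivWithinAt a (a' t) (Icc (-T) 0) t :=
    fun t ht => (hw t ht).rin_const w₀
  have hbd : ∀ t ∈ Icc (-T) (0:ℝ), HasDerivWithinAt b (b' t) (Icc (-T) 0) t :=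
    fun t ht => (hw t ht).rin_const (Complex.I * w₀)
  -- second derivatives
  have hxsw : ∀ t ∈ Icc (-T) (0:ℝ), rin (xs t) (w t) = rs t * a t := by
    intro t ht
    rw [(hrect t ht).1, rin_smul_left, rin_comm]
  have hb'd : ∀ t ∈ Icc (-T) (0:ℝ),
      HasDerivWithinAt b' (-(δ t) * b' t - (rs t ^ 3)⁻¹ * b t) (Icc (-T) 0) t := by
    intro t ht
    have h := (hw' t ht).rin_const (Complex.I * w₀)
    have he : rin (-(rin (gD (xs t)) (w t)) • xs' t - (D (xs t)) • w' t
        - (‖xs t‖ ^ 3)⁻¹ • w t + (3 * rin (xs t) (w t) / ‖xs t‖ ^ 5) • xs t)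
        (Complex.I * w₀) = -(δ t) * b' t - (rs t ^ 3)⁻¹ * b t := by
      rw [rin_add_left, rin_sub_left, rin_sub_left, rin_smul_left, rin_smul_left,
        rin_smul_left, rin_smul_left, hxs'I t ht, hxsI t ht, hnorm t ht]
      ring
    rw [he] at h
    exact h
  have ha'd : ∀ t ∈ Icc (-T) (0:ℝ),
      HasDerivWithinAt a' (-(rin (gD (xs t)) (w t)) * ρ' t - δ t * a' t + 2 * a t / rs t ^ 3)
        (Icc (-T) 0) t := by
    intro t ht
    have h := (hw' t ht).rin_const w₀
    have he : rin (-(rin (gD (xs t)) (w t)) • xs' t - (D (xs t)) • w' t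
        - (‖xs t‖ ^ 3)⁻¹ • w t + (3 * rin (xs t) (w t) / ‖xs t‖ ^ 5) • xs t)
        w₀ = -(rin (gD (xs t)) (w t)) * ρ' t - δ t * a' t + 2 * a t / rs t ^ 3 := by
      rw [rin_add_left, rin_sub_left, rin_sub_left, rin_smul_left, rin_smul_left,
        rin_smul_left, rin_smul_left, hxsw t ht, hnorm t ht, ← hrs_eq t ht]
      have h0 : rs t ≠ 0 := (hrs_pos t ht).ne'
      field_simp
      ring
    rw [he] at h
    exact h
  -- continuity facts
  have hacont : ContinuousOn a (Icc (-T) 0) := fun t ht => (had t ht).continuousWithinAt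
  have hbcont : ContinuousOn b (Icc (-T) 0) := fun t ht => (hbd t ht).continuousWithinAt
  have ha'cont : ContinuousOn a' (Icc (-T) 0) := fun t ht => (ha'd t ht).continuousWithinAt
  have hb'cont : ContinuousOn b' (Icc (-T) 0) := fun t ht => (hb'd t ht).continuousWithinAt
  have hδcont : ContinuousOn δ (Icc (-T) 0) := fun t ht => (hδd t ht).continuousWithinAt
  have hρ'cont : ContinuousOn ρ' (Icc (-T) 0) := fun t ht => (hρ'd t ht).continuousWithinAt
  -- upgrade to HasDerivAt at interior points
  have hmem : ∀ t ∈ Ioo (-T) (0:ℝ), Icc (-T) (0:ℝ) ∈ nhds t := fun t ht =>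
    Icc_mem_nhds ht.1 ht.2
  have hsubI : Ioo (-T) (0:ℝ) ⊆ Icc (-T) (0:ℝ) := Ioo_subset_Icc_self
  have hδ0 : ∀ t ∈ Icc (-T) (0:ℝ), 0 ≤ δ t := fun t ht => hD0 _ (hxs0 t ht)
  -- boundary values
  have haA : a (-T) = 0 := by show rin (w (-T)) w₀ = 0; rw [hbcA]; exact rin_zero_left _
  have haB : a 0 = 0 := by show rin (w 0) w₀ = 0; rw [hbcB]; exact rin_zero_left _
  have hbA : b (-T) = 0 := by
    show rin (w (-T)) (Complex.I * w₀) = 0; rw [hbcA]; exact rin_zero_left _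
  have hbB : b 0 = 0 := by
    show rin (w 0) (Complex.I * w₀) = 0; rw [hbcB]; exact rin_zero_left _
  -- ==== Normal component vanishes ====
  have hWd : ∀ t ∈ Ioo (-T) (0:ℝ),
      HasDerivAt (fun s => rs s * b' s - ρ' s * b s)
        (-(δ t) * (rs t * b' t - ρ' t * b t)) t := by
    intro t ht
    have h1 : HasDerivAt rs (ρ' t) t := (hrsd t (hsubI ht)).hasDerivAt (hmem t ht)
    have h2 : HasDerivAt b' (-(δ t) * b' t - (rs t ^ 3)⁻¹ * b t) t :=
      (hb'd t (hsubI ht)).hasDerivAt (hmem t ht)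
    have h3 : HasDerivAt ρ' (-(δ t) * ρ' t - (rs t ^ 2)⁻¹) t :=
      (hρ'd t (hsubI ht)).hasDerivAt (hmem t ht)
    have h4 : HasDerivAt b (b' t) t := (hbd t (hsubI ht)).hasDerivAt (hmem t ht)
    have h := (h1.mul h2).sub (h3.mul h4)
    refine h.congr_deriv ?_
    have h0 : rs t ≠ 0 := (hrs_pos t (hsubI ht)).ne'
    field_simp
    ring
  have hb_le : ∀ t ∈ Icc (-T) (0:ℝ), b t ≤ 0 :=
    lemN hbd hrsd hrs_pos hb'cont hρ'cont hWd (fun t ht => hδ0 t (hsubI ht)) hbA hbB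
  have hnb_le : ∀ t ∈ Icc (-T) (0:ℝ), -(b t) ≤ 0 := by
    apply lemN (y := fun t => -(b t)) (v := fun t => -(b' t)) (r := rs) (r' := ρ') (δ := δ)
      (fun t ht => (hbd t ht).neg) hrsd hrs_pos hb'cont.neg hρ'cont
      ?_ (fun t ht => hδ0 t (hsubI ht)) (by simp [hbA]) (by simp [hbB])
    intro t ht
    have hfun : (fun s => rs s * -(b' s) - ρ' s * -(b s))
        = fun s => -(rs s * b' s - ρ' s * b s) := by funext s; ring
    rw [hfun]
    have := (hWd t ht).neg
    exact this.congr_deriv (by ring)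
  have hb0 : ∀ t ∈ Icc (-T) (0:ℝ), b t = 0 := by
    intro t ht
    have := hnb_le t ht
    have := hb_le t ht
    linarith
  -- w is tangential
  have hwa : ∀ t ∈ Icc (-T) (0:ℝ), w t = a t • w₀ := by
    intro t ht
    have := rin_decomp hw₀ (w t)
    rw [show rin (w t) (Complex.I * w₀) = 0 from hb0 t ht] at this
    simpa using this
  have hG : ∀ t ∈ Icc (-T) (0:ℝ), rin (gD (xs t)) (w t) = a t * g₁ t := by
    intro t ht
    rw [hwa t ht, rin_comm, rin_smul_left, rin_comm]
  -- ==== Tangential component vanishes ====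
  have hud : ∀ t ∈ Ioo (-T) (0:ℝ),
      HasDerivAt (fun s => a' s + δ s * a s) (2 * a t / rs t ^ 3) t := by
    intro t ht
    have h1 : HasDerivAt a' (-(rin (gD (xs t)) (w t)) * ρ' t - δ t * a' t
        + 2 * a t / rs t ^ 3) t := (ha'd t (hsubI ht)).hasDerivAt (hmem t ht)
    have h2 : HasDerivAt δ (g₁ t * ρ' t) t := (hδd t (hsubI ht)).hasDerivAt (hmem t ht)
    have h3 : HasDerivAt a (a' t) t := (had t (hsubI ht)).hasDerivAt (hmem t ht)
    have h := h1.add (h2.mul h3)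
    refine h.congr_deriv ?_
    rw [hG t (hsubI ht)]
    ring
  have hm : ∀ t ∈ Ioo (-T) (0:ℝ), 0 < a t → 0 < 2 * a t / rs t ^ 3 := by
    intro t ht hpos
    exact div_pos (by linarith) (pow_pos (hrs_pos t (hsubI ht)) 3)
  have ha_le : ∀ t ∈ Icc (-T) (0:ℝ), a t ≤ 0 :=
    lemT had ha'cont hδcont hud hm haA haB
  have hna_le : ∀ t ∈ Icc (-T) (0:ℝ), -(a t) ≤ 0 := by
    apply lemT (y := fun t => -(a t)) (v := fun t => -(a' t)) (δ := δ)
      (m := fun t => 2 * -(a t) / rs t ^ 3)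
      (fun t ht => (had t ht).neg) ha'cont.neg hδcont ?_ ?_ (by simp [haA]) (by simp [haB])
    · intro t ht
      have hfun : (fun s => -(a' s) + δ s * -(a s))
          = fun s => -(a' s + δ s * a s) := by funext s; ring
      rw [hfun]
      have := (hud t ht).neg
      exact this.congr_deriv (by ring)
    · intro t ht hpos
      have hpos' : 0 < -(a t) := hpos
      exact div_pos (by linarith) (pow_pos (hrs_pos t (hsubI ht)) 3)
  have ha0 : ∀ t ∈ Icc (-T) (0:ℝ), a t = 0 := by
    intro t ht
    have := hna_le t ht
    have := ha_le t ht
    linarith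
  intro t ht
  rw [hwa t ht, ha0 t ht, zero_smul]
end

section
/- Let D : ℝ²\{0} → ℝ be continuously differentiable, nonnegative and bounded. Every nonrectilinear solution of ẍ + D(x)ẋ = -x/|x|³ is globally defined in the past: if x : ]α,0] → ℝ²\{0} is a solution with det(x(0),ẋ(0)) ≠ 0 that is maximal in the past, then α = -∞. -/
open Set

/-- `det(x,v) = x₁v₂ - x₂v₁` for `x, v ∈ ℝ² ≡ ℂ`. -/
def pdet (a b : ℂ) : ℝ := a.re * b.im - a.im * b.re

open Filter Topology

section AuxLemmas

/-- Limit of a Lipschitz-type function at a boundary point, via completeness. -/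
lemma tendsto_of_lipschitz_aux {E : Type*} [NormedAddCommGroup E] [CompleteSpace E]
    {f : ℝ → E} {s : Set ℝ} {K : ℝ} (hK : 0 ≤ K)
    (hf : ∀ p ∈ s, ∀ q ∈ s, dist (f p) (f q) ≤ K * dist p q)
    {a : ℝ} [hs : (𝓝[s] a).NeBot] : ∃ L, Filter.Tendsto f (𝓝[s] a) (𝓝 L) := by
  have hc : Cauchy (Filter.map f (𝓝[s] a)) := by
    refine Metric.cauchy_iff.2 ⟨Filter.map_neBot, fun ε hε => ?_⟩
    have hδ : 0 < ε / (2 * (K + 1)) := by positivity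
    refine ⟨f '' (s ∩ Metric.ball a (ε / (2 * (K + 1)))), ?_, ?_⟩
    · exact Filter.image_mem_map (inter_mem self_mem_nhdsWithin
        (nhdsWithin_le_nhds (Metric.ball_mem_nhds a hδ)))
    · rintro _ ⟨p, ⟨hp, hpb⟩, rfl⟩ _ ⟨q, ⟨hq, hqb⟩, rfl⟩
      have h1 : dist p q ≤ dist p a + dist a q := dist_triangle _ _ _
      have h2 : dist (f p) (f q) ≤ K * dist p q := hf p hp q hq
      have hpb' := Metric.mem_ball.1 hpb
      have hqb' := Metric.mem_ball.1 hqb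
      rw [dist_comm a q] at h1
      have h3 : K * dist p q ≤ K * (dist p a + dist q a) := by
        apply mul_le_mul_of_nonneg_left _ hK; linarith
      have hK1 : K * (dist p a + dist q a) < ε := by
        have h4 : K * (dist p a + dist q a) ≤ K * (2 * (ε / (2 * (K + 1)))) := by
          apply mul_le_mul_of_nonneg_left _ hK; linarith
        calc K * (dist p a + dist q a) ≤ K * (2 * (ε / (2 * (K + 1)))) := h4
          _ = ε * (K / (K + 1)) := by field_simp
          _ < ε * 1 := by
              apply mul_lt_mul_of_pos_left _ hε
              rw [div_lt_one (by linarith)]; linarith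
          _ = ε := mul_one ε
      linarith
  obtain ⟨L, hL⟩ := CompleteSpace.complete hc
  exact ⟨L, hL⟩

/-- If `f` has derivative `g t` within `Ioc a b` at every `t ∈ Ioc a b`, `f` tends to `f a`
at `a⁺` and `g` tends to `l` at `a⁺`, then `f` has right derivative `l` at `a`. -/
lemma hasDerivWithinAt_endpoint {E : Type*} [NormedAddCommGroup E] [NormedSpace ℝ E]
    {f g : ℝ → E} {a b : ℝ} (hab : a < b)
    (hf : ∀ t ∈ Ioc a b, HasDerivWithinAt f (g t) (Ioc a b) t)
    {l : E} (hg : Tendsto g (𝓝[>] a) (𝓝 l))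
    (hfa : Tendsto f (𝓝[>] a) (𝓝 (f a))) :
    HasDerivWithinAt f l (Ici a) a := by
  rw [← hasDerivWithinAt_Ioi_iff_Ici, hasDerivWithinAt_iff_tendsto_slope]
  have hset : Ioi a \ {a} = Ioi a := by
    ext t; simp (config := {contextual := true}) [ne_of_gt]
  rw [hset]
  rw [Metric.tendsto_nhdsWithin_nhds] at hg ⊢
  intro ε hε
  obtain ⟨δ₀, hδ₀, hgδ⟩ := hg (ε/2) (by linarith)
  refine ⟨min δ₀ (b - a), by simp [hδ₀, hab], fun {t} ht hdist => ?_⟩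
  have hta : a < t := ht
  have htb : t ≤ b := by
    have h2 : t - a < δ₀ ∧ t - a < b - a := lt_min_iff.1
      (by simpa [Real.dist_eq, abs_of_pos (sub_pos.2 hta)] using hdist)
    linarith [h2.2]
  have hdist0 : t - a < δ₀ := by
    have h2 : t - a < δ₀ ∧ t - a < b - a := lt_min_iff.1
      (by simpa [Real.dist_eq, abs_of_pos (sub_pos.2 hta)] using hdist)
    exact h2.1
  -- key estimate : ‖f t - f a - (t - a) • l‖ ≤ ε/2 * (t - a)
  have key : ‖f t - f a - (t - a) • l‖ ≤ ε / 2 * (t - a) := by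
    set h : ℝ → E := fun s => f s - s • l with hh
    have hineq : ∀ η ∈ Ioo a t, ‖h t - h η‖ ≤ ε / 2 * (t - η) := by
      intro η hη
      have hsub : Ioc a t ⊆ Ioc a b := Ioc_subset_Ioc_right htb
      have hder : ∀ s ∈ Ioc a t, HasDerivWithinAt h (g s - l) (Ioc a t) s := by
        intro s hs
        exact ((hf s (hsub hs)).mono hsub).sub
          (((hasDerivWithinAt_id s _).smul_const l).congr_deriv (one_smul ℝ l))
      have hbd : ∀ s ∈ Ioc a t, ‖g s - l‖ ≤ ε / 2 := by
        intro s hs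
        have hsδ : dist s a < δ₀ := by
          rw [Real.dist_eq, abs_of_pos (sub_pos.2 hs.1)]
          linarith [hs.2]
        have := hgδ (mem_Ioi.2 hs.1) hsδ
        rw [dist_eq_norm] at this; exact this.le
      have h2 := Convex.norm_image_sub_le_of_norm_hasDerivWithin_le hder hbd (convex_Ioc a t)
        ⟨hη.1, hη.2.le⟩ (right_mem_Ioc.2 hta)
      rwa [Real.norm_eq_abs, abs_of_pos (sub_pos.2 hη.2)] at h2
    -- limit as η → a⁺
    have hlim : Tendsto (fun η => ‖h t - h η‖) (𝓝[>] a) (𝓝 ‖h t - (f a - a • l)‖) := by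
      apply Tendsto.norm
      exact Tendsto.const_sub _
        (hfa.sub (((continuous_id.smul continuous_const).tendsto a).mono_left nhdsWithin_le_nhds))
    have hlim2 : Tendsto (fun η : ℝ => ε / 2 * (t - η)) (𝓝[>] a) (𝓝 (ε / 2 * (t - a))) :=
      ((tendsto_const_nhds.sub tendsto_id).const_mul _).mono_left nhdsWithin_le_nhds
    have hev : ∀ᶠ η in 𝓝[>] a, ‖h t - h η‖ ≤ ε / 2 * (t - η) := by
      filter_upwards [Ioo_mem_nhdsGT_of_mem ⟨le_rfl, hta⟩] with η hη using hineq η hη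
    have hle := le_of_tendsto_of_tendsto hlim hlim2 hev
    have heq : h t - (f a - a • l) = f t - f a - (t - a) • l := by
      simp only [hh, sub_smul]; abel
    rwa [heq] at hle
  -- conclude on the slope
  have htne : (0:ℝ) < t - a := sub_pos.2 hta
  rw [dist_eq_norm]
  have hslope : slope f a t - l = (t - a)⁻¹ • (f t - f a - (t - a) • l) := by
    rw [slope_def_module, smul_sub, smul_sub, smul_smul, inv_mul_cancel₀ htne.ne', one_smul]
    module
  calc ‖slope f a t - l‖ = ‖(t - a)⁻¹ • (f t - f a - (t - a) • l)‖ := by rw [hslope]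
    _ = (t - a)⁻¹ * ‖f t - f a - (t - a) • l‖ := by
        rw [norm_smul, Real.norm_eq_abs, abs_of_pos (inv_pos.2 htne)]
    _ ≤ (t - a)⁻¹ * (ε / 2 * (t - a)) := by
        apply mul_le_mul_of_nonneg_left key (inv_pos.2 htne).le
    _ = ε / 2 := by field_simp
    _ < ε := by linarith

lemma pdet_inner (a b : ℂ) : (inner ℝ (Complex.I * a) b : ℝ) = pdet a b := by
  simp [Complex.inner, Complex.mul_re, Complex.mul_im, pdet]
  ring

lemma pdet_abs_le (a b : ℂ) : |pdet a b| ≤ ‖a‖ * ‖b‖ := by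
  rw [← pdet_inner]
  calc |(inner ℝ (Complex.I * a) b : ℝ)| ≤ ‖Complex.I * a‖ * ‖b‖ := abs_real_inner_le_norm _ _
    _ = ‖a‖ * ‖b‖ := by rw [norm_mul, Complex.norm_I, one_mul]

lemma pdet_deriv {x v : ℝ → ℂ} {xd vd : ℂ} {s : Set ℝ} {t : ℝ}
    (hx : HasDerivWithinAt x xd s t) (hv : HasDerivWithinAt v vd s t) :
    HasDerivWithinAt (fun r => pdet (x r) (v r))
      (pdet (x t) vd + pdet xd (v t)) s t := by
  have h := HasDerivWithinAt.inner ℝ (hx.const_mul Complex.I) hv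
  have hfun : ∀ r : ℝ, (inner ℝ (Complex.I * x r) (v r) : ℝ) = pdet (x r) (v r) :=
    fun r => pdet_inner _ _
  exact (h.congr (fun r _ => (hfun r).symm) (hfun t).symm).congr_deriv
    (by rw [pdet_inner, pdet_inner])

lemma pdet_lin (a b : ℂ) (d r : ℝ) : pdet a (-d • b - r • a) = -d * pdet a b := by
  simp [Complex.real_smul, Complex.mul_re, Complex.mul_im, pdet]
  ring

lemma pdet_self (a : ℂ) : pdet a a = 0 := by simp [pdet, mul_comm]

lemma arith_V {ρ σ c0 : ℝ} (hρ : 0 < ρ) (hc0 : 0 < c0) (h : c0 ≤ ρ * σ) :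
    0 ≤ σ ^ 2 - 2 * ρ⁻¹ + 1 / c0 ^ 2 := by
  have hσ : 0 < σ := by nlinarith
  have h1 : ρ⁻¹ ≤ σ * (1 / c0) := by
    have h0 : (1:ℝ)/ρ ≤ σ/c0 := by rw [div_le_div_iff₀ hρ hc0]; nlinarith
    calc ρ⁻¹ = 1/ρ := (one_div ρ).symm
      _ ≤ σ/c0 := h0
      _ = σ * (1/c0) := by ring
  have h3 := sq_nonneg (σ - 1 / c0)
  have h4 : (1 / c0) ^ 2 = 1 / c0 ^ 2 := by ring
  nlinarith [h1, h3, h4]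

lemma arith_u {ρ σ c0 : ℝ} (hρ : 0 < ρ) (hc0 : 0 < c0) (h : c0 ≤ ρ * σ) :
    σ ^ 2 ≤ 2 * (σ ^ 2 - 2 * ρ⁻¹ + 1 / c0 ^ 2) + 2 / c0 ^ 2 := by
  have hσ : 0 < σ := by nlinarith
  have h1 : ρ⁻¹ ≤ σ * (1 / c0) := by
    have h0 : (1:ℝ)/ρ ≤ σ/c0 := by rw [div_le_div_iff₀ hρ hc0]; nlinarith
    calc ρ⁻¹ = 1/ρ := (one_div ρ).symm
      _ ≤ σ/c0 := h0
      _ = σ * (1/c0) := by ring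
  have h3 := sq_nonneg (σ - 2 * (1 / c0))
  have h4 : (1 / c0) ^ 2 = 1 / c0 ^ 2 := by ring
  have e1 : 2 / c0 ^ 2 = 2 * (1 / c0 ^ 2) := by ring
  nlinarith [h1, h3, h4, e1]

end AuxLemmas

set_option maxHeartbeats 1000000 in
/-- Nonrectilinear solutions of the damped Kepler equation are globally defined in
the past: no nonrectilinear solution that is maximal in the past can have a finite
left endpoint `α`. -/
theorem stmt9 (α : ℝ) (hα : α < 0)
    (D : ℂ → ℝ) (hD1 : ContDiffOn ℝ 1 D {z : ℂ | z ≠ 0})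
    (hD0 : ∀ z : ℂ, z ≠ 0 → 0 ≤ D z) (Dstar : ℝ) (hDb : ∀ z : ℂ, z ≠ 0 → D z ≤ Dstar)
    (x x' : ℝ → ℂ) (hsol : KeplerSolOn D (Ioc α 0) x x')
    (hmax : ¬∃ (β : ℝ) (y y' : ℝ → ℂ), β < α ∧ KeplerSolOn D (Ioc β 0) y y' ∧
      ∀ t ∈ Ioc α 0, y t = x t)
    (hc : pdet (x 0) (x' 0) ≠ 0) :
    False := by
  obtain ⟨hne, hxd, hvd⟩ := hsol
  set J := Ioc α 0 with hJ
  have h0J : (0:ℝ) ∈ J := right_mem_Ioc.2 hα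
  set c0 : ℝ := |pdet (x 0) (x' 0)| with hc0
  have hc0pos : 0 < c0 := abs_pos.2 hc
  set X2 : ℝ → ℂ := fun t => -(D (x t)) • x' t - (‖x t‖ ^ 3)⁻¹ • x t with hX2
  have hDst : 0 ≤ Dstar := le_trans (hD0 1 one_ne_zero) (hDb 1 one_ne_zero)
  have hxpos : ∀ t ∈ J, 0 < ‖x t‖ := fun t ht => norm_pos_iff.2 (hne t ht)
  have hcontx : ContinuousOn x J := fun t ht => (hxd t ht).continuousWithinAt
  have hcontv : ContinuousOn x' J := fun t ht => (hvd t ht).continuousWithinAt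
  -- angular momentum is monotone
  have hcder : ∀ t ∈ J, HasDerivWithinAt (fun s => pdet (x s) (x' s))
      (-(D (x t)) * pdet (x t) (x' t)) J t := by
    intro t ht
    have h := pdet_deriv (hxd t ht) (hvd t ht)
    refine h.congr_deriv ?_
    rw [pdet_self, pdet_lin]
    ring
  have hcge : ∀ t ∈ J, c0 ≤ |pdet (x t) (x' t)| := by
    have hpc : Continuous (fun p : ℂ × ℂ => pdet p.1 p.2) := by
      unfold pdet
      exact ((Complex.continuous_re.comp continuous_fst).mul
        (Complex.continuous_im.comp continuous_snd)).sub
        ((Complex.continuous_im.comp continuous_fst).mul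
        (Complex.continuous_re.comp continuous_snd))
    have hqc : ContinuousOn (fun s => pdet (x s) (x' s) ^ 2) J :=
      (hpc.comp_continuousOn (hcontx.prodMk hcontv)).pow 2
    have hder : ∀ s ∈ Ioo α 0, HasDerivAt (fun r => pdet (x r) (x' r))
        (-(D (x s)) * pdet (x s) (x' s)) s := by
      intro s hs
      exact (hcder s (Ioo_subset_Ioc_self hs)).hasDerivAt
        (by rw [hJ]; exact Ioc_mem_nhds hs.1 hs.2)
    have hanti : AntitoneOn (fun s => pdet (x s) (x' s) ^ 2) J := by
      apply antitoneOn_of_deriv_nonpos (convex_Ioc α 0) hqc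
      · intro s hs
        rw [interior_Ioc] at hs
        exact (((hder s hs).pow 2).differentiableAt).differentiableWithinAt
      · intro s hs
        rw [interior_Ioc] at hs
        rw [((hder s hs).fun_pow 2).deriv]
        have hD := hD0 (x s) (hne s (Ioo_subset_Ioc_self hs))
        norm_num
        nlinarith [mul_nonneg hD (sq_nonneg (pdet (x s) (x' s)))]
    intro t ht
    have h2 : pdet (x 0) (x' 0) ^ 2 ≤ pdet (x t) (x' t) ^ 2 := hanti ht h0J ht.2
    have h3 := Real.sqrt_le_sqrt h2
    rwa [Real.sqrt_sq_eq_abs, Real.sqrt_sq_eq_abs] at h3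
  have hckey : ∀ t ∈ J, c0 ≤ ‖x t‖ * ‖x' t‖ := fun t ht =>
    le_trans (hcge t ht) (pdet_abs_le _ _)
  -- the Lyapunov-type function V
  set V : ℝ → ℝ := fun t => ‖x' t‖ ^ 2 - 2 * (‖x t‖)⁻¹ + 1 / c0 ^ 2 with hV
  have hVnn : ∀ t ∈ J, 0 ≤ V t :=
    fun t ht => arith_V (hxpos t ht) hc0pos (hckey t ht)
  have hu_le : ∀ t ∈ J, ‖x' t‖ ^ 2 ≤ 2 * V t + 2 / c0 ^ 2 :=
    fun t ht => arith_u (hxpos t ht) hc0pos (hckey t ht)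
  have hVder : ∀ t ∈ J, HasDerivWithinAt V (-2 * D (x t) * ‖x' t‖ ^ 2) J t := by
    intro t ht
    have hρpos := hxpos t ht
    have hu' : HasDerivWithinAt (fun s => ‖x' s‖ ^ 2)
        (2 * (inner ℝ (x' t) (X2 t) : ℝ)) J t := (hvd t ht).norm_sq
    have hn' : HasDerivWithinAt (fun s => ‖x s‖ ^ 2)
        (2 * (inner ℝ (x t) (x' t) : ℝ)) J t := (hxd t ht).norm_sq
    have hsq : HasDerivWithinAt (fun s => Real.sqrt (‖x s‖ ^ 2))
        (2 * (inner ℝ (x t) (x' t) : ℝ) / (2 * Real.sqrt (‖x t‖ ^ 2))) J t :=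
      hn'.sqrt (by positivity)
    have hρ' : HasDerivWithinAt (fun s => ‖x s‖)
        ((inner ℝ (x t) (x' t) : ℝ) / ‖x t‖) J t := by
      have hfun : ∀ s, Real.sqrt (‖x s‖ ^ 2) = ‖x s‖ := fun s => Real.sqrt_sq (norm_nonneg _)
      refine (hsq.congr (fun s _ => (hfun s).symm) (hfun t).symm).congr_deriv ?_
      rw [hfun t]; ring
    have hinv' : HasDerivWithinAt (fun s => 2 * (‖x s‖)⁻¹)
        (2 * (-((inner ℝ (x t) (x' t) : ℝ) / ‖x t‖) / ‖x t‖ ^ 2)) J t :=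
      (hρ'.inv hρpos.ne').const_mul 2
    have hcomb := (hu'.sub hinv').add_const (1 / c0 ^ 2)
    refine hcomb.congr_deriv ?_
    have hX2in : (inner ℝ (x' t) (X2 t) : ℝ)
        = -(D (x t)) * ‖x' t‖ ^ 2 - (‖x t‖ ^ 3)⁻¹ * (inner ℝ (x' t) (x t) : ℝ) := by
      rw [hX2]
      simp only [inner_sub_right, real_inner_smul_right, real_inner_self_eq_norm_sq]
    rw [hX2in, real_inner_comm (x' t) (x t)]
    have hρne : ‖x t‖ ≠ 0 := hρpos.ne'
    field_simp
    ring
  set b : ℝ := 4 * Dstar + 1 with hb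
  set a : ℝ := 4 * Dstar / c0 ^ 2 + 1 with ha
  have hbpos : (0:ℝ) < b := by rw [hb]; linarith
  have hapos : (0:ℝ) < a := by rw [ha]; positivity
  set Vmax : ℝ := (V 0 + a / b) * Real.exp (b * (-α)) with hVmax
  have hVle : ∀ t ∈ J, V t ≤ Vmax := by
    have hexp : ∀ t : ℝ, HasDerivAt (fun s => Real.exp (b * s)) (Real.exp (b * t) * b) t := by
      intro t
      have h1 : HasDerivAt (fun s : ℝ => b * s) b t := by
        simpa using (hasDerivAt_id t).const_mul b
      exact ((Real.hasDerivAt_exp (b * t)).comp t h1).congr_deriv (by ring)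
    set W : ℝ → ℝ := fun t => (V t + a / b) * Real.exp (b * t) with hW
    have hWder : ∀ t ∈ J, HasDerivWithinAt W
        ((-2 * D (x t) * ‖x' t‖ ^ 2) * Real.exp (b * t)
          + (V t + a / b) * (Real.exp (b * t) * b)) J t := by
      intro t ht
      exact ((hVder t ht).add_const (a / b)).mul (hexp t).hasDerivWithinAt
    have hWmono : MonotoneOn W J := by
      apply monotoneOn_of_deriv_nonneg (convex_Ioc α 0)
      · exact fun t ht => ((hWder t ht).continuousWithinAt)
      · intro s hs
        rw [interior_Ioc] at hs
        have hsJ : s ∈ J := Ioo_subset_Ioc_self hs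
        exact ((hWder s hsJ).hasDerivAt
          (by rw [hJ]; exact Ioc_mem_nhds hs.1 hs.2)).differentiableAt.differentiableWithinAt
      · intro s hs
        rw [interior_Ioc] at hs
        have hsJ : s ∈ J := Ioo_subset_Ioc_self hs
        rw [((hWder s hsJ).hasDerivAt (by rw [hJ]; exact Ioc_mem_nhds hs.1 hs.2)).deriv]
        have hDs := hD0 (x s) (hne s hsJ)
        have hDbs := hDb (x s) (hne s hsJ)
        have husq := hu_le s hsJ
        have hVs := hVnn s hsJ
        have hepos := Real.exp_pos (b * s)
        have hab : (V s + a / b) * b = b * V s + a := by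
          rw [add_mul, div_mul_cancel₀ _ hbpos.ne']; ring
        have hkey : 2 * D (x s) * ‖x' s‖ ^ 2 ≤ b * V s + a := by
          have h1 : 2 * D (x s) * ‖x' s‖ ^ 2 ≤ 2 * Dstar * ‖x' s‖ ^ 2 := by
            have := sq_nonneg ‖x' s‖
            nlinarith
          have h2 : 2 * Dstar * ‖x' s‖ ^ 2 ≤ 2 * Dstar * (2 * V s + 2 / c0 ^ 2) := by
            apply mul_le_mul_of_nonneg_left husq (by linarith)
          have h3 : b * V s + a = 4 * Dstar * V s + V s + (4 * Dstar / c0 ^ 2 + 1) := by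
            rw [hb]; ring
          have h4 : 2 * Dstar * (2 * V s + 2 / c0 ^ 2) = 4 * Dstar * V s + 4 * Dstar / c0 ^ 2 := by
            ring
          clear_value V a b
          nlinarith
        have hgoal : 0 ≤ (-2 * D (x s) * ‖x' s‖ ^ 2) * Real.exp (b * s)
            + (V s + a / b) * (Real.exp (b * s) * b) := by
          have h5 : (V s + a / b) * (Real.exp (b * s) * b)
              = ((V s + a / b) * b) * Real.exp (b * s) := by ring
          rw [h5, hab]
          have h6 : (-2 * D (x s) * ‖x' s‖ ^ 2) + (b * V s + a) ≥ 0 := by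
            clear_value V a b
            nlinarith
          nlinarith [hepos, h6]
        exact hgoal
    intro t ht
    have h1 : W t ≤ W 0 := hWmono ht h0J ht.2
    have h2 : (V t + a / b) * Real.exp (b * t) ≤ V 0 + a / b := by
      have : W 0 = V 0 + a / b := by rw [hW]; simp
      rw [← this]; exact h1
    have hVa : 0 ≤ V 0 + a / b := add_nonneg (hVnn 0 h0J) (by positivity)
    have h4 := mul_le_mul_of_nonneg_right h2 (Real.exp_pos (-(b * t))).le
    rw [mul_assoc, ← Real.exp_add, add_neg_cancel, Real.exp_zero, mul_one] at h4
    have h5 : Real.exp (-(b * t)) ≤ Real.exp (b * (-α)) := by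
      apply Real.exp_le_exp.2
      have := mul_le_mul_of_nonneg_left ht.1.le hbpos.le
      rw [mul_neg]; linarith
    calc V t ≤ V t + a / b := le_add_of_nonneg_right (by positivity)
      _ ≤ (V 0 + a / b) * Real.exp (-(b * t)) := h4
      _ ≤ (V 0 + a / b) * Real.exp (b * (-α)) := mul_le_mul_of_nonneg_left h5 hVa
  -- uniform bounds
  set M : ℝ := Real.sqrt (2 * Vmax + 2 / c0 ^ 2) with hM
  have hVmaxnn : 0 ≤ Vmax := by
    rw [hVmax]
    have := hVnn 0 h0J
    positivity
  have hMpos : 0 < M := Real.sqrt_pos.2 (by positivity)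
  have hvle : ∀ t ∈ J, ‖x' t‖ ≤ M := by
    intro t ht
    rw [hM, ← Real.sqrt_sq (norm_nonneg (x' t))]
    have h1 : ‖x' t‖ ^ 2 ≤ 2 * Vmax + 2 / c0 ^ 2 := by
      have h2 := hu_le t ht; have h3 := hVle t ht
      calc ‖x' t‖ ^ 2 ≤ 2 * V t + 2 / c0 ^ 2 := h2
        _ ≤ 2 * Vmax + 2 / c0 ^ 2 :=
            add_le_add (mul_le_mul_of_nonneg_left h3 (by norm_num)) le_rfl
    exact Real.sqrt_le_sqrt h1
  set m : ℝ := c0 / M with hm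
  have hmpos : 0 < m := div_pos hc0pos hMpos
  have hxge : ∀ t ∈ J, m ≤ ‖x t‖ := by
    intro t ht
    rw [hm, div_le_iff₀ hMpos]
    exact le_trans (hckey t ht) (mul_le_mul_of_nonneg_left (hvle t ht) (norm_nonneg _))
  set M2 : ℝ := Dstar * M + 1 / m ^ 2 with hM2
  have hM2pos : 0 < M2 := by rw [hM2]; positivity
  have hX2le : ∀ t ∈ J, ‖X2 t‖ ≤ M2 := by
    intro t ht
    have hρ := hxpos t ht
    have hxm := hxge t ht
    have hDs := hD0 (x t) (hne t ht)
    have hDbs := hDb (x t) (hne t ht)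
    have h1 : ‖X2 t‖ ≤ ‖-(D (x t)) • x' t‖ + ‖(‖x t‖ ^ 3)⁻¹ • x t‖ := norm_sub_le _ _
    have h2 : ‖-(D (x t)) • x' t‖ ≤ Dstar * M := by
      rw [norm_smul, Real.norm_eq_abs, abs_neg, abs_of_nonneg hDs]
      exact mul_le_mul hDbs (hvle t ht) (norm_nonneg _) hDst
    have h3 : ‖(‖x t‖ ^ 3)⁻¹ • x t‖ ≤ 1 / m ^ 2 := by
      rw [norm_smul, Real.norm_eq_abs, abs_of_nonneg (by positivity)]
      have he : (‖x t‖ ^ 3)⁻¹ * ‖x t‖ = (‖x t‖ ^ 2)⁻¹ := by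
        have h30 : ‖x t‖ ^ 3 = ‖x t‖ ^ 2 * ‖x t‖ := by ring
        rw [h30, mul_inv, mul_assoc, inv_mul_cancel₀ hρ.ne', mul_one]
      rw [he, one_div]
      apply inv_anti₀ (by positivity)
      exact pow_le_pow_left₀ hmpos.le hxm 2
    calc ‖X2 t‖ ≤ ‖-(D (x t)) • x' t‖ + ‖(‖x t‖ ^ 3)⁻¹ • x t‖ := h1
      _ ≤ Dstar * M + 1 / m ^ 2 := add_le_add h2 h3
  -- Lipschitz estimates
  have hLipx : ∀ p ∈ J, ∀ q ∈ J, dist (x p) (x q) ≤ M * dist p q := by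
    intro p hp q hq
    rw [dist_eq_norm, dist_eq_norm]
    exact Convex.norm_image_sub_le_of_norm_hasDerivWithin_le hxd
      (fun s hs => hvle s hs) (convex_Ioc α 0) hq hp
  have hLipv : ∀ p ∈ J, ∀ q ∈ J, dist (x' p) (x' q) ≤ M2 * dist p q := by
    intro p hp q hq
    rw [dist_eq_norm, dist_eq_norm]
    exact Convex.norm_image_sub_le_of_norm_hasDerivWithin_le hvd
      (fun s hs => hX2le s hs) (convex_Ioc α 0) hq hp
  -- limits at α
  have hnhds : 𝓝[J] α = 𝓝[>] α := nhdsWithin_Ioc_eq_nhdsGT hα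
  haveI hnb : (𝓝[J] α).NeBot := by rw [hnhds]; infer_instance
  obtain ⟨L0, hL0'⟩ := tendsto_of_lipschitz_aux hMpos.le hLipx (a := α)
  obtain ⟨L1, hL1'⟩ := tendsto_of_lipschitz_aux hM2pos.le hLipv (a := α)
  rw [hnhds] at hL0' hL1'
  have hJev : J ∈ 𝓝[>] α := Ioc_mem_nhdsGT_of_mem ⟨le_rfl, hα⟩
  have hL0norm : m ≤ ‖L0‖ :=
    ge_of_tendsto hL0'.norm (by filter_upwards [hJev] with t ht using hxge t ht)
  have hL0ne : L0 ≠ 0 := fun h => by rw [h, norm_zero] at hL0norm; linarith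
  have hopen : IsOpen {z : ℂ | z ≠ 0} := isOpen_ne
  have hDL0 : ContinuousAt D L0 := hD1.continuousOn.continuousAt (hopen.mem_nhds hL0ne)
  set A2 : ℂ := -(D L0) • L1 - (‖L0‖ ^ 3)⁻¹ • L0 with hA2
  have hX2lim : Tendsto X2 (𝓝[>] α) (𝓝 A2) := by
    have h1 : Tendsto (fun t => D (x t)) (𝓝[>] α) (𝓝 (D L0)) := (hDL0.tendsto).comp hL0'
    have h2 : Tendsto (fun t => (‖x t‖ ^ 3)⁻¹) (𝓝[>] α) (𝓝 ((‖L0‖ ^ 3)⁻¹)) :=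
      ((hL0'.norm.pow 3).inv₀ (pow_ne_zero 3 (norm_ne_zero_iff.2 hL0ne)))
    exact ((h1.neg.smul hL1').sub (h2.smul hL0'))
  -- extended functions
  set xb : ℝ → ℂ := fun t => if t = α then L0 else x t with hxb
  set vb : ℝ → ℂ := fun t => if t = α then L1 else x' t with hvb
  have hxbeq : ∀ᶠ s in 𝓝[>] α, x s = xb s := by
    filter_upwards [self_mem_nhdsWithin] with s hs
    rw [hxb]; simp [ne_of_gt (mem_Ioi.1 hs)]
  have hvbeq : ∀ᶠ s in 𝓝[>] α, x' s = vb s := by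
    filter_upwards [self_mem_nhdsWithin] with s hs
    rw [hvb]; simp [ne_of_gt (mem_Ioi.1 hs)]
  have hxbd : HasDerivWithinAt xb L1 (Ici α) α := by
    apply hasDerivWithinAt_endpoint hα (g := x')
    · intro t ht
      exact (hxd t ht).congr (fun s hs => by rw [hxb]; simp [ne_of_gt hs.1])
        (by rw [hxb]; simp [ne_of_gt ht.1])
    · exact hL1'
    · have h := hL0'.congr' hxbeq
      have he : xb α = L0 := by rw [hxb]; simp
      rwa [← he] at h
  have hvbd : HasDerivWithinAt vb A2 (Ici α) α := by
    apply hasDerivWithinAt_endpoint hα (g := X2)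
    · intro t ht
      exact (hvd t ht).congr (fun s hs => by rw [hvb]; simp [ne_of_gt hs.1])
        (by rw [hvb]; simp [ne_of_gt ht.1])
    · exact hX2lim
    · have h := hL1'.congr' hvbeq
      have he : vb α = L1 := by rw [hvb]; simp
      rwa [← he] at h
  -- local solution through (L0, L1) via Picard–Lindelöf
  set F : ℂ × ℂ → ℂ × ℂ := fun p => (p.2, -(D p.1) • p.2 - (‖p.1‖ ^ 3)⁻¹ • p.1) with hF
  have hFc : ContDiffAt ℝ 1 F (L0, L1) := by
    have hfst : ContDiffAt ℝ 1 (fun p : ℂ × ℂ => p.1) (L0, L1) := contDiffAt_fst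
    have hsnd : ContDiffAt ℝ 1 (fun p : ℂ × ℂ => p.2) (L0, L1) := contDiffAt_snd
    have hDp : ContDiffAt ℝ 1 (fun p : ℂ × ℂ => D p.1) (L0, L1) :=
      (hD1.contDiffAt (hopen.mem_nhds hL0ne)).comp _ hfst
    have hnrm : ContDiffAt ℝ 1 (fun p : ℂ × ℂ => ‖p.1‖) (L0, L1) :=
      ContDiffAt.norm ℝ hfst hL0ne
    have hinv : ContDiffAt ℝ 1 (fun p : ℂ × ℂ => (‖p.1‖ ^ 3)⁻¹) (L0, L1) :=
      (hnrm.pow 3).inv (by simpa using pow_ne_zero 3 (norm_ne_zero_iff.2 hL0ne))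
    exact hsnd.prodMk ((hDp.neg.smul hsnd).sub (hinv.smul hfst))
  obtain ⟨w, hw0, ε, hεpos, hw⟩ := hFc.exists_forall_mem_closedBall_exists_eq_forall_mem_Ioo_hasDerivAt₀ α
  have hw1 : ∀ t ∈ Ioo (α - ε) (α + ε), HasDerivAt (fun s => (w s).1) ((w t).2) t := by
    intro t ht
    have h := (ContinuousLinearMap.fst ℝ ℂ ℂ).hasFDerivAt.comp_hasDerivAt t (hw t ht)
    simpa [hF, Function.comp_def] using h
  have hw2 : ∀ t ∈ Ioo (α - ε) (α + ε), HasDerivAt (fun s => (w s).2)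
      (-(D ((w t).1)) • (w t).2 - (‖(w t).1‖ ^ 3)⁻¹ • (w t).1) t := by
    intro t ht
    have h := (ContinuousLinearMap.snd ℝ ℂ ℂ).hasFDerivAt.comp_hasDerivAt t (hw t ht)
    simpa [hF, Function.comp_def] using h
  have hαIoo : α ∈ Ioo (α - ε) (α + ε) := by constructor <;> linarith
  have hwcont : ContinuousAt (fun t => (w t).1) α :=
    continuous_fst.continuousAt.comp (hw α hαIoo).continuousAt
  have hne0 : ∀ᶠ t in 𝓝 α, (w t).1 ≠ 0 := by
    apply hwcont.eventually_ne
    rw [hw0]; exact hL0ne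
  have hIooev : ∀ᶠ t in 𝓝 α, t ∈ Ioo (α - ε) (α + ε) := Ioo_mem_nhds hαIoo.1 hαIoo.2
  obtain ⟨δ, hδpos, hδ⟩ := Metric.eventually_nhds_iff.1 (hne0.and hIooev)
  set β : ℝ := α - δ / 2 with hβ
  have hβα : β < α := by rw [hβ]; linarith
  have hmemw : ∀ t, t ∈ Ioc β α → ((w t).1 ≠ 0 ∧ t ∈ Ioo (α - ε) (α + ε)) := by
    intro t ht
    apply hδ
    rw [Real.dist_eq, abs_of_nonpos (by linarith [ht.2])]
    have h1 := ht.1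
    rw [hβ] at h1
    linarith
  set y : ℝ → ℂ := fun t => if t ≤ α then (w t).1 else x t with hy
  set yd : ℝ → ℂ := fun t => if t ≤ α then (w t).2 else x' t with hyd
  have hw1L : (w α).1 = L0 := by rw [hw0]
  have hw2L : (w α).2 = L1 := by rw [hw0]
  apply hmax
  refine ⟨β, y, yd, hβα, ⟨?_, ?_, ?_⟩, fun t ht => by
    simp only [hy, if_neg (not_le.2 ht.1)]⟩
  · -- nonvanishing
    intro t ht
    by_cases hta : t ≤ α
    · simp only [hy, if_pos hta]
      exact (hmemw t ⟨ht.1, hta⟩).1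
    · simp only [hy, if_neg hta]
      exact hne t ⟨not_le.1 hta, ht.2⟩
  · -- derivative of y
    intro t ht
    rcases lt_trichotomy t α with hlt | heq | hgt
    · have hm := hmemw t ⟨ht.1, hlt.le⟩
      have hd := hw1 t hm.2
      have hydt : yd t = (w t).2 := by simp only [hyd, if_pos hlt.le]
      rw [hydt]
      have hev : (fun s => (w s).1) =ᶠ[𝓝 t] y := by
        filter_upwards [Iio_mem_nhds hlt] with s hs
        simp only [hy]; rw [if_pos (mem_Iio.1 hs).le]
      exact (hd.congr_of_eventuallyEq hev.symm).hasDerivWithinAt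
    · subst heq
      have hydt : yd t = L1 := by simp only [hyd, if_pos le_rfl, hw2L]
      rw [hydt]
      have hleft : HasDerivWithinAt y L1 (Iic t) t := by
        have hd := hw1 t hαIoo
        rw [hw2L] at hd
        exact hd.hasDerivWithinAt.congr
          (fun s hs => by simp only [hy, if_pos (mem_Iic.1 hs)])
          (by simp only [hy, if_pos le_rfl])
      have hright : HasDerivWithinAt y L1 (Icc t 0) t := by
        refine (hxbd.mono Icc_subset_Ici_self).congr ?_ ?_
        · intro s hs
          rcases eq_or_lt_of_le hs.1 with h | h
          · rw [← h]
            simp only [hy, hxb, if_pos le_rfl, if_pos rfl, hw1L]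
          · simp only [hy, hxb, if_neg (not_le.2 h), if_neg (ne_of_gt h)]
        · simp only [hy, hxb, if_pos le_rfl, if_pos rfl, hw1L]
      exact (hleft.union hright).mono (fun s hs => by
        rcases le_or_gt s t with h | h
        · exact Or.inl h
        · exact Or.inr ⟨h.le, hs.2⟩)
    · have hmem : Ioc α 0 ∈ 𝓝[Ioc β 0] t := by
        rw [mem_nhdsWithin]
        exact ⟨Ioi α, isOpen_Ioi, hgt, by rintro s ⟨hs1, hs2⟩; exact ⟨hs1, hs2.2⟩⟩
      have hydt : yd t = x' t := by simp only [hyd, if_neg (not_le.2 hgt)]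
      rw [hydt]
      refine ((hxd t ⟨hgt, ht.2⟩).mono_of_mem_nhdsWithin hmem).congr_of_eventuallyEq ?_ ?_
      · filter_upwards [hmem] with s hs
        simp only [hy, if_neg (not_le.2 hs.1)]
      · simp only [hy, if_neg (not_le.2 hgt)]
  · -- derivative of yd
    intro t ht
    rcases lt_trichotomy t α with hlt | heq | hgt
    · have hm := hmemw t ⟨ht.1, hlt.le⟩
      have hd := hw2 t hm.2
      have hyt : y t = (w t).1 := by simp only [hy, if_pos hlt.le]
      have hydt : yd t = (w t).2 := by simp only [hyd, if_pos hlt.le]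
      rw [hyt, hydt]
      have hev : (fun s => (w s).2) =ᶠ[𝓝 t] yd := by
        filter_upwards [Iio_mem_nhds hlt] with s hs
        simp only [hyd]; rw [if_pos (mem_Iio.1 hs).le]
      exact (hd.congr_of_eventuallyEq hev.symm).hasDerivWithinAt
    · subst heq
      have hyt : y t = L0 := by simp only [hy, if_pos le_rfl, hw1L]
      have hydt : yd t = L1 := by simp only [hyd, if_pos le_rfl, hw2L]
      rw [hyt, hydt]
      have hleft : HasDerivWithinAt yd A2 (Iic t) t := by
        have hd := hw2 t hαIoo
        rw [hw1L, hw2L] at hd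
        exact hd.hasDerivWithinAt.congr
          (fun s hs => by simp only [hyd, if_pos (mem_Iic.1 hs)])
          (by simp only [hyd, if_pos le_rfl, hw2L])
      have hright : HasDerivWithinAt yd A2 (Icc t 0) t := by
        refine (hvbd.mono Icc_subset_Ici_self).congr ?_ ?_
        · intro s hs
          rcases eq_or_lt_of_le hs.1 with h | h
          · rw [← h]
            simp only [hyd, hvb, if_pos le_rfl, if_pos rfl, hw2L]
          · simp only [hyd, hvb, if_neg (not_le.2 h), if_neg (ne_of_gt h)]
        · simp only [hyd, hvb, if_pos le_rfl, if_pos rfl, hw2L]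
      exact ((hleft.union hright).mono (fun s hs => by
        rcases le_or_gt s t with h | h
        · exact Or.inl h
        · exact Or.inr ⟨h.le, hs.2⟩)).congr_deriv (by rw [hA2])
    · have hmem : Ioc α 0 ∈ 𝓝[Ioc β 0] t := by
        rw [mem_nhdsWithin]
        exact ⟨Ioi α, isOpen_Ioi, hgt, by rintro s ⟨hs1, hs2⟩; exact ⟨hs1, hs2.2⟩⟩
      have hyt : y t = x t := by simp only [hy, if_neg (not_le.2 hgt)]
      have hydt : yd t = x' t := by simp only [hyd, if_neg (not_le.2 hgt)]
      rw [hyt, hydt]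
      refine ((hvd t ⟨hgt, ht.2⟩).mono_of_mem_nhdsWithin hmem).congr_of_eventuallyEq ?_ ?_
      · filter_upwards [hmem] with s hs
        simp only [hyd, if_neg (not_le.2 hs.1)]
      · simp only [hyd, if_neg (not_le.2 hgt)]
end

section
/- Let D : ℝ²\{0} → ℝ be continuous, nonnegative and bounded, and let x : [a,b] → ℝ²\{0} be a nonrectilinear solution of ẍ + D(x)ẋ = -x/|x|³ with polar radius r = |x| and angular momentum c = det(x,ẋ). If ṙ(t) ≥ 0 for all t ∈ [a,b] and the potential energy v(b) := -1/r(b) + c(b)²/(2r(b)²) is ≥ 0, then the potential energy v(t) := -1/r(t) + c(t)²/(2r(t)²) satisfies v̇(t) ≤ 0 on [a,b]. -/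
open Set

/-- If along a nonrectilinear solution `ṙ ≥ 0` on `[a,b]` and the potential energy
`v = -1/r + c²/(2r²)` satisfies `v(b) ≥ 0`, then `v̇ ≤ 0` on `[a,b]`. -/
theorem stmt11 (a b : ℝ) (hab : a < b)
    (D : ℂ → ℝ) (hDc : ContinuousOn D {z : ℂ | z ≠ 0})
    (hD0 : ∀ z : ℂ, z ≠ 0 → 0 ≤ D z) (Dstar : ℝ) (hDb : ∀ z : ℂ, z ≠ 0 → D z ≤ Dstar)
    (x x' : ℝ → ℂ) (hsol : KeplerSolOn D (Icc a b) x x')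
    (hnonrect : pdet (x a) (x' a) ≠ 0)
    (hr' : ∀ t ∈ Icc a b, 0 ≤ rin (x t) (x' t) / ‖x t‖)
    (hvb : 0 ≤ -1 / ‖x b‖ + (pdet (x b) (x' b)) ^ 2 / (2 * ‖x b‖ ^ 2)) :
    ∀ t ∈ Icc a b, ∀ d : ℝ,
      HasDerivWithinAt (fun τ => -1 / ‖x τ‖ + (pdet (x τ) (x' τ)) ^ 2 / (2 * ‖x τ‖ ^ 2))
        d (Icc a b) t → d ≤ 0 := by
  obtain ⟨hx0, hx1, hx2⟩ := hsol
  set S : Set ℝ := Icc a b with hS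
  -- norm positivity
  have hrpos : ∀ t ∈ S, (0:ℝ) < ‖x t‖ := fun t ht => norm_pos_iff.2 (hx0 t ht)
  -- component derivatives
  have hre : ∀ t ∈ S, HasDerivWithinAt (fun τ => (x τ).re) ((x' t).re) S t :=
    fun t ht => Complex.reCLM.hasFDerivAt.comp_hasDerivWithinAt t (hx1 t ht)
  have him : ∀ t ∈ S, HasDerivWithinAt (fun τ => (x τ).im) ((x' t).im) S t :=
    fun t ht => Complex.imCLM.hasFDerivAt.comp_hasDerivWithinAt t (hx1 t ht)
  have hre' : ∀ t ∈ S, HasDerivWithinAt (fun τ => (x' τ).re)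
      ((-(D (x t)) • x' t - (‖x t‖ ^ 3)⁻¹ • x t).re) S t :=
    fun t ht => Complex.reCLM.hasFDerivAt.comp_hasDerivWithinAt t (hx2 t ht)
  have him' : ∀ t ∈ S, HasDerivWithinAt (fun τ => (x' τ).im)
      ((-(D (x t)) • x' t - (‖x t‖ ^ 3)⁻¹ • x t).im) S t :=
    fun t ht => Complex.imCLM.hasFDerivAt.comp_hasDerivWithinAt t (hx2 t ht)
  -- derivative of c = pdet(x, x')
  have hc : ∀ t ∈ S, HasDerivWithinAt (fun τ => pdet (x τ) (x' τ))
      (-(D (x t)) * pdet (x t) (x' t)) S t := by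
    intro t ht
    have h := (((hre t ht).mul (him' t ht)).sub ((him t ht).mul (hre' t ht)))
    have heq : (x' t).re * (x' t).im + (x t).re * (-(D (x t)) • x' t - (‖x t‖ ^ 3)⁻¹ • x t).im -
        ((x' t).im * (x' t).re + (x t).im * (-(D (x t)) • x' t - (‖x t‖ ^ 3)⁻¹ • x t).re) =
        -(D (x t)) * pdet (x t) (x' t) := by
      simp only [Complex.sub_re, Complex.sub_im, Complex.smul_re, Complex.smul_im, pdet,
        smul_eq_mul]
      ring
    rw [← heq]
    exact h
  -- derivative of r = ‖x‖
  have hnormeq : ∀ z : ℂ, ‖z‖ = Real.sqrt (z.re * z.re + z.im * z.im) := by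
    intro z; rw [Complex.norm_def, Complex.normSq_apply]
  have hr : ∀ t ∈ S, HasDerivWithinAt (fun τ => ‖x τ‖)
      (rin (x t) (x' t) / ‖x t‖) S t := by
    intro t ht
    have hρ : HasDerivWithinAt (fun τ => (x τ).re * (x τ).re + (x τ).im * (x τ).im)
        (2 * rin (x t) (x' t)) S t := by
      have h := ((hre t ht).mul (hre t ht)).add ((him t ht).mul (him t ht))
      have : (x' t).re * (x t).re + (x t).re * (x' t).re +
          ((x' t).im * (x t).im + (x t).im * (x' t).im) = 2 * rin (x t) (x' t) := by
        simp only [rin]; ring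
      rwa [this] at h
    have hρ0 : (x t).re * (x t).re + (x t).im * (x t).im ≠ 0 := by
      have := hrpos t ht
      rw [hnormeq] at this
      intro h
      rw [h, Real.sqrt_zero] at this
      exact lt_irrefl 0 this
    have h := (Real.hasDerivAt_sqrt hρ0).comp_hasDerivWithinAt t hρ
    have hfun : (fun τ => ‖x τ‖) =
        (Real.sqrt ∘ fun τ => (x τ).re * (x τ).re + (x τ).im * (x τ).im) := by
      funext τ; exact hnormeq (x τ)
    rw [hfun]
    refine h.congr_deriv ?_
    rw [← hnormeq]
    have hrt := hrpos t ht
    field_simp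
  -- r is monotone on S
  have hrmono : MonotoneOn (fun τ => ‖x τ‖) S := by
    apply monotoneOn_of_hasDerivWithinAt_nonneg (convex_Icc a b)
      (f' := fun τ => rin (x τ) (x' τ) / ‖x τ‖)
    · exact fun t ht => (hr t ht).continuousWithinAt
    · intro t ht
      exact (hr t (interior_subset ht)).mono interior_subset
    · intro t ht
      exact hr' t (interior_subset ht)
  -- c² is antitone on S
  have hc2anti : AntitoneOn (fun τ => (pdet (x τ) (x' τ)) ^ 2) S := by
    apply antitoneOn_of_hasDerivWithinAt_nonpos (convex_Icc a b)
      (f' := fun τ => 2 * (pdet (x τ) (x' τ)) ^ 1 * (-(D (x τ)) * pdet (x τ) (x' τ)))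
    · exact fun t ht => ((hc t ht).pow 2).continuousWithinAt
    · intro t ht
      exact ((hc t (interior_subset ht)).pow 2).mono interior_subset
    · intro t ht
      have hD := hD0 (x t) (hx0 t (interior_subset ht))
      have : 2 * (pdet (x t) (x' t)) ^ 1 * (-(D (x t)) * pdet (x t) (x' t)) =
          -(2 * D (x t) * (pdet (x t) (x' t)) ^ 2) := by ring
      rw [this]
      have : 0 ≤ 2 * D (x t) * (pdet (x t) (x' t)) ^ 2 := by positivity
      linarith
  -- key inequality: c(t)² ≥ 2 r(t)
  have hb : b ∈ S := ⟨le_of_lt hab, le_refl b⟩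
  have hkey : ∀ t ∈ S, 2 * ‖x t‖ ≤ (pdet (x t) (x' t)) ^ 2 := by
    intro t ht
    have hrb := hrpos b hb
    have h1 : 2 * ‖x b‖ ≤ (pdet (x b) (x' b)) ^ 2 := by
      have h2 : (0:ℝ) < 2 * ‖x b‖ ^ 2 := by positivity
      rw [neg_div, le_neg_add_iff_add_le, add_zero, div_le_div_iff₀ hrb h2] at hvb
      nlinarith
    have h2 : (pdet (x b) (x' b)) ^ 2 ≤ (pdet (x t) (x' t)) ^ 2 := hc2anti ht hb ht.2
    have h3 : ‖x t‖ ≤ ‖x b‖ := hrmono ht hb ht.2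
    linarith
  -- conclusion
  intro t ht d hd
  -- build the derivative of v
  have hrt := hrpos t ht
  have hrne : ‖x t‖ ≠ 0 := ne_of_gt hrt
  have h2rne : 2 * ‖x t‖ ^ 2 ≠ 0 := by positivity
  have hv1 : HasDerivWithinAt (fun τ => -1 / ‖x τ‖)
      ((0 * ‖x t‖ - (-1) * (rin (x t) (x' t) / ‖x t‖)) / ‖x t‖ ^ 2) S t :=
    (hasDerivWithinAt_const t S (-1)).div (hr t ht) hrne
  have hv2 : HasDerivWithinAt (fun τ => (pdet (x τ) (x' τ)) ^ 2 / (2 * ‖x τ‖ ^ 2))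
      ((2 * (pdet (x t) (x' t)) ^ 1 * (-(D (x t)) * pdet (x t) (x' t)) * (2 * ‖x t‖ ^ 2)
        - (pdet (x t) (x' t)) ^ 2 * (2 * (2 * ‖x t‖ ^ 1 * (rin (x t) (x' t) / ‖x t‖))))
        / (2 * ‖x t‖ ^ 2) ^ 2) S t :=
    ((hc t ht).pow 2).div (((hr t ht).pow 2).const_mul 2) h2rne
  have hv := hv1.add hv2
  have hdeq : d = (0 * ‖x t‖ - (-1) * (rin (x t) (x' t) / ‖x t‖)) / ‖x t‖ ^ 2 +
      (2 * (pdet (x t) (x' t)) ^ 1 * (-(D (x t)) * pdet (x t) (x' t)) * (2 * ‖x t‖ ^ 2)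
        - (pdet (x t) (x' t)) ^ 2 * (2 * (2 * ‖x t‖ ^ 1 * (rin (x t) (x' t) / ‖x t‖))))
        / (2 * ‖x t‖ ^ 2) ^ 2 := by
    have hu := (uniqueDiffOn_Icc hab) t ht
    rw [← hd.derivWithin hu]; exact hv.derivWithin hu
  rw [hdeq]
  -- now prove the explicit derivative is ≤ 0
  set r := ‖x t‖
  set c := pdet (x t) (x' t)
  set ρ := rin (x t) (x' t)
  have hρ0 : 0 ≤ ρ / r := hr' t ht
  have hρ0' : 0 ≤ ρ := by
    by_contra h
    push_neg at h
    have : ρ / r < 0 := div_neg_of_neg_of_pos h hrt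
    linarith
  have hD := hD0 (x t) (hx0 t ht)
  have hck := hkey t ht
  have heq : (0 * r - (-1) * (ρ / r)) / r ^ 2 +
      (2 * c ^ 1 * (-(D (x t)) * c) * (2 * r ^ 2) - c ^ 2 * (2 * (2 * r ^ 1 * (ρ / r))))
        / (2 * r ^ 2) ^ 2 =
      ρ * (r - c ^ 2) / r ^ 4 - D (x t) * c ^ 2 / r ^ 2 := by
    field_simp
    ring
  rw [heq]
  have h1 : ρ * (r - c ^ 2) / r ^ 4 ≤ 0 := by
    apply div_nonpos_of_nonpos_of_nonneg _ (by positivity)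
    have : r - c ^ 2 ≤ 0 := by linarith
    exact mul_nonpos_of_nonneg_of_nonpos hρ0' this
  have h2 : 0 ≤ D (x t) * c ^ 2 / r ^ 2 := by positivity
  linarith
end

section
/- Let δ : ]0,∞[ → ℝ be continuous, nonnegative and bounded by D*, and let r : ]α,ω[ → ]0,∞[ be a maximal solution of r̈ + δ(r)ṙ = -1/r² with α > -∞. Then the energy h(t) = ṙ(t)²/2 - 1/r(t) remains bounded above as t → α⁺, i.e. lim_{t→α⁺} h(t) < +∞. -/
open Set Filter

lemma sqrt_add_le' (x y : ℝ) (hx : 0 ≤ x) (hy : 0 ≤ y) :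
    Real.sqrt (x + y) ≤ Real.sqrt x + Real.sqrt y := by
  rw [← Real.sqrt_sq (by positivity : (0:ℝ) ≤ Real.sqrt x + Real.sqrt y)]
  apply Real.sqrt_le_sqrt
  nlinarith [Real.sq_sqrt hx, Real.sq_sqrt hy, Real.sqrt_nonneg x, Real.sqrt_nonneg y]

/-- If a maximal solution of the 1D damped Kepler equation on `]α,ω[` has `α > -∞`,
then the energy `h = ṙ²/2 - 1/r` remains bounded above as `t → α⁺`. -/
theorem stmt13 (δ : ℝ → ℝ) (hδc : ContinuousOn δ (Ioi 0))
    (hδ0 : ∀ s > (0 : ℝ), 0 ≤ δ s) (Dstar : ℝ) (hδb : ∀ s > (0 : ℝ), δ s ≤ Dstar)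
    (α ω : ℝ) (hαω : α < ω)
    (r r' : ℝ → ℝ) (hsol : Kepler1DOn δ (Ioo α ω) r r')
    (hmax : ¬∃ (a' b' : ℝ) (q q' : ℝ → ℝ), a' ≤ α ∧ ω ≤ b' ∧ (a' < α ∨ ω < b') ∧
      Kepler1DOn δ (Ioo a' b') q q' ∧ ∀ t ∈ Ioo α ω, q t = r t) :
    ∃ M : ℝ, ∀ᶠ t in nhdsWithin α (Ioi α), (r' t) ^ 2 / 2 - 1 / r t ≤ M := by
  obtain ⟨hrpos, hr, hr'⟩ := hsol
  obtain ⟨E, hEdef⟩ : ∃ E : ℝ → ℝ, E = fun t => (r' t) ^ 2 / 2 - 1 / r t := ⟨_, rfl⟩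
  have hEt : ∀ t, E t = (r' t) ^ 2 / 2 - 1 / r t := fun t => by rw [hEdef]
  -- upgrade within-derivatives to full derivatives (Ioo is open)
  have hmemnhds : ∀ t ∈ Ioo α ω, Ioo α ω ∈ nhds t := fun t ht => isOpen_Ioo.mem_nhds ht
  have hrd : ∀ t ∈ Ioo α ω, HasDerivAt r (r' t) t :=
    fun t ht => (hr t ht).hasDerivAt (hmemnhds t ht)
  have hr'd : ∀ t ∈ Ioo α ω,
      HasDerivAt r' (-(δ (r t)) * r' t - 1 / (r t) ^ 2) t :=
    fun t ht => (hr' t ht).hasDerivAt (hmemnhds t ht)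
  -- derivative of the energy
  have hEd : ∀ t ∈ Ioo α ω, HasDerivAt E (-(δ (r t)) * (r' t) ^ 2) t := by
    intro t ht
    rw [hEdef]
    have hrt : r t ≠ 0 := (hrpos t ht).ne'
    have h1 : HasDerivAt (fun u => (r' u) ^ 2 / 2)
        ((2 * r' t ^ 1 * (-(δ (r t)) * r' t - 1 / (r t) ^ 2)) / 2) t :=
      ((hr'd t ht).pow 2).div_const 2
    have h2 : HasDerivAt (fun u => 1 / r u) (-(r' t) / (r t) ^ 2) t := by
      simp only [one_div]; exact (hrd t ht).inv hrt
    have := h1.sub h2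
    refine this.congr_deriv ?_
    field_simp
    ring
  have hEc : ContinuousOn E (Ioo α ω) :=
    fun t ht => ((hEd t ht).continuousAt).continuousWithinAt
  have hrc : ContinuousOn r (Ioo α ω) :=
    fun t ht => ((hrd t ht).continuousAt).continuousWithinAt
  have hr'c : ContinuousOn r' (Ioo α ω) :=
    fun t ht => ((hr'd t ht).continuousAt).continuousWithinAt
  -- D* is nonnegative
  have hm0 : (α + ω) / 2 ∈ Ioo α ω := ⟨by linarith, by linarith⟩
  have hDnn : 0 ≤ Dstar :=
    le_trans (hδ0 _ (hrpos _ hm0)) (hδb _ (hrpos _ hm0))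
  -- the energy is antitone
  have hEanti : AntitoneOn E (Ioo α ω) := by
    apply antitoneOn_of_deriv_nonpos (convex_Ioo α ω) hEc
    · intro t ht
      rw [interior_Ioo] at ht
      exact (hEd t ht).differentiableAt.differentiableWithinAt
    · intro t ht
      rw [interior_Ioo] at ht
      rw [(hEd t ht).deriv]
      have := hδ0 (r t) (hrpos t ht)
      nlinarith [sq_nonneg (r' t)]
  by_cases hzero : ∀ t ∈ Ioo α ω, ∃ s ∈ Ioo α t, r' s = 0
  · -- zeros of r' accumulate at α : energy ≤ 0 near α
    refine ⟨0, ?_⟩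
    filter_upwards [Ioo_mem_nhdsGT_of_mem (⟨le_refl α, hαω⟩ : α ∈ Ico α ω)] with t ht
    obtain ⟨s, hs, hs0⟩ := hzero t ht
    have hsω : s ∈ Ioo α ω := ⟨hs.1, hs.2.trans ht.2⟩
    have h1 : E t ≤ E s := hEanti hsω ht hs.2.le
    have h2 : E s ≤ 0 := by
      have hrs : 0 < r s := hrpos s hsω
      rw [hEt s, hs0]
      have : 0 ≤ 1 / r s := by positivity
      nlinarith
    have := h1.trans h2
    rwa [hEt] at this
  · push_neg at hzero
    obtain ⟨t₁, ht₁, hnz⟩ := hzero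
    -- r' has a constant sign on (α, t₁)
    have hsub1 : Ioo α t₁ ⊆ Ioo α ω := Ioo_subset_Ioo_right ht₁.2.le
    have hsign : (∀ s ∈ Ioo α t₁, 0 < r' s) ∨ (∀ s ∈ Ioo α t₁, r' s < 0) := by
      by_contra hcon
      push_neg at hcon
      obtain ⟨⟨a, ha, ha'⟩, ⟨b, hb, hb'⟩⟩ := hcon
      have ha'' : r' a < 0 := lt_of_le_of_ne ha' (hnz a ha)
      have hb'' : 0 < r' b := lt_of_le_of_ne hb' (Ne.symm (hnz b hb))
      have huIcc : uIcc a b ⊆ Ioo α t₁ := ordConnected_Ioo.uIcc_subset ha hb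
      have hcont : ContinuousOn r' (uIcc a b) := hr'c.mono (huIcc.trans hsub1)
      have h0mem : (0:ℝ) ∈ uIcc (r' a) (r' b) := by
        rw [Set.mem_uIcc]; left; exact ⟨ha''.le, hb''.le⟩
      obtain ⟨s, hsmem, hs0⟩ := intermediate_value_uIcc hcont h0mem
      exact hnz s (huIcc hsmem) hs0
    obtain ⟨t₂, ht₂def⟩ : ∃ t₂ : ℝ, t₂ = (α + t₁) / 2 := ⟨_, rfl⟩
    have ht₂ : t₂ ∈ Ioo α t₁ := ⟨by rw [ht₂def]; linarith [ht₁.1], by rw [ht₂def]; linarith [ht₁.1]⟩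
    have ht₂ω : t₂ ∈ Ioo α ω := hsub1 ht₂
    rcases hsign with hpos | hneg
    · -- case r' > 0 on (α, t₁)
      obtain ⟨r₂, hr₂def⟩ : ∃ r₂ : ℝ, r₂ = r t₂ := ⟨_, rfl⟩
      have hr₂pos : 0 < r₂ := hr₂def ▸ hrpos t₂ ht₂ω
      obtain ⟨c₁, hc₁def⟩ : ∃ c₁ : ℝ,
        c₁ = E t₂ + 2 * Real.sqrt 2 * Dstar * Real.sqrt r₂ + 1 := ⟨_, rfl⟩
      obtain ⟨c₂, hc₂def⟩ : ∃ c₂ : ℝ, c₂ = Real.sqrt 2 * Dstar * r₂ := ⟨_, rfl⟩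
      have hc₂nn : 0 ≤ c₂ := by rw [hc₂def]; positivity
      obtain ⟨s₀, hs₀def⟩ : ∃ s₀ : ℝ, s₀ = c₂ + 1 + Real.sqrt |c₁| := ⟨_, rfl⟩
      have hs₀pos : 0 < s₀ := by
        rw [hs₀def]; have := Real.sqrt_nonneg |c₁|; linarith
      obtain ⟨A, hAdef⟩ : ∃ A : ℝ, A = s₀ ^ 2 := ⟨_, rfl⟩
      have hAnn : 0 ≤ A := hAdef ▸ sq_nonneg _
      obtain ⟨SA, hSAdef⟩ : ∃ SA : ℝ, SA = Real.sqrt (2 * A) := ⟨_, rfl⟩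
      have hSAnn : 0 ≤ SA := hSAdef ▸ Real.sqrt_nonneg _
      have hSA : SA = Real.sqrt 2 * s₀ := by
        rw [hSAdef, hAdef, Real.sqrt_mul (by norm_num : (0:ℝ) ≤ 2), Real.sqrt_sq hs₀pos.le]
      have hkey : c₁ + c₂ * s₀ ≤ A := by
        rw [hAdef, hs₀def]
        nlinarith [Real.sq_sqrt (abs_nonneg c₁), le_abs_self c₁, Real.sqrt_nonneg |c₁|,
          hc₂nn, mul_nonneg hc₂nn (Real.sqrt_nonneg |c₁|)]
      have hE₂A : E t₂ ≤ A - 1 := by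
        have h4 : 0 ≤ 2 * Real.sqrt 2 * Dstar * Real.sqrt r₂ := by positivity
        have h5 : 0 ≤ c₂ * s₀ := mul_nonneg hc₂nn hs₀pos.le
        rw [hc₁def] at hkey
        linarith
      -- the Lyapunov function Φ
      obtain ⟨Φ, hΦdef⟩ : ∃ Φ : ℝ → ℝ, Φ = fun u =>
        E u + Dstar * SA * r u + 2 * Real.sqrt 2 * Dstar * Real.sqrt (r u) := ⟨_, rfl⟩
      have hΦt : ∀ u, Φ u =
          E u + Dstar * SA * r u + 2 * Real.sqrt 2 * Dstar * Real.sqrt (r u) :=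
        fun u => by rw [hΦdef]
      have hΦd : ∀ u ∈ Ioo α ω, HasDerivAt Φ
          (-(δ (r u)) * (r' u) ^ 2 + Dstar * SA * r' u
            + 2 * Real.sqrt 2 * Dstar * (r' u / (2 * Real.sqrt (r u)))) u := by
        intro u hu
        rw [hΦdef]
        have h1 : HasDerivAt (fun v => Real.sqrt (r v)) (1 / (2 * Real.sqrt (r u)) * r' u) u :=
          (Real.hasDerivAt_sqrt (hrpos u hu).ne').comp u (hrd u hu)
        have := ((hEd u hu).add (HasDerivAt.const_mul (Dstar * SA) (hrd u hu))).add
          (HasDerivAt.const_mul (2 * Real.sqrt 2 * Dstar) h1)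
        refine this.congr_deriv ?_
        ring
      -- Φ has nonnegative derivative wherever E ≤ A on (α, t₁)
      have hΦderiv_nonneg : ∀ u ∈ Ioo α t₁, E u ≤ A →
          0 ≤ -(δ (r u)) * (r' u) ^ 2 + Dstar * SA * r' u
            + 2 * Real.sqrt 2 * Dstar * (r' u / (2 * Real.sqrt (r u))) := by
        intro u hu hEu
        have hru : 0 < r u := hrpos u (hsub1 hu)
        have hr'u : 0 < r' u := hpos u hu
        have hsru : 0 < Real.sqrt (r u) := Real.sqrt_pos.mpr hru
        have hδu0 := hδ0 (r u) hru
        have hδub := hδb (r u) hru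
        have h1 : δ (r u) * (r' u) ^ 2 ≤ Dstar * (r' u) ^ 2 :=
          mul_le_mul_of_nonneg_right hδub (sq_nonneg _)
        have h2 : (r' u) ^ 2 = 2 * E u + 2 / r u := by
          rw [hEt]; ring
        have h3 : r' u ≤ SA + Real.sqrt 2 / Real.sqrt (r u) := by
          have hx : r' u ≤ Real.sqrt (2 * A + 2 / r u) := by
            rw [Real.le_sqrt hr'u.le (by positivity)]
            rw [h2]; linarith
          have hy : Real.sqrt (2 * A + 2 / r u) ≤ Real.sqrt (2 * A) + Real.sqrt (2 / r u) :=
            sqrt_add_le' _ _ (by positivity) (by positivity)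
          have hz : Real.sqrt (2 / r u) = Real.sqrt 2 / Real.sqrt (r u) :=
            Real.sqrt_div (by norm_num) _
          rw [hz] at hy
          rw [← hSAdef] at hy
          linarith [hx.trans hy]
        have h4 : Dstar * r' u * r' u ≤ Dstar * r' u * (SA + Real.sqrt 2 / Real.sqrt (r u)) :=
          mul_le_mul_of_nonneg_left h3 (by positivity)
        have h5 : Dstar * r' u * (SA + Real.sqrt 2 / Real.sqrt (r u))
            = Dstar * SA * r' u + 2 * Real.sqrt 2 * Dstar * (r' u / (2 * Real.sqrt (r u))) := by
          field_simp
        have h6 : Dstar * (r' u) ^ 2 = Dstar * r' u * r' u := by ring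
        rw [h5] at h4
        rw [h6] at h1
        linarith
      -- bootstrap: E ≤ A on (α, t₂]
      have hhA : ∀ t ∈ Ioc α t₂, E t ≤ A := by
        by_contra hcon
        push_neg at hcon
        obtain ⟨ts, hts, htsA⟩ := hcon
        have hts2 : ts < t₂ := by
          rcases lt_or_eq_of_le hts.2 with h | h
          · exact h
          · exfalso; rw [h] at htsA; linarith
        set K : Set ℝ := Icc ts t₂ ∩ E ⁻¹' (Ici A) with hKdef
        have hIccsub : Icc ts t₂ ⊆ Ioo α ω := fun u hu =>
          ⟨lt_of_lt_of_le hts.1 hu.1, lt_of_le_of_lt hu.2 ht₂ω.2⟩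
        have hKclosed : IsClosed K :=
          (hEc.mono hIccsub).preimage_isClosed_of_isClosed isClosed_Icc isClosed_Ici
        have hKcomp : IsCompact K :=
          isCompact_Icc.of_isClosed_subset hKclosed (fun u hu => hu.1)
        have hKne : K.Nonempty := ⟨ts, ⟨le_refl ts, hts2.le⟩, htsA.le⟩
        obtain ⟨τ, hτK, hτgreat⟩ := hKcomp.exists_isGreatest hKne
        obtain ⟨hτmem, hτA'⟩ := hτK
        have hτA : A ≤ E τ := hτA'
        have hτt₂ : τ < t₂ := by
          rcases lt_or_eq_of_le hτmem.2 with h | h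
          · exact h
          · exfalso; rw [h] at hτA; linarith
        have hτα : α < τ := lt_of_lt_of_le hts.1 hτmem.1
        have hIccsub2 : Icc τ t₂ ⊆ Ioo α ω := fun u hu =>
          ⟨lt_of_lt_of_le hτα hu.1, lt_of_le_of_lt hu.2 ht₂ω.2⟩
        have hIoosub2 : Ioo τ t₂ ⊆ Ioo α t₁ := fun u hu =>
          ⟨lt_trans hτα hu.1, lt_trans hu.2 ht₂.2⟩
        -- above τ, E ≤ A
        have hEleA : ∀ u ∈ Ioo τ t₂, E u ≤ A := by
          intro u hu
          by_contra hcontra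
          push_neg at hcontra
          have huK : u ∈ K :=
            ⟨⟨le_trans hτmem.1 hu.1.le, hu.2.le⟩, hcontra.le⟩
          exact absurd (hτgreat huK) (not_le.mpr hu.1)
        -- Φ is monotone on [τ, t₂]
        have hΦmono : MonotoneOn Φ (Icc τ t₂) := by
          apply monotoneOn_of_deriv_nonneg (convex_Icc τ t₂)
          · exact fun u hu => ((hΦd u (hIccsub2 hu)).continuousAt).continuousWithinAt
          · intro u hu
            rw [interior_Icc] at hu
            exact (hΦd u (hIccsub2 (Ioo_subset_Icc_self hu))).differentiableAt.differentiableWithinAt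
          · intro u hu
            rw [interior_Icc] at hu
            rw [(hΦd u (hIccsub2 (Ioo_subset_Icc_self hu))).deriv]
            exact hΦderiv_nonneg u (hIoosub2 hu) (hEleA u hu)
        have hΦτ : Φ τ ≤ Φ t₂ :=
          hΦmono (Set.left_mem_Icc.mpr hτt₂.le) (Set.right_mem_Icc.mpr hτt₂.le) hτt₂.le
        have hEτΦ : E τ ≤ Φ τ := by
          have hrτ : 0 < r τ := hrpos τ (hIccsub2 (Set.left_mem_Icc.mpr hτt₂.le))
          have h1 : 0 ≤ Dstar * SA * r τ := by positivity
          have h2 : 0 ≤ 2 * Real.sqrt 2 * Dstar * Real.sqrt (r τ) := by positivity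
          rw [hΦt τ]; linarith
        have hΦt₂ : Φ t₂ ≤ A - 1 := by
          have heval : Φ t₂ = E t₂ + c₂ * s₀ + 2 * Real.sqrt 2 * Dstar * Real.sqrt r₂ := by
            rw [hΦt t₂, hSA, hc₂def, hr₂def]; ring
          rw [heval]
          rw [hc₁def] at hkey
          linarith
        linarith
      refine ⟨A, ?_⟩
      filter_upwards [Ioo_mem_nhdsGT_of_mem (⟨le_refl α, ht₂.1⟩ : α ∈ Ico α t₂)] with t ht
      have := hhA t ⟨ht.1, ht.2.le⟩
      rwa [hEt] at this
    · -- case r' < 0 on (α, t₁)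
      have hranti : StrictAntiOn r (Ioo α t₁) := by
        apply strictAntiOn_of_deriv_neg (convex_Ioo α t₁) (hrc.mono hsub1)
        intro u hu
        rw [interior_Ioo] at hu
        rw [(hrd u (hsub1 hu)).deriv]
        exact hneg u hu
      have hr₂pos : 0 < r t₂ := hrpos t₂ ht₂ω
      obtain ⟨C, hCdef⟩ : ∃ C : ℝ, C = 1 / r t₂ := ⟨_, rfl⟩
      have hCbound : ∀ u ∈ Ioo α t₂, 1 / r u ≤ C := by
        intro u hu
        have hu1 : u ∈ Ioo α t₁ := ⟨hu.1, hu.2.trans ht₂.2⟩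
        have hlt : r t₂ < r u := hranti hu1 ht₂ hu.2
        rw [hCdef]
        exact one_div_le_one_div_of_le hr₂pos hlt.le
      obtain ⟨G, hGdef⟩ : ∃ G : ℝ → ℝ,
        G = fun u => (E u + C) * Real.exp (2 * Dstar * u) := ⟨_, rfl⟩
      have hGt : ∀ u, G u = (E u + C) * Real.exp (2 * Dstar * u) := fun u => by rw [hGdef]
      have hGd : ∀ u ∈ Ioo α ω, HasDerivAt G
          ((-(δ (r u)) * (r' u) ^ 2 + (E u + C) * (2 * Dstar)) * Real.exp (2 * Dstar * u)) u := by
        intro u hu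
        rw [hGdef]
        have h0 : HasDerivAt (fun v : ℝ => 2 * Dstar * v) (2 * Dstar) u := by
          simpa using (hasDerivAt_id u).const_mul (2 * Dstar)
        have hexp : HasDerivAt (fun v => Real.exp (2 * Dstar * v))
            (Real.exp (2 * Dstar * u) * (2 * Dstar)) u := h0.exp
        have := ((hEd u hu).add_const C).mul hexp
        refine this.congr_deriv ?_
        ring
      refine ⟨|(E t₂ + C) * Real.exp (2 * Dstar * t₂)| / Real.exp (2 * Dstar * α) - C, ?_⟩
      filter_upwards [Ioo_mem_nhdsGT_of_mem (⟨le_refl α, ht₂.1⟩ : α ∈ Ico α t₂)] with t ht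
      have hIccsub : Icc t t₂ ⊆ Ioo α ω := fun u hu =>
        ⟨lt_of_lt_of_le ht.1 hu.1, lt_of_le_of_lt hu.2 ht₂ω.2⟩
      have hGmono : MonotoneOn G (Icc t t₂) := by
        apply monotoneOn_of_deriv_nonneg (convex_Icc t t₂)
        · exact fun u hu => ((hGd u (hIccsub hu)).continuousAt).continuousWithinAt
        · intro u hu
          rw [interior_Icc] at hu
          exact (hGd u (hIccsub (Ioo_subset_Icc_self hu))).differentiableAt.differentiableWithinAt
        · intro u hu
          rw [interior_Icc] at hu
          have huω : u ∈ Ioo α ω := hIccsub (Ioo_subset_Icc_self hu)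
          rw [(hGd u huω).deriv]
          have hru : 0 < r u := hrpos u huω
          have h1 : 1 / r u ≤ C := hCbound u ⟨lt_of_lt_of_le ht.1 hu.1.le, hu.2⟩
          have h2 : E u + 1 / r u = (r' u) ^ 2 / 2 := by rw [hEt]; ring
          have h3 : δ (r u) * (r' u) ^ 2 ≤ Dstar * (r' u) ^ 2 :=
            mul_le_mul_of_nonneg_right (hδb (r u) hru) (sq_nonneg _)
          have h7 : 0 ≤ -(δ (r u)) * (r' u) ^ 2 + (E u + C) * (2 * Dstar) := by
            nlinarith [mul_nonneg hDnn (sub_nonneg.mpr h1)]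
          exact mul_nonneg h7 (Real.exp_pos _).le
      have hGle : G t ≤ G t₂ :=
        hGmono (Set.left_mem_Icc.mpr ht.2.le) (Set.right_mem_Icc.mpr ht.2.le) ht.2.le
      rw [hGt t, hGt t₂] at hGle
      have hexple : Real.exp (2 * Dstar * α) ≤ Real.exp (2 * Dstar * t) := by
        apply Real.exp_le_exp.mpr
        nlinarith [mul_nonneg hDnn (sub_nonneg.mpr ht.1.le)]
      have hexpα : 0 < Real.exp (2 * Dstar * α) := Real.exp_pos _
      have hEtC : E t + C ≤
          |(E t₂ + C) * Real.exp (2 * Dstar * t₂)| / Real.exp (2 * Dstar * α) := by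
        rcases le_or_gt 0 (E t + C) with hc | hc
        · have h1 : (E t + C) * Real.exp (2 * Dstar * α) ≤ (E t + C) * Real.exp (2 * Dstar * t) :=
            mul_le_mul_of_nonneg_left hexple hc
          have h3 : (E t₂ + C) * Real.exp (2 * Dstar * t₂)
              ≤ |(E t₂ + C) * Real.exp (2 * Dstar * t₂)| := le_abs_self _
          rw [le_div_iff₀ hexpα]
          linarith
        · have : 0 ≤ |(E t₂ + C) * Real.exp (2 * Dstar * t₂)| / Real.exp (2 * Dstar * α) := by
            positivity
          linarith
      have hfin : E t ≤
          |(E t₂ + C) * Real.exp (2 * Dstar * t₂)| / Real.exp (2 * Dstar * α) - C := by linarith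
      rwa [hEt] at hfin
end
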